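/- arXiv:1210.2073 — 10 statements merged into one kernel-verified Lean document; each statement's English description precedes it below -/
import Mathlib

section
/- For p a prime with p > 3, the minimal size of a generating set of PSL(2,p) is 2. -/
open scoped MatrixGroups
open Matrix

variable {F : Type*} [Field F]

/-- upper unitriangular -/
def Tm (x : F) : SL(2, F) := ⟨!![1, x; 0, 1], by simp [Matrix.det_fin_two_of]⟩
/-- lower unitriangular -/
def Lm (x : F) : SL(2, F) := ⟨!![1, 0; x, 1], by simp [Matrix.det_fin_two_of]⟩

@[simp] lemma Tm_val (x : F) : ((Tm x : SL(2, F)) : Matrix (Fin 2) (Fin 2) F) = !![1, x; 0, 1] := rfl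
@[simp] lemma Lm_val (x : F) : ((Lm x : SL(2, F)) : Matrix (Fin 2) (Fin 2) F) = !![1, 0; x, 1] := rfl

lemma Tm_pow (x : F) (n : ℕ) : (Tm x) ^ n = Tm (n * x) := by
  induction n with
  | zero => ext i j; fin_cases i <;> fin_cases j <;> simp [Tm_val]
  | succ n ih =>
    rw [pow_succ, ih]
    ext i j
    fin_cases i <;> fin_cases j <;>
      simp [Tm_val, Matrix.mul_apply, Fin.sum_univ_two] <;> push_cast <;> ring

lemma Lm_pow (x : F) (n : ℕ) : (Lm x) ^ n = Lm (n * x) := by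
  induction n with
  | zero => ext i j; fin_cases i <;> fin_cases j <;> simp [Lm_val]
  | succ n ih =>
    rw [pow_succ, ih]
    ext i j
    fin_cases i <;> fin_cases j <;>
      simp [Lm_val, Matrix.mul_apply, Fin.sum_univ_two] <;> push_cast <;> ring

variable (p : ℕ) [Fact p.Prime]

lemma Tm_mem (x : ZMod p) : Tm x ∈ Subgroup.closure {Tm (1 : ZMod p), Lm 1} := by
  have h : Tm x = (Tm (1 : ZMod p)) ^ x.val := by
    rw [Tm_pow, mul_one, ZMod.natCast_val, ZMod.cast_id]
  rw [h]
  exact pow_mem (Subgroup.subset_closure (by simp)) _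

lemma Lm_mem (x : ZMod p) : Lm x ∈ Subgroup.closure {Tm (1 : ZMod p), Lm 1} := by
  have h : Lm x = (Lm (1 : ZMod p)) ^ x.val := by
    rw [Lm_pow, mul_one, ZMod.natCast_val, ZMod.cast_id]
  rw [h]
  exact pow_mem (Subgroup.subset_closure (by simp)) _

lemma factor (g : SL(2, ZMod p)) (hc : g.val 1 0 ≠ 0) :
    g = Tm ((g.val 0 0 - 1) / g.val 1 0) * Lm (g.val 1 0) *
        Tm ((g.val 1 1 - 1) / g.val 1 0) := by
  have hdet : g.val 0 0 * g.val 1 1 - g.val 0 1 * g.val 1 0 = 1 := by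
    have := g.property
    rw [Matrix.det_fin_two] at this
    exact this
  apply Subtype.ext
  rw [Matrix.eta_fin_two g.val]
  show _ = (_ * _ : Matrix (Fin 2) (Fin 2) (ZMod p))
  simp only [Tm_val, Lm_val, Matrix.SpecialLinearGroup.coe_mul]
  ext i j
  fin_cases i <;> fin_cases j
  · simp [Matrix.mul_apply, Fin.sum_univ_two]
    field_simp
    ring
  · simp [Matrix.mul_apply, Fin.sum_univ_two]
    field_simp
    linear_combination -hdet
  · simp [Matrix.mul_apply, Fin.sum_univ_two]
  · simp [Matrix.mul_apply, Fin.sum_univ_two]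
    field_simp
    ring

lemma sl_gen : Subgroup.closure {Tm (1 : ZMod p), Lm 1} = (⊤ : Subgroup SL(2, ZMod p)) := by
  rw [eq_top_iff]
  intro g _
  by_cases hc : g.val 1 0 ≠ 0
  · rw [factor p g hc]
    exact mul_mem (mul_mem (Tm_mem p _) (Lm_mem p _)) (Tm_mem p _)
  · push_neg at hc
    have hdet : g.val 0 0 * g.val 1 1 - g.val 0 1 * g.val 1 0 = 1 := by
      have := g.property; rw [Matrix.det_fin_two] at this; exact this
    have hd : g.val 1 1 ≠ 0 := by
      intro h0
      rw [hc, h0] at hdet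
      simp at hdet
    have hgl : (g * Lm 1).val 1 0 ≠ 0 := by
      have : (g * Lm 1).val 1 0 = g.val 1 1 := by
        simp [Lm_val, Matrix.mul_apply, Fin.sum_univ_two, hc]
      rw [this]; exact hd
    have hmem : g * Lm 1 ∈ Subgroup.closure {Tm (1 : ZMod p), Lm 1} := by
      rw [factor p _ hgl]
      exact mul_mem (mul_mem (Tm_mem p _) (Lm_mem p _)) (Tm_mem p _)
    have := mul_mem hmem (inv_mem (Lm_mem p 1))
    simpa using this

theorem psl_rank_two_aux (hp : 3 < p) :
    (∃ a b : PSL(2, ZMod p), Subgroup.closure {a, b} = ⊤) ∧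
      ¬ ∃ a : PSL(2, ZMod p), Subgroup.closure {a} = ⊤ := by
  let π := QuotientGroup.mk' (Subgroup.center SL(2, ZMod p))
  constructor
  · refine ⟨π (Tm 1), π (Lm 1), ?_⟩
    have hmap : Subgroup.closure ({π (Tm 1), π (Lm 1)} : Set PSL(2, ZMod p)) =
        Subgroup.map π (Subgroup.closure {Tm (1 : ZMod p), Lm 1}) := by
      rw [MonoidHom.map_closure]
      congr 1
      rw [Set.image_insert_eq, Set.image_singleton]
    rw [hmap, sl_gen p, ← MonoidHom.range_eq_map,
      MonoidHom.range_eq_top_of_surjective _ (QuotientGroup.mk'_surjective _)]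
  · rintro ⟨a, ha⟩
    have hcomm : ∀ x y : PSL(2, ZMod p), x * y = y * x := by
      intro x y
      have hx : x ∈ Subgroup.closure {a} := ha ▸ Subgroup.mem_top x
      have hy : y ∈ Subgroup.closure {a} := ha ▸ Subgroup.mem_top y
      rw [Subgroup.mem_closure_singleton] at hx hy
      obtain ⟨m, rfl⟩ := hx
      obtain ⟨n, rfl⟩ := hy
      rw [← _root_.zpow_add, ← _root_.zpow_add, add_comm]
    have h := hcomm (π (Tm 1)) (π (Lm 1))
    rw [← _root_.map_mul, ← _root_.map_mul, QuotientGroup.mk'_eq_mk'] at h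
    obtain ⟨z, hz, hmul⟩ := h
    obtain ⟨r, hr2, hscalar⟩ := Matrix.SpecialLinearGroup.mem_center_iff.mp hz
    have h00 := congrFun (congrFun (congrArg Subtype.val hmul) 0) 0
    have h01 := congrFun (congrFun (congrArg Subtype.val hmul) 0) 1
    simp [Tm_val, Lm_val, Matrix.SpecialLinearGroup.coe_mul, ← hscalar,
      Matrix.mul_apply, Fin.sum_univ_two] at h00 h01
    rw [h01, mul_one, add_eq_left] at h00
    exact one_ne_zero h00

theorem psl_rank_two (p : ℕ) [Fact p.Prime] (hp : 3 < p) :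
    (∃ a b : PSL(2, ZMod p), Subgroup.closure {a, b} = ⊤) ∧
      ¬ ∃ a : PSL(2, ZMod p), Subgroup.closure {a} = ⊤ := by
  exact psl_rank_two_aux p hp
end

section
/- For p a prime greater than 3, PSL(2,p) admits an irredundant generating sequence of length at least 3 consisting entirely of elements of order 2; in particular m(PSL(2,p)) ≥ 3. -/
open scoped MatrixGroups

/-- A sequence `g : Fin n → G` is an irredundant generating sequence if it generates `G`
but deleting any single entry yields a non-generating sequence. -/
def IrredundantGenSeq {G : Type*} [Group G] {n : ℕ} (g : Fin n → G) : Prop :=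
  Subgroup.closure (Set.range g) = ⊤ ∧
    ∀ i : Fin n, Subgroup.closure (g '' {i}ᶜ) ≠ ⊤

/-- `maxIrr G` is the maximum length of an irredundant generating sequence of `G`. -/
noncomputable def maxIrr (G : Type*) [Group G] : ℕ :=
  sSup {n | ∃ g : Fin n → G, IrredundantGenSeq g}


section Generic
variable {G : Type*} [Group G]

open Subgroup

lemma solvable_of_two_involutions (x y : G) (hx : x * x = 1) (hy : y * y = 1)
    (h : Subgroup.closure {x, y} = ⊤) : IsSolvable G := by
  have hxi : x⁻¹ = x := inv_eq_of_mul_eq_one_left hx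
  have hyi : y⁻¹ = y := inv_eq_of_mul_eq_one_left hy
  set N := Subgroup.zpowers (x * y) with hN
  have hconj : ∀ g : G, g⁻¹ = g → g * (x * y) * g⁻¹ ∈ N → ∀ h ∈ N, g * h * g⁻¹ ∈ N := by
    intro g hg hgen h hh
    obtain ⟨k, hk⟩ := hh
    rw [← hk, ← conj_zpow]
    exact Subgroup.zpow_mem N hgen k
  have hx' : ∀ h ∈ N, x * h * x⁻¹ ∈ N := by
    refine hconj x hxi ?_
    have : x * (x * y) * x⁻¹ = (x * y)⁻¹ := by
      simp only [hxi, hyi, mul_inv_rev, ← mul_assoc, hx, one_mul]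
    rw [this]
    exact Subgroup.inv_mem N (Subgroup.mem_zpowers _)
  have hy' : ∀ h ∈ N, y * h * y⁻¹ ∈ N := by
    refine hconj y hyi ?_
    have : y * (x * y) * y⁻¹ = (x * y)⁻¹ := by
      simp only [hxi, hyi, mul_inv_rev, mul_assoc, hy, mul_one]
    rw [this]
    exact Subgroup.inv_mem N (Subgroup.mem_zpowers _)
  have hnorm : N.Normal := by
    rw [← Subgroup.normalizer_eq_top_iff, eq_top_iff, ← h, Subgroup.closure_le]
    rintro g (rfl | rfl) <;> rw [SetLike.mem_coe, Subgroup.mem_normalizer_iff]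
    · intro h
      constructor
      · exact hx' h
      · intro hh
        have := hx' _ hh
        rwa [hxi, ← mul_assoc, ← mul_assoc, hx, one_mul, mul_assoc, hx, mul_one] at this
    · intro h
      constructor
      · exact hy' h
      · intro hh
        have := hy' _ hh
        rwa [hyi, ← mul_assoc, ← mul_assoc, hy, one_mul, mul_assoc, hy, mul_one] at this
  have hNsolv : IsSolvable N := by
    apply isSolvable_of_comm
    rintro ⟨a, ha⟩ ⟨b, hb⟩
    obtain ⟨k, hk⟩ := ha
    obtain ⟨m, hm⟩ := hb
    ext
    simp only [Subgroup.coe_mul]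
    rw [← hk, ← hm, ← zpow_add, ← zpow_add, add_comm]
  have hQ : IsSolvable (G ⧸ N) := by
    apply isSolvable_of_comm
    have hzp : Subgroup.zpowers ((QuotientGroup.mk' N) x) = ⊤ := by
      rw [eq_top_iff, ← MonoidHom.range_eq_top_of_surjective _ (QuotientGroup.mk'_surjective N),
        MonoidHom.range_eq_map, ← h]
      rw [Subgroup.map_le_iff_le_comap, Subgroup.closure_le]
      rintro g (rfl | rfl) <;> simp only [SetLike.mem_coe, Subgroup.mem_comap]
      · exact Subgroup.mem_zpowers _
      · have hxy1 : (QuotientGroup.mk' N) (x * g) = 1 :=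
          (QuotientGroup.eq_one_iff _).mpr (Subgroup.mem_zpowers _)
        rw [map_mul] at hxy1
        have : (QuotientGroup.mk' N) g = ((QuotientGroup.mk' N) x)⁻¹ :=
          eq_inv_of_mul_eq_one_right hxy1
        rw [this]
        exact Subgroup.inv_mem _ (Subgroup.mem_zpowers _)
    intro a b
    obtain ⟨k, hk⟩ := hzp ▸ Subgroup.mem_top a
    obtain ⟨m, hm⟩ := hzp ▸ Subgroup.mem_top b
    rw [← hk, ← hm, ← zpow_add, ← zpow_add, add_comm]
  exact solvable_of_ker_le_range N.subtype (QuotientGroup.mk' N) (hG' := hNsolv) (hG'' := hQ)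
    (by rw [QuotientGroup.ker_mk', Subgroup.range_subtype])

lemma irred_length_le [Finite G] {n : ℕ} (g : Fin n → G) (hg : IrredundantGenSeq g) :
    n ≤ Nat.card G := by
  classical
  set H : ℕ → Subgroup G := fun k => Subgroup.closure (g '' {i | (i : ℕ) < k}) with hH
  have hmono : ∀ k, H k ≤ H (k + 1) := fun k =>
    Subgroup.closure_mono (Set.image_mono fun i hi => Nat.lt_succ_of_lt hi)
  have hstrict : ∀ k, k < n → H k < H (k + 1) := by
    intro k hk
    refine lt_of_le_of_ne (hmono k) fun heq => ?_
    have hmem : g ⟨k, hk⟩ ∈ H k := by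
      rw [heq]
      exact Subgroup.subset_closure ⟨⟨k, hk⟩, Nat.lt_succ_self k, rfl⟩
    refine hg.2 ⟨k, hk⟩ ?_
    rw [eq_top_iff, ← hg.1, Subgroup.closure_le]
    rintro _ ⟨j, rfl⟩
    by_cases hj : j = ⟨k, hk⟩
    · subst hj
      refine SetLike.mem_coe.mpr (Subgroup.closure_mono (Set.image_mono ?_) hmem)
      intro i hi
      simp only [Set.mem_compl_iff, Set.mem_singleton_iff]
      intro hik
      subst hik
      simp only [Set.mem_setOf_eq] at hi
      omega
    · exact Subgroup.subset_closure ⟨j, hj, rfl⟩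
  have hcard : ∀ k, k ≤ n → k + 1 ≤ Set.ncard (H k : Set G) := by
    intro k
    induction k with
    | zero =>
      intro _
      have : 0 < Set.ncard (H 0 : Set G) :=
        (Set.ncard_pos (Set.toFinite _)).mpr ⟨1, Subgroup.one_mem _⟩
      omega
    | succ k ih =>
      intro hk
      have h1 := ih (Nat.le_of_succ_le hk)
      have h2 : Set.ncard (H k : Set G) < Set.ncard (H (k + 1) : Set G) :=
        Set.ncard_lt_ncard (SetLike.coe_ssubset_coe.mpr (hstrict k hk)) (Set.toFinite _)
      omega
  have := hcard n le_rfl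
  have hle : Set.ncard (H n : Set G) ≤ Nat.card G := by
    rw [← Set.ncard_univ]
    exact Set.ncard_le_ncard (Set.subset_univ _) Set.finite_univ
  omega

lemma exists_irredundant [Finite G] (S : Set G) (hS : Subgroup.closure S = ⊤) :
    ∃ (n : ℕ) (g : Fin n → G), IrredundantGenSeq g ∧ ∀ i, g i ∈ S := by
  classical
  cases nonempty_fintype G
  set 𝒜 : Set (Finset G) := {F | ↑F ⊆ S ∧ Subgroup.closure (F : Set G) = ⊤} with h𝒜
  have hne : (Finset.card '' 𝒜).Nonempty := by
    refine ⟨(S.toFinite.toFinset).card, S.toFinite.toFinset, ⟨?_, ?_⟩, rfl⟩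
    · rw [Set.Finite.coe_toFinset]
    · rw [Set.Finite.coe_toFinset, hS]
  obtain ⟨F, hF, hFcard⟩ := Nat.sInf_mem hne
  have hmin : ∀ F' ∈ 𝒜, F.card ≤ F'.card := by
    intro F' hF'
    rw [hFcard]
    exact Nat.sInf_le ⟨F', hF', rfl⟩
  set e := F.equivFin with he
  refine ⟨F.card, fun i => (e.symm i : G), ⟨?_, ?_⟩, ?_⟩
  · have : Set.range (fun i => ((e.symm i : G))) = (F : Set G) := by
      ext z
      constructor
      · rintro ⟨i, rfl⟩
        exact (e.symm i).2
      · intro hz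
        exact ⟨e ⟨z, hz⟩, by simp⟩
    rw [this]
    exact hF.2
  · intro i hi
    set a : G := (e.symm i : G) with ha
    have haF : a ∈ F := (e.symm i).2
    have himg : (fun i => ((e.symm i : G))) '' {i}ᶜ = ↑(F.erase a) := by
      ext z
      simp only [Set.mem_image, Finset.coe_erase, Set.mem_diff, Set.mem_singleton_iff]
      constructor
      · rintro ⟨j, hj, rfl⟩
        refine ⟨(e.symm j).2, fun hzer => ?_⟩
        apply hj
        have : e.symm j = e.symm i := Subtype.ext hzer
        simpa using e.symm.injective this
      · rintro ⟨hzF, hza⟩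
        refine ⟨e ⟨z, hzF⟩, fun hji => hza ?_, by simp⟩
        have : (⟨z, hzF⟩ : {x // x ∈ F}) = e.symm i := by
          rw [← hji]; simp
        rw [ha, ← this]
    rw [himg] at hi
    have hFA : F.erase a ∈ 𝒜 := by
      refine ⟨fun z hz => hF.1 (Finset.erase_subset _ _ hz), hi⟩
    have := hmin _ hFA
    rw [Finset.card_erase_of_mem haF] at this
    have hpos : 0 < F.card := Finset.card_pos.mpr ⟨a, haF⟩
    omega
  · intro i
    exact hF.1 (e.symm i).2

end Generic

open Matrix
open scoped commutatorElement

section SL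
variable {F : Type*} [Field F]

local notation "SL2" => Matrix.SpecialLinearGroup (Fin 2) F

def E₁ (x : F) : SL2 := ⟨!![1, x; 0, 1], by simp [Matrix.det_fin_two_of]⟩
def E₂ (x : F) : SL2 := ⟨!![1, 0; x, 1], by simp [Matrix.det_fin_two_of]⟩

lemma E₁_mul (x y : F) : E₁ x * E₁ y = E₁ (x + y) := by
  apply Subtype.ext
  rw [Matrix.SpecialLinearGroup.coe_mul]
  simp [E₁, Matrix.SpecialLinearGroup.coe_mul, Matrix.mul_fin_two, add_comm]

lemma E₂_mul (x y : F) : E₂ x * E₂ y = E₂ (x + y) := by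
  apply Subtype.ext
  rw [Matrix.SpecialLinearGroup.coe_mul]
  simp [E₂, Matrix.SpecialLinearGroup.coe_mul, Matrix.mul_fin_two, add_comm]

lemma E₁_inv (x : F) : (E₁ x)⁻¹ = E₁ (-x) := by
  apply inv_eq_of_mul_eq_one_right
  rw [E₁_mul, add_neg_cancel]
  apply Subtype.ext
  simp [E₁, Matrix.SpecialLinearGroup.coe_one]
  exact (Matrix.one_fin_two).symm

lemma E₂_inv (x : F) : (E₂ x)⁻¹ = E₂ (-x) := by
  apply inv_eq_of_mul_eq_one_right
  rw [E₂_mul, add_neg_cancel]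
  apply Subtype.ext
  simp [E₂, Matrix.SpecialLinearGroup.coe_one]
  exact (Matrix.one_fin_two).symm

lemma mem_of_mem_elementary (K : Subgroup SL2) (h1 : ∀ x, E₁ x ∈ K) (h2 : ∀ x, E₂ x ∈ K)
    (M : SL2) : M ∈ K := by
  have key : ∀ N : SL2, (N : Matrix (Fin 2) (Fin 2) F) 1 0 ≠ 0 → N ∈ K := by
    refine fun N => Matrix.SpecialLinearGroup.fin_two_induction
      (fun N => (N : Matrix (Fin 2) (Fin 2) F) 1 0 ≠ 0 → N ∈ K) ?_ N
    intro a b c d hdet hc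
    simp only [Matrix.SpecialLinearGroup.coe_mk, Matrix.cons_val', Matrix.cons_val_zero,
      Matrix.cons_val_one, Matrix.head_cons, Matrix.empty_val', Matrix.cons_val_fin_one,
      Matrix.head_fin_const] at hc
    have heq : (⟨!![a, b; c, d], by rwa [Matrix.det_fin_two_of]⟩ : SL2)
        = E₁ ((a - 1) * c⁻¹) * E₂ c * E₁ ((d - 1) * c⁻¹) := by
      apply Subtype.ext
      simp only [Matrix.SpecialLinearGroup.coe_mul]
      simp only [E₁, E₂, Matrix.SpecialLinearGroup.coe_mul, Matrix.SpecialLinearGroup.coe_mk,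
        Matrix.mul_fin_two]
      have hc' : c ≠ 0 := by simpa using hc
      ext i j
      fin_cases i <;> fin_cases j <;> simp <;> field_simp <;> ring_nf <;>
        first | ring1 | linear_combination hdet | linear_combination (-2 : F) * hdet | linear_combination (-1 : F) * hdet | linear_combination (2 : F) * hdet
    rw [heq]
    exact K.mul_mem (K.mul_mem (h1 _) (h2 _)) (h1 _)
  by_cases hc : (M : Matrix (Fin 2) (Fin 2) F) 1 0 ≠ 0
  · exact key M hc
  · push_neg at hc
    have hdet : (M : Matrix (Fin 2) (Fin 2) F) 0 0 * (M : Matrix (Fin 2) (Fin 2) F) 1 1 = 1 := by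
      have := M.2
      rw [Matrix.det_fin_two, hc, mul_zero, sub_zero] at this
      exact this
    have hd1 : (M : Matrix (Fin 2) (Fin 2) F) 1 1 ≠ 0 := right_ne_zero_of_mul_eq_one hdet
    have hd : ((M * E₂ 1 : SL2) : Matrix (Fin 2) (Fin 2) F) 1 0 ≠ 0 := by
      rw [Matrix.SpecialLinearGroup.coe_mul]
      simp [Matrix.mul_apply, Fin.sum_univ_two, E₂, hc, hd1]
    have : M = (M * E₂ 1) * E₂ (-1) := by
      rw [mul_assoc, E₂_mul, add_neg_cancel]
      have : E₂ (0:F) = 1 := by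
        apply Subtype.ext
        simp [E₂, Matrix.SpecialLinearGroup.coe_one]
        exact (Matrix.one_fin_two).symm
      rw [this, mul_one]
    rw [this]
    exact K.mul_mem (key _ hd) (h2 _)

def Amat : SL2 := ⟨!![0, 1; -1, 0], by simp [Matrix.det_fin_two_of]⟩

def Bmat (h2 : (2 : F) ≠ 0) : SL2 :=
  ⟨!![0, -2; (2 : F)⁻¹, 0], by simp [Matrix.det_fin_two_of, h2]⟩

def Dmat (h2 : (2 : F) ≠ 0) : SL2 :=
  ⟨!![(2 : F)⁻¹, 0; 0, 2], by simp [Matrix.det_fin_two_of, h2]⟩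

lemma Amat_mul_Bmat (h2 : (2 : F) ≠ 0) : Amat * Bmat h2 = Dmat h2 := by
  apply Subtype.ext
  rw [Matrix.SpecialLinearGroup.coe_mul]
  simp [Amat, Bmat, Dmat, Matrix.SpecialLinearGroup.coe_mul, Matrix.mul_fin_two]

lemma Amat_sq : Amat * Amat = (-1 : SL2) := by
  apply Subtype.ext
  simp only [Matrix.SpecialLinearGroup.coe_mul]
  ext i j
  fin_cases i <;> fin_cases j <;>
    simp [Amat, Matrix.SpecialLinearGroup.coe_mul, Matrix.SpecialLinearGroup.coe_neg,
      Matrix.SpecialLinearGroup.coe_one, Matrix.mul_apply, Fin.sum_univ_two, Matrix.one_apply]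

lemma Bmat_sq (h2 : (2 : F) ≠ 0) : Bmat h2 * Bmat h2 = (-1 : SL2) := by
  apply Subtype.ext
  simp only [Matrix.SpecialLinearGroup.coe_mul]
  ext i j
  fin_cases i <;> fin_cases j <;>
    simp [Bmat, Matrix.SpecialLinearGroup.coe_mul, Matrix.SpecialLinearGroup.coe_neg,
      Matrix.SpecialLinearGroup.coe_one, Matrix.mul_apply, Fin.sum_univ_two, Matrix.one_apply] <;>
    field_simp

lemma key1 (h2 : (2 : F) ≠ 0) (x : F) :
    E₁ x * Dmat h2 * E₁ (-x) = E₁ (x * (1 - (2 : F)⁻¹ * (2 : F)⁻¹)) * Dmat h2 := by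
  apply Subtype.ext
  simp only [Matrix.SpecialLinearGroup.coe_mul]
  simp only [E₁, Dmat, Matrix.SpecialLinearGroup.coe_mul, Matrix.SpecialLinearGroup.coe_mk,
    Matrix.mul_fin_two]
  ext i j
  fin_cases i <;> fin_cases j <;> simp <;> field_simp <;> ring

lemma key2 (h2 : (2 : F) ≠ 0) (x : F) :
    E₂ x * Dmat h2 * E₂ (-x) = E₂ (x * (1 - (2 : F) * 2)) * Dmat h2 := by
  apply Subtype.ext
  simp only [Matrix.SpecialLinearGroup.coe_mul]
  simp only [E₂, Dmat, Matrix.SpecialLinearGroup.coe_mul, Matrix.SpecialLinearGroup.coe_mk,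
    Matrix.mul_fin_two]
  ext i j
  fin_cases i <;> fin_cases j <;> simp <;> field_simp <;> ring

lemma comm1 (h2 : (2 : F) ≠ 0) (x : F) :
    ⁅E₁ x, Dmat h2⁆ = E₁ (x * (1 - (2 : F)⁻¹ * (2 : F)⁻¹)) := by
  rw [commutatorElement_def, E₁_inv, key1 h2 x, mul_inv_cancel_right]

lemma comm2 (h2 : (2 : F) ≠ 0) (x : F) :
    ⁅E₂ x, Dmat h2⁆ = E₂ (x * (1 - (2 : F) * 2)) := by
  rw [commutatorElement_def, E₂_inv, key2 h2 x, mul_inv_cancel_right]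

lemma orderOf_conj_eq {G : Type*} [Group G] (a c : G) : orderOf (c * a * c⁻¹) = orderOf a := by
  have := orderOf_injective (MulAut.conj c).toMonoidHom (MulAut.conj c).injective a
  simpa [MulAut.conj_apply] using this

local notation "π" => QuotientGroup.mk' (Subgroup.center (Matrix.SpecialLinearGroup (Fin 2) F))

lemma neg_one_mem_center : (-1 : SL2) ∈ Subgroup.center (Matrix.SpecialLinearGroup (Fin 2) F) := by
  rw [Matrix.SpecialLinearGroup.mem_center_iff]
  refine ⟨-1, by norm_num, ?_⟩
  rw [Matrix.SpecialLinearGroup.coe_neg, Matrix.SpecialLinearGroup.coe_one]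
  rw [map_neg, _root_.map_one]

lemma orderOf_pi_two (M : SL2) (hsq : M * M = -1)
    (hoff : (M : Matrix (Fin 2) (Fin 2) F) 0 1 ≠ 0) : orderOf (π M) = 2 := by
  have h1 : (π M) ^ 2 = 1 := by
    rw [pow_two, ← _root_.map_mul, hsq]
    rw [QuotientGroup.mk'_apply]
    exact (QuotientGroup.eq_one_iff _).mpr neg_one_mem_center
  have hne : π M ≠ 1 := by
    intro h
    rw [QuotientGroup.mk'_apply] at h
    have hmem : M ∈ Subgroup.center (Matrix.SpecialLinearGroup (Fin 2) F) :=
      (QuotientGroup.eq_one_iff _).mp h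
    obtain ⟨r, -, hr⟩ := Matrix.SpecialLinearGroup.mem_center_iff.mp hmem
    have h01 := congr_fun₂ hr 0 1
    rw [Matrix.scalar_apply, Matrix.diagonal_apply_ne _ (by decide)] at h01
    exact hoff h01.symm
  exact orderOf_eq_prime h1 hne

lemma subgroup_eq_top_of_elementary
    (P : Subgroup (Matrix.SpecialLinearGroup (Fin 2) F ⧸
      Subgroup.center (Matrix.SpecialLinearGroup (Fin 2) F)))
    (hE1 : ∀ x : F, π (E₁ x) ∈ P) (hE2 : ∀ x : F, π (E₂ x) ∈ P) : P = ⊤ := by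
  rw [eq_top_iff]
  rintro y -
  obtain ⟨M, rfl⟩ := QuotientGroup.mk'_surjective _ y
  exact Subgroup.mem_comap.mp (mem_of_mem_elementary (P.comap (QuotientGroup.mk' _))
    (fun x => Subgroup.mem_comap.mpr (hE1 x)) (fun x => Subgroup.mem_comap.mpr (hE2 x)) M)

lemma c1_ne_zero (h2 : (2 : F) ≠ 0) (h3 : (3 : F) ≠ 0) : (1 - (2 : F)⁻¹ * (2 : F)⁻¹) ≠ 0 := by
  intro h
  apply h3
  have key : (3 : F) = (2 * 2) * (1 - (2 : F)⁻¹ * (2 : F)⁻¹) := by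
    field_simp
    ring
  rw [key, h, mul_zero]

lemma c2_ne_zero (h3 : (3 : F) ≠ 0) : (1 - (2 : F) * 2) ≠ 0 := by
  intro h
  apply h3
  have key : (3 : F) = -(1 - (2 : F) * 2) := by ring
  rw [key, h, neg_zero]

lemma commutator_top (h2 : (2 : F) ≠ 0) (h3 : (3 : F) ≠ 0) :
    commutator (Matrix.SpecialLinearGroup (Fin 2) F ⧸
      Subgroup.center (Matrix.SpecialLinearGroup (Fin 2) F)) = ⊤ := by
  apply subgroup_eq_top_of_elementary
  · intro w
    have hx : (w * (1 - (2 : F)⁻¹ * (2 : F)⁻¹)⁻¹) * (1 - (2 : F)⁻¹ * (2 : F)⁻¹) = w :=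
      inv_mul_cancel_right₀ (c1_ne_zero h2 h3) w
    rw [← hx, ← comm1 h2, map_commutatorElement]
    rw [commutator_def]
    exact Subgroup.commutator_mem_commutator (Subgroup.mem_top _) (Subgroup.mem_top _)
  · intro w
    have hx : (w * (1 - (2 : F) * 2)⁻¹) * (1 - (2 : F) * 2) = w :=
      inv_mul_cancel_right₀ (c2_ne_zero h3) w
    rw [← hx, ← comm2 h2, map_commutatorElement]
    rw [commutator_def]
    exact Subgroup.commutator_mem_commutator (Subgroup.mem_top _) (Subgroup.mem_top _)

lemma psl_not_solvable (h2 : (2 : F) ≠ 0) (h3 : (3 : F) ≠ 0) :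
    ¬ IsSolvable (Matrix.SpecialLinearGroup (Fin 2) F ⧸
      Subgroup.center (Matrix.SpecialLinearGroup (Fin 2) F)) := by
  rintro ⟨n, hn⟩
  have htop : ∀ k, derivedSeries (Matrix.SpecialLinearGroup (Fin 2) F ⧸
      Subgroup.center (Matrix.SpecialLinearGroup (Fin 2) F)) k = ⊤ := by
    intro k
    induction k with
    | zero => rfl
    | succ k ih =>
      rw [derivedSeries_succ, ih, ← commutator_def, commutator_top h2 h3]
  rw [htop n] at hn
  have hA : orderOf (π Amat) = 2 := orderOf_pi_two Amat Amat_sq (by simp [Amat])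
  have : π Amat = 1 := by
    have := hn ▸ Subgroup.mem_top (π Amat)
    rwa [Subgroup.mem_bot] at this
  rw [this, orderOf_one] at hA
  exact absurd hA (by norm_num)

lemma closure_involutions (h2 : (2 : F) ≠ 0) (h3 : (3 : F) ≠ 0) :
    Subgroup.closure {x : Matrix.SpecialLinearGroup (Fin 2) F ⧸
      Subgroup.center (Matrix.SpecialLinearGroup (Fin 2) F) | orderOf x = 2} = ⊤ := by
  have hA : orderOf (π Amat) = 2 := orderOf_pi_two Amat Amat_sq (by simp [Amat])
  have hB : orderOf (π (Bmat h2)) = 2 :=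
    orderOf_pi_two (Bmat h2) (Bmat_sq h2) (by simpa [Bmat] using neg_ne_zero.mpr h2)
  have hDmem : π (Dmat h2) = π Amat * π (Bmat h2) := by rw [← _root_.map_mul, Amat_mul_Bmat]
  have haS : π Amat ∈ Subgroup.closure {x : Matrix.SpecialLinearGroup (Fin 2) F ⧸
      Subgroup.center (Matrix.SpecialLinearGroup (Fin 2) F) | orderOf x = 2} :=
    Subgroup.subset_closure hA
  have hbS : π (Bmat h2) ∈ Subgroup.closure {x : Matrix.SpecialLinearGroup (Fin 2) F ⧸
      Subgroup.center (Matrix.SpecialLinearGroup (Fin 2) F) | orderOf x = 2} :=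
    Subgroup.subset_closure hB
  apply subgroup_eq_top_of_elementary
  · intro w
    have hx : (w * (1 - (2 : F)⁻¹ * (2 : F)⁻¹)⁻¹) * (1 - (2 : F)⁻¹ * (2 : F)⁻¹) = w :=
      inv_mul_cancel_right₀ (c1_ne_zero h2 h3) w
    set c := π (E₁ (w * (1 - (2 : F)⁻¹ * (2 : F)⁻¹)⁻¹)) with hc
    have heq : π (E₁ w) = (c * π Amat * c⁻¹) * (c * π (Bmat h2) * c⁻¹) *
        ((π (Bmat h2))⁻¹ * (π Amat)⁻¹) := by
      rw [← hx, ← comm1 h2, map_commutatorElement, hDmem, commutatorElement_def, ← hc]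
      group
    rw [heq]
    refine mul_mem (mul_mem ?_ ?_) (mul_mem (inv_mem hbS) (inv_mem haS))
    · exact Subgroup.subset_closure (by rw [Set.mem_setOf_eq, orderOf_conj_eq]; exact hA)
    · exact Subgroup.subset_closure (by rw [Set.mem_setOf_eq, orderOf_conj_eq]; exact hB)
  · intro w
    have hx : (w * (1 - (2 : F) * 2)⁻¹) * (1 - (2 : F) * 2) = w :=
      inv_mul_cancel_right₀ (c2_ne_zero h3) w
    set c := π (E₂ (w * (1 - (2 : F) * 2)⁻¹)) with hc
    have heq : π (E₂ w) = (c * π Amat * c⁻¹) * (c * π (Bmat h2) * c⁻¹) *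
        ((π (Bmat h2))⁻¹ * (π Amat)⁻¹) := by
      rw [← hx, ← comm2 h2, map_commutatorElement, hDmem, commutatorElement_def, ← hc]
      group
    rw [heq]
    refine mul_mem (mul_mem ?_ ?_) (mul_mem (inv_mem hbS) (inv_mem haS))
    · exact Subgroup.subset_closure (by rw [Set.mem_setOf_eq, orderOf_conj_eq]; exact hA)
    · exact Subgroup.subset_closure (by rw [Set.mem_setOf_eq, orderOf_conj_eq]; exact hB)

end SL

theorem psl_irredundant_involutions (p : ℕ) [Fact p.Prime] (hp : 3 < p) :
    (∃ n : ℕ, 3 ≤ n ∧ ∃ g : Fin n → PSL(2, ZMod p),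
      IrredundantGenSeq g ∧ ∀ i, orderOf (g i) = 2) ∧
    3 ≤ maxIrr PSL(2, ZMod p) := by
  haveI : NeZero p := ⟨(Fact.out : p.Prime).ne_zero⟩
  have h2 : (2 : ZMod p) ≠ 0 := by
    intro h
    have h' : ((2 : ℕ) : ZMod p) = 0 := by exact_mod_cast h
    rw [ZMod.natCast_eq_zero_iff] at h'
    have := Nat.le_of_dvd (by norm_num) h'
    omega
  have h3 : (3 : ZMod p) ≠ 0 := by
    intro h
    have h' : ((3 : ℕ) : ZMod p) = 0 := by exact_mod_cast h
    rw [ZMod.natCast_eq_zero_iff] at h'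
    have := Nat.le_of_dvd (by norm_num) h'
    omega
  obtain ⟨n, g, hg, hgS⟩ := exists_irredundant
    {x : PSL(2, ZMod p) | orderOf x = 2} (closure_involutions h2 h3)
  have hord : ∀ i, orderOf (g i) = 2 := fun i => hgS i
  have hsq : ∀ i, g i * g i = 1 := fun i => by
    have := pow_orderOf_eq_one (g i)
    rwa [hord i, pow_two] at this
  have hn3 : 3 ≤ n := by
    by_contra hlt
    push_neg at hlt
    apply psl_not_solvable h2 h3
    interval_cases n
    · have hbot : (⊤ : Subgroup PSL(2, ZMod p)) = ⊥ := by
        rw [← hg.1, Set.range_eq_empty, Subgroup.closure_empty]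
      exact isSolvable_of_top_eq_bot _ hbot
    · apply solvable_of_two_involutions (g 0) (g 0) (hsq 0) (hsq 0)
      rw [eq_top_iff, ← hg.1]
      apply Subgroup.closure_mono
      rintro _ ⟨i, rfl⟩
      fin_cases i <;> simp
    · apply solvable_of_two_involutions (g 0) (g 1) (hsq 0) (hsq 1)
      rw [eq_top_iff, ← hg.1]
      apply Subgroup.closure_mono
      rintro _ ⟨i, rfl⟩
      fin_cases i <;> simp
  have hbdd : BddAbove {m | ∃ g : Fin m → PSL(2, ZMod p), IrredundantGenSeq g} := by
    refine ⟨Nat.card PSL(2, ZMod p), ?_⟩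
    rintro m ⟨g', hg'⟩
    exact irred_length_le g' hg'
  exact ⟨⟨n, hn3, g, hg, hord⟩, le_trans hn3 (le_csSup hbdd ⟨g, hg⟩)⟩
end

section
/- If (g_1,...,g_n) is an irredundant generating sequence of a finite group G, then there exists a sequence (M_1,...,M_n) of maximal subgroups of G such that g_i ∉ M_i for all i, g_j ∈ M_i whenever j ≠ i, and the subgroups M_1,...,M_n are in general position (i.e., for subsets K ⊊ J of {1,...,n}, the intersection ∩_{i∈J} M_i is a proper subgroup of ∩_{i∈K} M_i). -/
theorem irredundant_corresponds_to_maximals_in_general_position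
    {G : Type*} [Group G] [Finite G] {n : ℕ} (g : Fin n → G)
    (hg : IrredundantGenSeq g) :
    ∃ M : Fin n → Subgroup G,
      (∀ i, IsCoatom (M i)) ∧
      (∀ i, g i ∉ M i) ∧
      (∀ i j, j ≠ i → g j ∈ M i) ∧
      (∀ J K : Finset (Fin n), K ⊂ J →
        (⨅ i ∈ J, M i) < ⨅ i ∈ K, M i) := by
  obtain ⟨hgen, hirr⟩ := hg
  have hcoat : ∀ i : Fin n, ∃ M : Subgroup G,
      IsCoatom M ∧ Subgroup.closure (g '' {i}ᶜ) ≤ M := by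
    intro i
    rcases (eq_top_or_exists_le_coatom (Subgroup.closure (g '' {i}ᶜ))) with h | h
    · exact absurd h (hirr i)
    · exact h
  choose M hM hle using hcoat
  have hmem : ∀ i j, j ≠ i → g j ∈ M i := by
    intro i j hij
    exact hle i (Subgroup.subset_closure ⟨j, hij, rfl⟩)
  have hnmem : ∀ i, g i ∉ M i := by
    intro i hi
    apply (hM i).1
    rw [← top_le_iff, ← hgen, Subgroup.closure_le]
    rintro _ ⟨j, rfl⟩
    by_cases hj : j = i
    · exact hj ▸ hi
    · exact hmem i j hj
  refine ⟨M, hM, hnmem, hmem, ?_⟩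
  intro J K hKJ
  obtain ⟨i, hiJ, hiK⟩ := Finset.exists_of_ssubset hKJ
  refine lt_of_le_of_ne (by
      apply le_iInf₂
      intro j hj
      exact iInf₂_le j (hKJ.1 hj)) ?_
  intro heq
  have h1 : g i ∈ ⨅ j ∈ K, M j := by
    simp only [Subgroup.mem_iInf]
    intro j hj
    exact hmem j i (fun h => hiK (h ▸ hj))
  rw [← heq] at h1
  have h2 : g i ∈ M i := by
    simp only [Subgroup.mem_iInf] at h1
    exact h1 i hiJ
  exact hnmem i h2
end

section
/- Let s = (g_1,...,g_n) be an irredundant generating sequence of a finite group G. If every sequence of maximal subgroups (M_1,...,M_n) corresponding to s (meaning g_i ∉ M_i and g_j ∈ M_i for j ≠ i) has trivial intersection M_1 ∩ ... ∩ M_n = {e}, then s satisfies the replacement property: for every nonidentity g ∈ G there exists an index i such that replacing g_i by g in s yields a generating sequence of G. -/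
theorem trivial_intersection_implies_replacement
    {G : Type*} [Group G] [Finite G] {n : ℕ} (g : Fin n → G)
    (hg : IrredundantGenSeq g)
    (hM : ∀ M : Fin n → Subgroup G,
      (∀ i, IsCoatom (M i)) → (∀ i, g i ∉ M i) → (∀ i j, j ≠ i → g j ∈ M i) →
      (⨅ i, M i) = ⊥) :
    ∀ x : G, x ≠ 1 → ∃ i : Fin n,
      Subgroup.closure (Set.range (Function.update g i x)) = ⊤ := by
  intro x hx
  by_contra h
  push_neg at h
  have hchoice : ∀ i : Fin n, ∃ M : Subgroup G, IsCoatom M ∧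
      Subgroup.closure (Set.range (Function.update g i x)) ≤ M := by
    intro i
    rcases eq_top_or_exists_le_coatom (Subgroup.closure (Set.range (Function.update g i x))) with
      ht | ⟨M, hM', hle⟩
    · exact absurd ht (h i)
    · exact ⟨M, hM', hle⟩
  choose M hcoatom hle using hchoice
  have hxmem : ∀ i, x ∈ M i := fun i =>
    hle i (Subgroup.subset_closure ⟨i, Function.update_self i x g⟩)
  have hmem : ∀ i j, j ≠ i → g j ∈ M i := fun i j hji =>
    hle i (Subgroup.subset_closure ⟨j, Function.update_of_ne hji x g⟩)
  have hnot : ∀ i, g i ∉ M i := by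
    intro i hi
    have : Set.range g ⊆ (M i : Set G) := by
      rintro _ ⟨j, rfl⟩
      by_cases hji : j = i
      · exact hji ▸ hi
      · exact hmem i j hji
    have : (⊤ : Subgroup G) ≤ M i := hg.1 ▸ Subgroup.closure_le (M i) |>.mpr this
    exact (hcoatom i).1 (top_le_iff.mp this)
  have hbot := hM M hcoatom hnot hmem
  have : x ∈ (⊥ : Subgroup G) := hbot ▸ Subgroup.mem_iInf.mpr hxmem
  exact hx (Subgroup.mem_bot.mp this)
end

section
/- The quaternion group Q_8 fails the replacement property: the pair (i, j) generates Q_8, but the element -1 cannot replace either i or j to give a generating pair. -/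
open QuaternionGroup

/-- Homomorphism killing `a 2` and `xa 0` but not `a 1`. -/
def f1 : QuaternionGroup 2 →* Multiplicative (ZMod 2) where
  toFun x := match x with
    | .a i => Multiplicative.ofAdd (i.val : ZMod 2)
    | .xa i => Multiplicative.ofAdd (i.val : ZMod 2)
  map_one' := by decide
  map_mul' := by decide

/-- Homomorphism killing `a i` but not `xa 0`. -/
def f2 : QuaternionGroup 2 →* Multiplicative (ZMod 2) where
  toFun x := match x with
    | .a _ => 1
    | .xa _ => Multiplicative.ofAdd (1 : ZMod 2)
  map_one' := by decide
  map_mul' := by decide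

/-- In `QuaternionGroup 2` (the quaternion group `Q₈`), take `i = a 1`, `j = xa 0` and
`-1 = a 2`.  The pair `(i, j)` generates `Q₈`, but `-1` can replace neither entry. -/
theorem quaternion_fails_replacement :
    Subgroup.closure {(QuaternionGroup.a 1 : QuaternionGroup 2), QuaternionGroup.xa 0} = ⊤ ∧
    Subgroup.closure {(QuaternionGroup.a 2 : QuaternionGroup 2), QuaternionGroup.xa 0} ≠ ⊤ ∧
    Subgroup.closure {(QuaternionGroup.a 1 : QuaternionGroup 2), QuaternionGroup.a 2} ≠ ⊤ := by
  refine ⟨?_, ?_, ?_⟩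
  · rw [Subgroup.eq_top_iff']
    set H := Subgroup.closure {(QuaternionGroup.a 1 : QuaternionGroup 2), QuaternionGroup.xa 0}
    have h1 : QuaternionGroup.a 1 ∈ H := Subgroup.subset_closure (by simp)
    have h2 : QuaternionGroup.xa 0 ∈ H := Subgroup.subset_closure (by simp)
    have ha : ∀ i : ZMod 4, QuaternionGroup.a i ∈ H := by
      intro i
      fin_cases i
      · show QuaternionGroup.a 0 ∈ H
        have : (QuaternionGroup.a 0 : QuaternionGroup 2) = 1 := by decide
        rw [this]; exact H.one_mem
      · exact h1
      · show QuaternionGroup.a 2 ∈ H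
        have : (QuaternionGroup.a 2 : QuaternionGroup 2) = .a 1 * .a 1 := by decide
        rw [this]; exact H.mul_mem h1 h1
      · show QuaternionGroup.a 3 ∈ H
        have : (QuaternionGroup.a 3 : QuaternionGroup 2) = .a 1 * .a 1 * .a 1 := by decide
        rw [this]; exact H.mul_mem (H.mul_mem h1 h1) h1
    intro x
    cases x with
    | a i => exact ha i
    | xa i =>
      have : (QuaternionGroup.xa i : QuaternionGroup 2) = .xa 0 * .a i := by
        rw [QuaternionGroup.xa_mul_a]; ring_nf
      rw [this]; exact H.mul_mem h2 (ha i)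
  · intro h
    have : QuaternionGroup.a 1 ∈ Subgroup.closure
        {(QuaternionGroup.a 2 : QuaternionGroup 2), QuaternionGroup.xa 0} := h ▸ trivial
    have hle : Subgroup.closure {(QuaternionGroup.a 2 : QuaternionGroup 2), QuaternionGroup.xa 0}
        ≤ f1.ker := by
      rw [Subgroup.closure_le]
      rintro x (rfl | rfl) <;> simp only [SetLike.mem_coe, MonoidHom.mem_ker] <;> decide
    have := hle this
    revert this
    decide
  · intro h
    have : QuaternionGroup.xa 0 ∈ Subgroup.closure
        {(QuaternionGroup.a 1 : QuaternionGroup 2), QuaternionGroup.a 2} := h ▸ trivial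
    have hle : Subgroup.closure {(QuaternionGroup.a 1 : QuaternionGroup 2), QuaternionGroup.a 2}
        ≤ f2.ker := by
      rw [Subgroup.closure_le]
      rintro x (rfl | rfl) <;> simp only [SetLike.mem_coe, MonoidHom.mem_ker] <;> decide
    have := hle this
    revert this
    decide
end

section
/- Every subgroup H of S_4 with H ≠ S_4 satisfies m(H) ≤ 2; consequently every irredundant sequence of length 3 in S_4 generates S_4, and S_4 is strongly flat. -/
set_option maxRecDepth 100000
set_option maxHeartbeats 10000000

namespace S4X

abbrev P4 := Equiv.Perm (Fin 4)

def mk4 (f g : Fin 4 → Fin 4) (h1 : Function.LeftInverse g f := by decide)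
    (h2 : Function.RightInverse g f := by decide) : P4 := ⟨f, g, h1, h2⟩

def phi : ℕ → P4
  | 0 => mk4 ![0,1,2,3] ![0,1,2,3]
  | 1 => mk4 ![0,1,3,2] ![0,1,3,2]
  | 2 => mk4 ![0,2,1,3] ![0,2,1,3]
  | 3 => mk4 ![0,2,3,1] ![0,3,1,2]
  | 4 => mk4 ![0,3,1,2] ![0,2,3,1]
  | 5 => mk4 ![0,3,2,1] ![0,3,2,1]
  | 6 => mk4 ![1,0,2,3] ![1,0,2,3]
  | 7 => mk4 ![1,0,3,2] ![1,0,3,2]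
  | 8 => mk4 ![1,2,0,3] ![2,0,1,3]
  | 9 => mk4 ![1,2,3,0] ![3,0,1,2]
  | 10 => mk4 ![1,3,0,2] ![2,0,3,1]
  | 11 => mk4 ![1,3,2,0] ![3,0,2,1]
  | 12 => mk4 ![2,0,1,3] ![1,2,0,3]
  | 13 => mk4 ![2,0,3,1] ![1,3,0,2]
  | 14 => mk4 ![2,1,0,3] ![2,1,0,3]
  | 15 => mk4 ![2,1,3,0] ![3,1,0,2]
  | 16 => mk4 ![2,3,0,1] ![2,3,0,1]
  | 17 => mk4 ![2,3,1,0] ![3,2,0,1]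
  | 18 => mk4 ![3,0,1,2] ![1,2,3,0]
  | 19 => mk4 ![3,0,2,1] ![1,3,2,0]
  | 20 => mk4 ![3,1,0,2] ![2,1,3,0]
  | 21 => mk4 ![3,1,2,0] ![3,1,2,0]
  | 22 => mk4 ![3,2,0,1] ![2,3,1,0]
  | 23 => mk4 ![3,2,1,0] ![3,2,1,0]
  | _ => 1

def tmN : ℕ := 963083904067687740382735603551689858979262908457194405886049381333969802301183085837553985273473854330919290650503943115840069356509638955686872359685717332808901270679562285084298514669757260143135839602817718328491187159082064147838148221860841857298935111617501776737072422980980029411854874636928447370107983835290263782952548816511020583812907530610125653564010220842482491962004376120388759761678501504925865068116183498263901531782434546190694459208408295563000458219589420019657733870239199217371120552283113993841669272690250937181101628696532967492507089921218779169242377132803342235395010373055173633197438399586503732527643592394751693744750901567759454225611815304897823538575145718919194832468029427789693900593094299686717877973378999991997074262632222442029776699593767455265065230686956072508893019315770005973264241629444791670033435835305658400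

def tm (i j : ℕ) : ℕ := (tmN >>> (5*(24*i+j))) &&& 31

def invN : ℕ := 978321207349091352592539713606387744

def invm (i : ℕ) : ℕ := (invN >>> (5*i)) &&& 31

def Rtab : List (List ℕ) := [[9050946939188609582285205486177284527826865486000443025897683176484119266347016088561308844344839427589673369768635653311306333076230657272453471544759870718588289049483034413202670520860705862978749847075326529931971760845824685201537458627381938166998903629613768725783581690750514539286097408820157236776600339273731012426231356902996654947012154286968135935742638917072695797139656405350106314974681543208065636567840501413728730888246142442507994136576, 579260604108071013266253151115346209780919391104028353657451723294983633046209029667923766038069723365739095665192681811923605316878762065437022178864631725989650499166914202444970913335085175230639990212820897915646192694132779852898397352152444042687929832295281198450149228208032930514310234164490063153702421713518784795278806841791785916608777874365960699887528890692652531016938009942406804158379618765316200740341792090478638776847753116320511624740864, 37072678662916544849040201671382157425978841030657814634076910290878952514957377898747121026436462295407302122572331635963110740280240772187969419447336430463337631946682508956478138453445451214760959373620537466601356332424497910585497430537756418732027509266897996700809550605314107552915854986527364041836954989665202226897843637874674298662961783959421484792801849004329761985084032636314035466136295600980236847381874693790632881718256199444512743983415296, 2372651434426658870338572906968458075262645825962100136580922258616252960957272185519815745691933586906067335844629224701639087377935409420030042844629531549653608444587680573214600861020508877744701399911714397862486805275167866277471835554416410798849760593081471788851811238740102883386614719137751298677565119338572942521461992823979155114429554173402975026739318336277104767045378088724098269832722918462735158232439980402600504429968396764448815614938578944],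 [9050946930625460163383529939682417427855304265583271068313363791384944255094401578323950969862020353960123455760084740336318654038395281087654772926192951534950827344457132473673902018368922891718786873099536056764831371595368442707096163115425499827867405130556500228918156059706137264413594907470164270593340649748254656455676655214071306099902366055502497257049620327212663416163339587619505925341398565035119844104867213624669443933330110578330997620736, 579260603560029450456545916139674715382739472997329348372055282648636432326041701012732862071169302653447901168645423381524393858457297989609905467276348898236852950045256478315129729175611065070002359878370307632949207782103580333254154439387231988983513928355616014650761987821192784922470074078090513317973801583888298013163305933700563590393751427552159824451175700941610458634453733607648379221849508162247670022711501671978844411733127077013183847727104, 2372651434426658870338572906968458075262645825962100136580922258616252960957272185519815745691933586906067335844629224701639087377935409420030042844629531549653608444587680573214600861020508877744701399911714397862486805275167866277471835554416410798849760593081471788851811238740102883386614719137751298677565119338572942521461992823979155114429554173402975026739318336277104767045378088724098269832722918462735158232439980402600504429968396764448815614938578944, 37072678662916544849040201671382157425978841030657814634076910290878952514957377898747121026436462295407302122572331635963110740280240772187969419447336430463337631946682508956478138453445451214760959373620537466601356332424497910585497430537756418732027509266897996700809550605314107552915854986527364041836954989665202226897843637874674298662961783959421484792801849004329761985084032636314035466136295600980236847381874693790632881718256199444512743983415296],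 [9050946913499156731948317793162231724158361646368991884524371258341804509795004458544065453004206559834458307323322868977964450854183516739147926902357982322862113373335004413786433461504952411038965128278584301792501242650591366679803764683620935557404843206335558876055458603870077544115935120686113851242897017013143208722907069844294801956365848087996507320984578604866018677520752613810936283594686764575521653724392366645724292161781686494577385537536, 37072678662916544849040201671382157425978841030657814634076910290878952514957377898747121026436462295407302122572331635963110740280240772187969419447336430463337631946682508956478138453445451214760959373620537466601356332424497910585497430537756418732027509266897996700809550605314107552915854986527364041836954989665202226897843637874674298662961783959421484792801849004329761985084032636314035466136295600980236847381874693790632881718256199444512743983415296, 579260604108071013266253151115346209780919391104028353657451723294983633046209029667923766038069723365739095665192681811923605316878762065437022178864631725989650499166914202444970913335085175230639990212820897915646192694132779852898397352152444042687929832295281198450149228208032930514310234164490063153702421713518784795278806841791785916608777874365960699887528890692652531016938009942406804158379618765316200740341792090478638776847753116320511624740864, 2372651432181880629070012072508107634207700881397061010931938437728814826807466807348153803043509463668522603186771654170723917244241092565442172793963925087178149683385370535178771370703302922526729666061804780064559955075496265045009016583730102226876473050544603196009521102115605647042437423423858742550420691287606468661916901104437508466252805847253646640952015671056836438566722492856927761292695585432566456413026310848425346710458888507446001040290217984],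 [9050946879246559056341615607213589724129712632669106343114919542049035224423779383394697124210086347729210339517450274393765974704721911355503313263594455635160922314453396704522391651627767396952356607275514745228631188984703483863735096817889089281090465166302402290541626691023861617829774835225492129883761165257634935948436159580967562643853023934736065197866586670854004250296235232741425367593041896071786238411107662951343062566882909747085685293056, 37072678627841884829218938632939181784495326271829078295811538089512731668866668864814903172554835369820665674793307096417561206941267071335033949905686329487158588802896414612168302667239108164480151032215699688508749298054629141328265884120782847294944891414759424937648767220556338235038084740997792852350323301368851072842451579756836069785200091363338228764875244860263069352605038950889496270198368522383850881453536107006646042350920132928843766254534656, 2372651432181880629070012072508107634207700881397061010931938437728814826807466807348153803043509463668522603186771654170723917244241092565442172793963925087178149683385370535178771370703302922526729666061804780064559955075496265045009016583730102226876473050544603196009521102115605647042437423423858742550420691287606468661916901104437508466252805847253646640952015671056836438566722492856927761292695585432566456413026310848425346710458888507446001040290217984, 579260604108071013266253151115346209780919391104028353657451723294983633046209029667923766038069723365739095665192681811923605316878762065437022178864631725989650499166914202444970913335085175230639990212820897915646192694132779852898397352152444042687929832295281198450149228208032930514310234164490063153702421713518784795278806841791785916608777874365960699887528890692652531016938009942406804158379618765316200740341792090478638776847753116320511624740864],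 [9050946810741345330600767021078447380181478859396456156910753774296255088896830344578774832969252378663848082863558360335318307316063510376101929141429447965968135438838048298275543650480804744110824332726103317080692375923833079743334774702594761549469981672516370562839221057441301448150005251967763403183504277198692598895921287829774350694605575677722417291563736579655937364062059437052455229128448445043486429066410992513306818016497530843072148013056, 2372651434426658870338572906968458075262645825962100136580922258616252960957272185519815745691933586906067335844629224701639087377935409420030042844629531549653608444587680573214600861020508877744701399911714397862486805275167866277471835554416410798849760593081471788851811238740102883386614719137751298677565119338572942521461992823979155114429554173402975026739318336277104767045378088724098269832722918462735158232439980402600504429968396764448815614938578944, 579260603560029450456545916139674715382739472997329348372055282648636432326041701012732862071169302653447901168645423381524393858457297989609905467276348898236852950045256478315129729175611065070002359878370307632949207782103580333254154439387231988983513928355616014650761987821192784922470074078090513317973801583888298013163305933700563590393751427552159824451175700941610458634453733607648379221849508162247670022711501671978844411733127077013183847727104, 37072678627841884829218938632939181784495326271829078295811538089512731668866668864814903172554835369820665674793307096417561206941267071335033949905686329487158588802896414612168302667239108164480151032215699688508749298054629141328265884120782847294944891414759424937648767220556338235038084740997792852350323301368851072842451579756836069785200091363338228764875244860263069352605038950889496270198368522383850881453536107006646042350920132928843766254534656],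 [9050946673730954628173958277497850861431371770498012232054276986005160799465889867233233721122798514950750817775752192073080605380933235766982967780339750752907160099131675439801990907927258184983037696593125448455531035980606713492656228619461902872684534501200403379573374137082526436280610507702683400451812185010163804994351099954018089454986953076311564100200916024795651864816990043194040253466738510879708943332390672987322155951586270428681161670656, 2372651432181880629070012072508107634207700881397061010931938437728814826807466807348153803043509463668522603186771654170723917244241092565442172793963925087178149683385370535178771370703302922526729666061804780064559955075496265045009016583730102226876473050544603196009521102115605647042437423423858742550420691287606468661916901104437508466252805847253646640952015671056836438566722492856927761292695585432566456413026310848425346710458888507446001040290217984, 37072678627841884829218938632939181784495326271829078295811538089512731668866668864814903172554835369820665674793307096417561206941267071335033949905686329487158588802896414612168302667239108164480151032215699688508749298054629141328265884120782847294944891414759424937648767220556338235038084740997792852350323301368851072842451579756836069785200091363338228764875244860263069352605038950889496270198368522383850881453536107006646042350920132928843766254534656, 579260603560029450456545916139674715382739472997329348372055282648636432326041701012732862071169302653447901168645423381524393858457297989609905467276348898236852950045256478315129729175611065070002359878370307632949207782103580333254154439387231988983513928355616014650761987821192784922470074078090513317973801583888298013163305933700563590393751427552159824451175700941610458634453733607648379221849508162247670022711501671978844411733127077013183847727104],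 [579260604108071013266253151115346209780919391104028353657451723294983633046209029667923766038069723365739095665192681811923605316878762065437022178864631725989650499166914202444970913335085175230639990212820897915646192694132779852898397352152444042687929832295281198450149228208032930514310234164490063153702421713518784795278806841791785916608777874365960699887528890692652531016938009942406804158379618765316200740341792090478638776847753116320511624740864, 9050946939188609582285205486177284527826865486000443025897683176484119266347016088561308844344839427589673369768635653311306333076230657272453471544759870718588289049483034413202670520860705862978749847075326529931971760845824685201537458627381938166998903629613768725783581690750514539286097408820157236776600339273731012426231356902996654947012154286968135935742638917072695797139656405350106314974681543208065636567840501413728730888246142442507994136576, 37072678557692545974060309680792501142152649303527390759011824674168031272120338262196492095505230069081941226796330471333742390698735684563549908592058295594443216377180178078869231458324285075615601165429081300142085089896822237920476220144111352043130237773150449156323158441451837620698870254330322334690906181685834582929027358082231508813274513768433693986752833965531212503125002706169595017603836987701336693655111133780886700694657787881788971161747456, 2372651427692322942339859819570720073097769555425753008576756779146754001415701648780575494112334724421244238514965150165359513004719083812067194149891730918044365848139531397047630813332754244839398474587461203209093445753396623226910478089223126530760335217481628746004682140252917607724727696277140629420217995627893413307457750917262816564049568881179756415152181373793997600200000173194854081126645567212885548393927112561976748844458098424434494154351837184],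 [579260603560029450456545916139674715382739472997329348372055282648636432326041701012732862071169302653447901168645423381524393858457297989609905467276348898236852950045256478315129729175611065070002359878370307632949207782103580333254154439387231988983513928355616014650761987821192784922470074078090513317973801583888298013163305933700563590393751427552159824451175700941610458634453733607648379221849508162247670022711501671978844411733127077013183847727104, 9050946930625460163383529939682417427855304265583271068313363791384944255094401578323950969862020353960123455760084740336318654038395281087654772926192951534950827344457132473673902018368922891718786873099536056764831371595368442707096163115425499827867405130556500228918156059706137264413594907470164270593340649748254656455676655214071306099902366055502497257049620327212663416163339587619505925341398565035119844104867213624669443933330110578330997620736, 2372651427692322942339859819570720073097769555425753008576756779146754001415701648780575494112334724421244238514965150165359513004719083812067194149891730918044365848139531397047630813332754244839398474587461203209093445753396623226910478089223126530760335217481628746004682140252917607724727696277140629420217995627893413307457750917262816564049568881179756415152181373793997600200000173194854081126645567212885548393927112561976748844458098424434494154351837184, 37072678557692545974060309680792501142152649303527390759011824674168031272120338262196492095505230069081941226796330471333742390698735684563549908592058295594443216377180178078869231458324285075615601165429081300142085089896822237920476220144111352043130237773150449156323158441451837620698870254330322334690906181685834582929027358082231508813274513768433693986752833965531212503125002706169595017603836987701336693655111133780886700694657787881788971161747456],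 [579260602463946030844692338762382830346135145367615480609559760533875488626880285346820188992269219829405331668692663614589724854667745071305467321750910868663175255893440282482331741536316954306493768209829395314720079529637847467507440939751739875673909965205475768067549350647684962823419847723911286479545409088841165358266052470034867325207414277631776468543013030711425195361328167283899922150059952932833385838361111465326354698354027935652952674402304, 37072678557692545974060309680792501142152649303527390759011824674168031272120338262196492095505230069081941226796330471333742390698735684563549908592058295594443216377180178078869231458324285075615601165429081300142085089896822237920476220144111352043130237773150449156323158441451837620698870254330322334690906181685834582929027358082231508813274513768433693986752833965531212503125002706169595017603836987701336693655111133780886700694657787881788971161747456, 9050946939188609582285205486177284527826865486000443025897683176484119266347016088561308844344839427589673369768635653311306333076230657272453471544759870718588289049483034413202670520860705862978749847075326529931971760845824685201537458627381938166998903629613768725783581690750514539286097408820157236776600339273731012426231356902996654947012154286968135935742638917072695797139656405350106314974681543208065636567840501413728730888246142442507994136576, 2372651418713209977265616481737399264642259388378410213209517468430902289871347222680619482928928875539126115242462484730679387672994620730377060552171704978023624819200071225710317837124309456506678570457632537373214294405206110073974973220228717420502178900555176946051744187291759179944368494405351408896248686905297452649266848617193160741710207106347451075229538496244352090189656288851768211562310374803842331682041407196716875793532953492740029885462872064],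 [579260600271779779605863398861669742344301608490822805959354850691138254363121880537260615949445526254669461729116817561201022381102202326752212048870045160650299028125017389089433065704177113404950822865632943694632396095021022967279046196344901713989789770643353746594664108225527143541105589454431496312560714576488635900699914213181924009206593531823108172663461546934656272018959054895451223525954681348594319258310890428885956004280506223813483858755584, 37072678417393905894775257527146863510035302943412659581398710444232848279239800354384679420764513680298845550663476323916865432390540948912141571127682890281619137800001112901723716205067335257916852663400508396456473350081345469905858956566073709695346545321174639782058502926433737186630757725083615764003885732895272697644794509643643136589221986036678923050461539003818001409213379513308878305661099606310036432531896987448701184273952398324062966960357376, 2372651418713209977265616481737399264642259388378410213209517468430902289871347222680619482928928875539126115242462484730679387672994620730377060552171704978023624819200071225710317837124309456506678570457632537373214294405206110073974973220228717420502178900555176946051744187291759179944368494405351408896248686905297452649266848617193160741710207106347451075229538496244352090189656288851768211562310374803842331682041407196716875793532953492740029885462872064, 9050946939188609582285205486177284527826865486000443025897683176484119266347016088561308844344839427589673369768635653311306333076230657272453471544759870718588289049483034413202670520860705862978749847075326529931971760845824685201537458627381938166998903629613768725783581690750514539286097408820157236776600339273731012426231356902996654947012154286968135935742638917072695797139656405350106314974681543208065636567840501413728730888246142442507994136576],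 [579260595887446101158449089349020632331614647001373194042288241554960325689397142053041589310032152234486277303267735061460371668228064664070523465051484669821960668085635091089634793630771503623092757294470612293164312059125317103573425580966064739166078827041047716021710147676243292681600336125936857803744273740716326329338962421105558444454756843374234706660079141097979991299971803971357134664220700482783131460250303520851636353055841973956617472835584, 2372651427692322942339859819570720073097769555425753008576756779146754001415701648780575494112334724421244238514965150165359513004719083812067194149891730918044365848139531397047630813332754244839398474587461203209093445753396623226910478089223126530760335217481628746004682140252917607724727696277140629420217995627893413307457750917262816564049568881179756415152181373793997600200000173194854081126645567212885548393927112561976748844458098424434494154351837184, 9050946930625460163383529939682417427855304265583271068313363791384944255094401578323950969862020353960123455760084740336318654038395281087654772926192951534950827344457132473673902018368922891718786873099536056764831371595368442707096163115425499827867405130556500228918156059706137264413594907470164270593340649748254656455676655214071306099902366055502497257049620327212663416163339587619505925341398565035119844104867213624669443933330110578330997620736, 37072678417393905894775257527146863510035302943412659581398710444232848279239800354384679420764513680298845550663476323916865432390540948912141571127682890281619137800001112901723716205067335257916852663400508396456473350081345469905858956566073709695346545321174639782058502926433737186630757725083615764003885732895272697644794509643643136589221986036678923050461539003818001409213379513308878305661099606310036432531896987448701184273952398324062966960357376],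 [579260587118781096203133329759862455131607793311872782851473727104330291165816951502926958151859104956848052337648140292677158744379727089086909937941744048186058246344427228147327418107344523838914412581960028701153986302758829663529998631645561783851810208076825816292695944773281691921959072492971737628915979840650483519638470397057157725119164996883940102412858625586921719348287362764418576221871264696301372373273003071188617980901521307435594346921984, 2372651418713209977265616481737399264642259388378410213209517468430902289871347222680619482928928875539126115242462484730679387672994620730377060552171704978023624819200071225710317837124309456506678570457632537373214294405206110073974973220228717420502178900555176946051744187291759179944368494405351408896248686905297452649266848617193160741710207106347451075229538496244352090189656288851768211562310374803842331682041407196716875793532953492740029885462872064, 37072678417393905894775257527146863510035302943412659581398710444232848279239800354384679420764513680298845550663476323916865432390540948912141571127682890281619137800001112901723716205067335257916852663400508396456473350081345469905858956566073709695346545321174639782058502926433737186630757725083615764003885732895272697644794509643643136589221986036678923050461539003818001409213379513308878305661099606310036432531896987448701184273952398324062966960357376, 9050946930625460163383529939682417427855304265583271068313363791384944255094401578323950969862020353960123455760084740336318654038395281087654772926192951534950827344457132473673902018368922891718786873099536056764831371595368442707096163115425499827867405130556500228918156059706137264413594907470164270593340649748254656455676655214071306099902366055502497257049620327212663416163339587619505925341398565035119844104867213624669443933330110578330997620736],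 [37072678662916544849040201671382157425978841030657814634076910290878952514957377898747121026436462295407302122572331635963110740280240772187969419447336430463337631946682508956478138453445451214760959373620537466601356332424497910585497430537756418732027509266897996700809550605314107552915854986527364041836954989665202226897843637874674298662961783959421484792801849004329761985084032636314035466136295600980236847381874693790632881718256199444512743983415296, 9050946913499156731948317793162231724158361646368991884524371258341804509795004458544065453004206559834458307323322868977964450854183516739147926902357982322862113373335004413786433461504952411038965128278584301792501242650591366679803764683620935557404843206335558876055458603870077544115935120686113851242897017013143208722907069844294801956365848087996507320984578604866018677520752613810936283594686764575521653724392366645724292161781686494577385537536, 579260602463946030844692338762382830346135145367615480609559760533875488626880285346820188992269219829405331668692663614589724854667745071305467321750910868663175255893440282482331741536316954306493768209829395314720079529637847467507440939751739875673909965205475768067549350647684962823419847723911286479545409088841165358266052470034867325207414277631776468543013030711425195361328167283899922150059952932833385838361111465326354698354027935652952674402304, 2372651400754979230345007469973588510030293594117624602797212637409117494023770693849258349813891695552455791834184642811741682353062152864032864112850881207590750896478761333103144114711640078840187933878151627952801022194177298856236751179637001171624258875560131444824924764881892526823834976771837369564136545241974072644972390076848367388486684030460865358479684161937326044364684509066678823584647989177479706461185243221408302502116728725326305168734552064],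 [37072678627841884829218938632939181784495326271829078295811538089512731668866668864814903172554835369820665674793307096417561206941267071335033949905686329487158588802896414612168302667239108164480151032215699688508749298054629141328265884120782847294944891414759424937648767220556338235038084740997792852350323301368851072842451579756836069785200091363338228764875244860263069352605038950889496270198368522383850881453536107006646042350920132928843766254534656, 9050946879246559056341615607213589724129712632669106343114919542049035224423779383394697124210086347729210339517450274393765974704721911355503313263594455635160922314453396704522391651627767396952356607275514745228631188984703483863735096817889089281090465166302402290541626691023861617829774835225492129883761165257634935948436159580967562643853023934736065197866586670854004250296235232741425367593041896071786238411107662951343062566882909747085685293056, 2372651400754979230345007469973588510030293594117624602797212637409117494023770693849258349813891695552455791834184642811741682353062152864032864112850881207590750896478761333103144114711640078840187933878151627952801022194177298856236751179637001171624258875560131444824924764881892526823834976771837369564136545241974072644972390076848367388486684030460865358479684161937326044364684509066678823584647989177479706461185243221408302502116728725326305168734552064, 579260602463946030844692338762382830346135145367615480609559760533875488626880285346820188992269219829405331668692663614589724854667745071305467321750910868663175255893440282482331741536316954306493768209829395314720079529637847467507440939751739875673909965205475768067549350647684962823419847723911286479545409088841165358266052470034867325207414277631776468543013030711425195361328167283899922150059952932833385838361111465326354698354027935652952674402304],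 [37072678557692545974060309680792501142152649303527390759011824674168031272120338262196492095505230069081941226796330471333742390698735684563549908592058295594443216377180178078869231458324285075615601165429081300142085089896822237920476220144111352043130237773150449156323158441451837620698870254330322334690906181685834582929027358082231508813274513768433693986752833965531212503125002706169595017603836987701336693655111133780886700694657787881788971161747456, 579260602463946030844692338762382830346135145367615480609559760533875488626880285346820188992269219829405331668692663614589724854667745071305467321750910868663175255893440282482331741536316954306493768209829395314720079529637847467507440939751739875673909965205475768067549350647684962823419847723911286479545409088841165358266052470034867325207414277631776468543013030711425195361328167283899922150059952932833385838361111465326354698354027935652952674402304, 9050946913499156731948317793162231724158361646368991884524371258341804509795004458544065453004206559834458307323322868977964450854183516739147926902357982322862113373335004413786433461504952411038965128278584301792501242650591366679803764683620935557404843206335558876055458603870077544115935120686113851242897017013143208722907069844294801956365848087996507320984578604866018677520752613810936283594686764575521653724392366645724292161781686494577385537536, 2372651364838527370048034118696396616219065521405430918559636386219336872615186233355988820590014893903249622375006782638805642216979362156899983105809383621370094577026773926491453104567683169644193433935708277559926727896100166301818874395220221066657014612282678543534882589791361810112344360931212237328039853427304380496439174746346118042088099827236618659483068930404031362450585037883058488204784700196050421240926220579588579249772631275256194444992446464],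 [37072678417393905894775257527146863510035302943412659581398710444232848279239800354384679420764513680298845550663476323916865432390540948912141571127682890281619137800001112901723716205067335257916852663400508396456473350081345469905858956566073709695346545321174639782058502926433737186630757725083615764003885732895272697644794509643643136589221986036678923050461539003818001409213379513308878305661099606310036432531896987448701184273952398324062966960357376, 579260600271779779605863398861669742344301608490822805959354850691138254363121880537260615949445526254669461729116817561201022381102202326752212048870045160650299028125017389089433065704177113404950822865632943694632396095021022967279046196344901713989789770643353746594664108225527143541105589454431496312560714576488635900699914213181924009206593531823108172663461546934656272018959054895451223525954681348594319258310890428885956004280506223813483858755584, 2372651364838527370048034118696396616219065521405430918559636386219336872615186233355988820590014893903249622375006782638805642216979362156899983105809383621370094577026773926491453104567683169644193433935708277559926727896100166301818874395220221066657014612282678543534882589791361810112344360931212237328039853427304380496439174746346118042088099827236618659483068930404031362450585037883058488204784700196050421240926220579588579249772631275256194444992446464, 9050946913499156731948317793162231724158361646368991884524371258341804509795004458544065453004206559834458307323322868977964450854183516739147926902357982322862113373335004413786433461504952411038965128278584301792501242650591366679803764683620935557404843206335558876055458603870077544115935120686113851242897017013143208722907069844294801956365848087996507320984578604866018677520752613810936283594686764575521653724392366645724292161781686494577385537536],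 [37072678136796550474140741718337320469223337408087884418706447459517460844121417091394661715842057743007121747409135043933463786766596138500513501763295018868605482757480645829736626792369376231877936466846119186762515971784020294628699237181828143306629044930627053825389449451279570731622421512059958899439633519405844885077693594950755740445104437975951021226245065030270719443198195454166856618510124830898120413456019425334504726595573886333223518261477376, 2372651400754979230345007469973588510030293594117624602797212637409117494023770693849258349813891695552455791834184642811741682353062152864032864112850881207590750896478761333103144114711640078840187933878151627952801022194177298856236751179637001171624258875560131444824924764881892526823834976771837369564136545241974072644972390076848367388486684030460865358479684161937326044364684509066678823584647989177479706461185243221408302502116728725326305168734552064, 9050946879246559056341615607213589724129712632669106343114919542049035224423779383394697124210086347729210339517450274393765974704721911355503313263594455635160922314453396704522391651627767396952356607275514745228631188984703483863735096817889089281090465166302402290541626691023861617829774835225492129883761165257634935948436159580967562643853023934736065197866586670854004250296235232741425367593041896071786238411107662951343062566882909747085685293056, 579260600271779779605863398861669742344301608490822805959354850691138254363121880537260615949445526254669461729116817561201022381102202326752212048870045160650299028125017389089433065704177113404950822865632943694632396095021022967279046196344901713989789770643353746594664108225527143541105589454431496312560714576488635900699914213181924009206593531823108172663461546934656272018959054895451223525954681348594319258310890428885956004280506223813483858755584],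 [37072677575601990157000533104631197128422898771959858102494318534677138634612284896187325321718982717238275349609480978731338159640302533701562236028271619083907727766043342601428954758870049525690522405245441836873855123376565098465919912425315954166515853316916852242732540465490028283005380639550191208250622709801630945256862105411658094407626559800572166554422952037562990038290391216922788878199760940563287831889472196556071550777697363675878038203006976, 2372651364838527370048034118696396616219065521405430918559636386219336872615186233355988820590014893903249622375006782638805642216979362156899983105809383621370094577026773926491453104567683169644193433935708277559926727896100166301818874395220221066657014612282678543534882589791361810112344360931212237328039853427304380496439174746346118042088099827236618659483068930404031362450585037883058488204784700196050421240926220579588579249772631275256194444992446464, 579260600271779779605863398861669742344301608490822805959354850691138254363121880537260615949445526254669461729116817561201022381102202326752212048870045160650299028125017389089433065704177113404950822865632943694632396095021022967279046196344901713989789770643353746594664108225527143541105589454431496312560714576488635900699914213181924009206593531823108172663461546934656272018959054895451223525954681348594319258310890428885956004280506223813483858755584, 9050946879246559056341615607213589724129712632669106343114919542049035224423779383394697124210086347729210339517450274393765974704721911355503313263594455635160922314453396704522391651627767396952356607275514745228631188984703483863735096817889089281090465166302402290541626691023861617829774835225492129883761165257634935948436159580967562643853023934736065197866586670854004250296235232741425367593041896071786238411107662951343062566882909747085685293056],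 [2372651434426658870338572906968458075262645825962100136580922258616252960957272185519815745691933586906067335844629224701639087377935409420030042844629531549653608444587680573214600861020508877744701399911714397862486805275167866277471835554416410798849760593081471788851811238740102883386614719137751298677565119338572942521461992823979155114429554173402975026739318336277104767045378088724098269832722918462735158232439980402600504429968396764448815614938578944, 9050946810741345330600767021078447380181478859396456156910753774296255088896830344578774832969252378663848082863558360335318307316063510376101929141429447965968135438838048298275543650480804744110824332726103317080692375923833079743334774702594761549469981672516370562839221057441301448150005251967763403183504277198692598895921287829774350694605575677722417291563736579655937364062059437052455229128448445043486429066410992513306818016497530843072148013056, 579260595887446101158449089349020632331614647001373194042288241554960325689397142053041589310032152234486277303267735061460371668228064664070523465051484669821960668085635091089634793630771503623092757294470612293164312059125317103573425580966064739166078827041047716021710147676243292681600336125936857803744273740716326329338962421105558444454756843374234706660079141097979991299971803971357134664220700482783131460250303520851636353055841973956617472835584, 37072678136796550474140741718337320469223337408087884418706447459517460844121417091394661715842057743007121747409135043933463786766596138500513501763295018868605482757480645829736626792369376231877936466846119186762515971784020294628699237181828143306629044930627053825389449451279570731622421512059958899439633519405844885077693594950755740445104437975951021226245065030270719443198195454166856618510124830898120413456019425334504726595573886333223518261477376],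 [2372651432181880629070012072508107634207700881397061010931938437728814826807466807348153803043509463668522603186771654170723917244241092565442172793963925087178149683385370535178771370703302922526729666061804780064559955075496265045009016583730102226876473050544603196009521102115605647042437423423858742550420691287606468661916901104437508466252805847253646640952015671056836438566722492856927761292695585432566456413026310848425346710458888507446001040290217984, 9050946673730954628173958277497850861431371770498012232054276986005160799465889867233233721122798514950750817775752192073080605380933235766982967780339750752907160099131675439801990907927258184983037696593125448455531035980606713492656228619461902872684534501200403379573374137082526436280610507702683400451812185010163804994351099954018089454986953076311564100200916024795651864816990043194040253466738510879708943332390672987322155951586270428681161670656, 37072678136796550474140741718337320469223337408087884418706447459517460844121417091394661715842057743007121747409135043933463786766596138500513501763295018868605482757480645829736626792369376231877936466846119186762515971784020294628699237181828143306629044930627053825389449451279570731622421512059958899439633519405844885077693594950755740445104437975951021226245065030270719443198195454166856618510124830898120413456019425334504726595573886333223518261477376, 579260595887446101158449089349020632331614647001373194042288241554960325689397142053041589310032152234486277303267735061460371668228064664070523465051484669821960668085635091089634793630771503623092757294470612293164312059125317103573425580966064739166078827041047716021710147676243292681600336125936857803744273740716326329338962421105558444454756843374234706660079141097979991299971803971357134664220700482783131460250303520851636353055841973956617472835584],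 [2372651427692322942339859819570720073097769555425753008576756779146754001415701648780575494112334724421244238514965150165359513004719083812067194149891730918044365848139531397047630813332754244839398474587461203209093445753396623226910478089223126530760335217481628746004682140252917607724727696277140629420217995627893413307457750917262816564049568881179756415152181373793997600200000173194854081126645567212885548393927112561976748844458098424434494154351837184, 579260595887446101158449089349020632331614647001373194042288241554960325689397142053041589310032152234486277303267735061460371668228064664070523465051484669821960668085635091089634793630771503623092757294470612293164312059125317103573425580966064739166078827041047716021710147676243292681600336125936857803744273740716326329338962421105558444454756843374234706660079141097979991299971803971357134664220700482783131460250303520851636353055841973956617472835584, 9050946810741345330600767021078447380181478859396456156910753774296255088896830344578774832969252378663848082863558360335318307316063510376101929141429447965968135438838048298275543650480804744110824332726103317080692375923833079743334774702594761549469981672516370562839221057441301448150005251967763403183504277198692598895921287829774350694605575677722417291563736579655937364062059437052455229128448445043486429066410992513306818016497530843072148013056, 37072677575601990157000533104631197128422898771959858102494318534677138634612284896187325321718982717238275349609480978731338159640302533701562236028271619083907727766043342601428954758870049525690522405245441836873855123376565098465919912425315954166515853316916852242732540465490028283005380639550191208250622709801630945256862105411658094407626559800572166554422952037562990038290391216922788878199760940563287831889472196556071550777697363675878038203006976],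 [2372651418713209977265616481737399264642259388378410213209517468430902289871347222680619482928928875539126115242462484730679387672994620730377060552171704978023624819200071225710317837124309456506678570457632537373214294405206110073974973220228717420502178900555176946051744187291759179944368494405351408896248686905297452649266848617193160741710207106347451075229538496244352090189656288851768211562310374803842331682041407196716875793532953492740029885462872064, 579260587118781096203133329759862455131607793311872782851473727104330291165816951502926958151859104956848052337648140292677158744379727089086909937941744048186058246344427228147327418107344523838914412581960028701153986302758829663529998631645561783851810208076825816292695944773281691921959072492971737628915979840650483519638470397057157725119164996883940102412858625586921719348287362764418576221871264696301372373273003071188617980901521307435594346921984, 37072677575601990157000533104631197128422898771959858102494318534677138634612284896187325321718982717238275349609480978731338159640302533701562236028271619083907727766043342601428954758870049525690522405245441836873855123376565098465919912425315954166515853316916852242732540465490028283005380639550191208250622709801630945256862105411658094407626559800572166554422952037562990038290391216922788878199760940563287831889472196556071550777697363675878038203006976, 9050946810741345330600767021078447380181478859396456156910753774296255088896830344578774832969252378663848082863558360335318307316063510376101929141429447965968135438838048298275543650480804744110824332726103317080692375923833079743334774702594761549469981672516370562839221057441301448150005251967763403183504277198692598895921287829774350694605575677722417291563736579655937364062059437052455229128448445043486429066410992513306818016497530843072148013056],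 [2372651400754979230345007469973588510030293594117624602797212637409117494023770693849258349813891695552455791834184642811741682353062152864032864112850881207590750896478761333103144114711640078840187933878151627952801022194177298856236751179637001171624258875560131444824924764881892526823834976771837369564136545241974072644972390076848367388486684030460865358479684161937326044364684509066678823584647989177479706461185243221408302502116728725326305168734552064, 37072678136796550474140741718337320469223337408087884418706447459517460844121417091394661715842057743007121747409135043933463786766596138500513501763295018868605482757480645829736626792369376231877936466846119186762515971784020294628699237181828143306629044930627053825389449451279570731622421512059958899439633519405844885077693594950755740445104437975951021226245065030270719443198195454166856618510124830898120413456019425334504726595573886333223518261477376, 9050946673730954628173958277497850861431371770498012232054276986005160799465889867233233721122798514950750817775752192073080605380933235766982967780339750752907160099131675439801990907927258184983037696593125448455531035980606713492656228619461902872684534501200403379573374137082526436280610507702683400451812185010163804994351099954018089454986953076311564100200916024795651864816990043194040253466738510879708943332390672987322155951586270428681161670656, 579260587118781096203133329759862455131607793311872782851473727104330291165816951502926958151859104956848052337648140292677158744379727089086909937941744048186058246344427228147327418107344523838914412581960028701153986302758829663529998631645561783851810208076825816292695944773281691921959072492971737628915979840650483519638470397057157725119164996883940102412858625586921719348287362764418576221871264696301372373273003071188617980901521307435594346921984],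 [2372651364838527370048034118696396616219065521405430918559636386219336872615186233355988820590014893903249622375006782638805642216979362156899983105809383621370094577026773926491453104567683169644193433935708277559926727896100166301818874395220221066657014612282678543534882589791361810112344360931212237328039853427304380496439174746346118042088099827236618659483068930404031362450585037883058488204784700196050421240926220579588579249772631275256194444992446464, 37072677575601990157000533104631197128422898771959858102494318534677138634612284896187325321718982717238275349609480978731338159640302533701562236028271619083907727766043342601428954758870049525690522405245441836873855123376565098465919912425315954166515853316916852242732540465490028283005380639550191208250622709801630945256862105411658094407626559800572166554422952037562990038290391216922788878199760940563287831889472196556071550777697363675878038203006976, 579260587118781096203133329759862455131607793311872782851473727104330291165816951502926958151859104956848052337648140292677158744379727089086909937941744048186058246344427228147327418107344523838914412581960028701153986302758829663529998631645561783851810208076825816292695944773281691921959072492971737628915979840650483519638470397057157725119164996883940102412858625586921719348287362764418576221871264696301372373273003071188617980901521307435594346921984, 9050946673730954628173958277497850861431371770498012232054276986005160799465889867233233721122798514950750817775752192073080605380933235766982967780339750752907160099131675439801990907927258184983037696593125448455531035980606713492656228619461902872684534501200403379573374137082526436280610507702683400451812185010163804994351099954018089454986953076311564100200916024795651864816990043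194040253466738510879708943332390672987322155951586270428681161670656]]

def pcTab : List ℕ := [123665219279388823995271860556118744773784433374593026701839328462166389266853345641123752295602061518277119824424716729394879632497774998686037221970694940891222259343032321, 188399090174492470196375401000464178872789525194961536120259235850477793165867805133180331649470326196544263276329236771699940990867507386203659051065456799564625382245138435, 154581589372934336032716078027806696172792134357619279097000680560783144179856839539235130582664446234479411830201860573405562993253721512728841552495592137913227961320865797, 148398246780679009219938925789326811581709152472226695384415058313697504167853373154808093388278844028975681719781577271858294896933488227278042488070176537329611107393863705, 148398246780679009219938925789326811581709152472226695384415058313697504167853373154808093388278844028975681719781577271858294896933488227278042488070176537329611107393863705, 128747342370958277786253204138831219666343866405613048781626139125247760532060431109174822528692380849207199231950391282972440382242892379286777848462379466867944135176749089, 188399090174492440275113681465460584475883492353909899550054641788547539318234201890750436136408441793139785775919794462917846998122237352266193113863044755625637189066424385, 124633240641355992621193433034830724886858845456095263770670996148530416763908899763001252570013624096227849102706745459843799813532368755100932861513685046688803709687693441, 148398246780679009219938925789326811581709152472226695384415058311351874093148644385014447427895742704283709863120907506893064877649915885325131737191154704754475979686023425, 128747342370959019072005358334592086401216564688189378295338732354066802125411706487166544815323168300745106680136880774827837210004158214391105259316170320117581074330354177,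 123801092867926960849034149599185698782174616282218714243997151123377085214309470664226829639656402776601098106355131147017276795810448742965170395091972542257781908258694145, 148398246780678267934186771594424407667737737497059406044352022490301411457030584559178374515386246991606561590991720763475001363340758519237768845571011678475686320674441217, 148398246780679009219938925789326811581709152472226695384415058311351874093148644385014447427895742704283709863120907506893064877649915885325131737191154704754475979686023425, 123801092867926960849034149599185698782174616282218714243997151123377085214309470664226829639656402776601098106355131147017276795810448742965170395091972542257781908258694145, 128747342370958307707514923673834814063249899246664685351830733186724515623755433016180890944723635905384383410472676262487825797210912336774626736242608172124190186749837313, 148398246780678297855462842893023837276776603854447386262336354172856085970062575513313363230666556225764613116936729968262045419687349517057717646860165471506515960068603905, 124633248070020443981552083722464075782683895120828468038930198648505039751328682847758507949086222700812753338452192168333921006971382352121889928801349393302518479445884929, 188399082745828730200507184973588100314931140971752684560130174799700943752388968764776500223015225943944736503873308689763012183308086858045288957172791229126610583703126145, 128747342370959019072005358334592086401216564688189378295338732354066802125411706487166544815323168300745106680136880774827837210004158214391105259316170320117581074330354177, 148398246780678267934186771594424407667737737497059406044352022490301411457030584559178374515386246991606561590991720763475001363340758519237768845571011678475686320674441217,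 148398246780678297855462842893023837276776603854447386262336354172856085970062575513313363230666556225764613116936729968262045419687349517057717646860165471506515960068603905, 154581589372933896685413932042015097708485983513693956193950114855054561766101051185000110121221737366557108256678388827617853082826974383441849004434031962514066595068772353, 188399082745828730200507184973588100314931140971752684560130174799700943752388968764776500223015225943944736503873308689763012183308086858045288957172791229126610583703126145, 123665226708053714702918305464230933279980233752097810348825959674580433411770336747321206805739103395908549116887696090718952176923054212764165350330283418417933450844569601]

def pcm (i j : ℕ) : ℕ := ((pcTab.getD i 0) >>> (24*j)) &&& 16777215

def LL : List ℕ := [1, 3, 5, 25, 33, 63, 65, 129, 195, 4353, 16385, 20805, 65537, 81953, 328193, 526337, 1081345, 2097153, 2623585, 3194883, 4325505, 8388609, 8397825, 8454273, 8733345, 10066329, 10485765, 10560645, 12779715, 16777215]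

def extTab : List ℕ := [123665219279388823995271860556118744773784433374593026701839328462166389266853345641123752295602061518277119824424716729394879632497774998686037221970694940891222259343032321, 188399090174492470196375401000464178872789525194961536120259235850477793165867805133180331649470326196544263276329236771699940990867507386203659051065456799564625382245138435, 154581589372934336032716078027806696172792134357619279097000680560783144179856839539235130582664446234479411830201860573405562993253721512728841552495592137913227961320865797, 148398246780679009219938925789326811581709152472226695384415058313697504167853373154808093388278844028975681719781577271858294896933488227278042488070176537329611107393863705, 128747342370958277786253204138831219666343866405613048781626139125247760532060431109174822528692380849207199231950391282972440382242892379286777848462379466867944135176749089, 247330401473104534060502521019647190035131349101211839914063056092897225106531867170316401061243044989597671426016139339351365034284450548510384257784593350343225313811497023, 188399090174492440275113681465460584475883492353909899550054641788547539318234201890750436136408441793139785775919794462917846998122237352266193113863044755625637189066424385, 124633240641355992621193433034830724886858845456095263770670996148530416763908899763001252570013624096227849102706745459843799813532368755100932861513685046688803709687693441, 188399090174493181560865835661221451303975031536002040395878137765039026000091634066047769855599465111004319294737347236716209814277577150199915590889377476557444789473116355, 148398246780679009219938925789326811581709152472226695384415058311351874093148644385014447427895742704283709863120907506893064877649915885325131737191154704754475979686023425,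 128747342370958307707514923673834814063249899246664685351830733186724515623755433016180890944723635905384383410472676262487825797210912336774626736242608172124190186749837313, 247330401473104534060502521019647190035131349101211839914063056090551595031827135071225172289146313674081494536819402418497464755540929619692347889154120994904842537606861125, 124633248070020443981552083722464075782683895120828468038930198648505039751328682847758507949086222700812753338452192168333921006971382352121889928801349393302518479445884929, 128747342370959019072005358334592086494435405587705189627449635099393617139213131185380927475786672851555555861571207135917592233640725591087507291727013665399952247361716257, 128747342370959019072005358334592086401216564688189378295338732354066802125411706487166544815323168300745106680136880774827837210004158214391105259316170320117581074330354177, 148398246780678267934186771594424407667737737497059406044352022490301411457030584559178374515386246991606561590991720763475001363340758519237768845571011678475686320674441217, 148398246780678297855462842893023837276776603854447386262336354172856085970062575513313363230666556225764613116936729968262045419687349517057717646860165471506515960068603905, 154581589372933896685413932042015097708485983513693956193950114855054561766101051185000110121221737366557108256678388827617853082826974383441849004434031962514066595068772353, 247330401473103792774750366823886323207039809919119699068239560118751368499379167094110296114148752987249314796395323486406213182890213488615473157709739703680766087132612705, 247330401473103822696012086358889917603945842760171335638444154178335992272308038237448962855113906075137615407608028874335096210918982107428451512595272308496659478828072963,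 188399082745828730200507184973588100314931140971752684560130174799700943752388968764776500223015225943944736503873308689763012183308086858045288957172791229126610583703126145, 123665226708053714702918305464230933279980233752097810348825959674580433411770336747321206805739103395908549116887696090718952176923054212764165350330283418417933450844569601, 123801092867926960849034149599185698782174616282218714243997151123377085214309470664226829639656402776601098106355131147017276795810448742965170395091972542257781908258694145, 124633248070020443981552083722464075875902736020344619606418959113868499011611565064272522202597863263287431893570788788158961400049313241730414182346109217063687115289723009, 128747342370959019072005358334592086494435405587705530509650826538230975275434866117339187562613084084668846556193920099435803297208464998277747513049407259047624681443377825, 148398246780679009219938925789326811581709152472226695384415058313697504167853373154808093388278844028975681719781577271858294896955788888203516197743866886659240490658535833, 154581589372934336032716078027806696172792134357619279097000680563128774254561571638326359354761177549995588719398597494259463272041843764461201715760657641118842472366080005, 155685473382194640800030552250955416448787645789801080210015223429225682306202997466177530218388133454049700432914348518226964687593266641029236657773573435120298510872814725, 188399090174493181560865835661221451303975031536002040395878137765039026000091634066047769855599465111004319294737352018102582308670094754311690018396410042212553313937981635, 247330401473104534060502521019647190035131349101211839914063056092897225106531867170316401061243044989597671426016139339351365034306751209967546155101893167916606772148699135]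

def extm (m c : ℕ) : ℕ := ((extTab.getD m 0) >>> (24*c)) &&& 16777215

def exitL : List ℕ := [16777215, 8733345, 10066329, 10560645, 12779715]

def lk (i c v : ℕ) : ℕ := (((Rtab.getD i []).getD c 0) >>> (24*v)) &&& 16777215

def sigma (i m : ℕ) : ℕ :=
  lk i 0 (m &&& 63) ||| lk i 1 ((m >>> 6) &&& 63) ||| lk i 2 ((m >>> 12) &&& 63) |||
    lk i 3 ((m >>> 18) &&& 63)

def orAll (f : ℕ → ℕ) : ℕ → ℕ
  | 0 => 0
  | n+1 => orAll f n ||| f n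

def mstep (m : ℕ) : ℕ := orAll (fun i => cond (m.testBit i) (sigma i m) 0) 24

def mstepF (m : ℕ) : ℕ := cond (exitL.contains m) m (mstep m)

def bclos (m : ℕ) : ℕ := mstepF^[5] m

def seedE (m c : ℕ) : ℕ := m ||| 2^c ||| 2^(invm c)

def bAll : ℕ → (ℕ → Bool) → Bool
  | 0, _ => true
  | n+1, f => bAll n f && f n

def ofN (x : ℕ) : Fin 4 := ⟨x % 4, Nat.mod_lt _ (by norm_num)⟩

def app (i x : ℕ) : ℕ := (phi i (ofN x)).val

theorem D_mul : bAll 24 (fun i => bAll 24 fun j => bAll 4 fun x =>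
    app (tm i j) x == app i (app j x)) = true := by decide +kernel

theorem D_inj : bAll 24 (fun i => bAll 24 fun j =>
    (i == j) || !(bAll 4 fun x => app i x == app j x)) = true := by decide +kernel

theorem D_trange : bAll 24 (fun i => bAll 24 fun j => decide (tm i j < 24)) = true := by decide +kernel

theorem D_invr : bAll 24 (fun i => decide (invm i < 24) &&
    bAll 4 fun x => app (invm i) (app i x) == x) = true := by decide +kernel

theorem D_one : bAll 4 (fun x => app 0 x == x) = true := by decide +kernel

theorem D_R : bAll 24 (fun i => bAll 4 fun c => bAll 64 fun v =>
    lk i c v == orAll (fun j => cond (v.testBit j) (2 ^ tm i (6*c+j)) 0) 6) = true := by decide +kernel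

theorem D_exit : exitL.all (fun M => M.testBit 0 && decide (M < 16777216) &&
    bAll 24 fun i => !M.testBit i || bAll 24 fun j =>
      !M.testBit j || M.testBit (tm i j)) = true := by decide +kernel

theorem D_pc : bAll 24 (fun a => bAll 24 fun b =>
    bclos (seedE (seedE 1 a) b) == pcm a b) = true := by decide +kernel

theorem D_pcL : bAll 24 (fun a => bAll 24 fun b => LL.contains (pcm a b)) = true := by decide +kernel

theorem D_LLPC : LL.all (fun M => !(bAll 24 fun a => bAll 24 fun b =>
    !(pcm a b == M))) = true := by decide +kernel

theorem D_ext1 : bAll 30 (fun mI => bAll 24 fun c =>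
    bclos (seedE (LL.getD mI 0) c) == extm mI c) = true := by decide +kernel

theorem D_ext2 : bAll 30 (fun mI => bAll 24 fun c =>
    LL.contains (extm mI c) || extm mI c == 16777215) = true := by decide +kernel

theorem D_main : LL.all (fun M => (M == 16777215) || (bAll 24 fun i => !M.testBit i ||
    (bAll 24 fun j => !M.testBit j || (bAll 24 fun k => !M.testBit k ||
      ((pcm j k).testBit i || (pcm i k).testBit j || (pcm i j).testBit k))))) = true := by decide +kernel

theorem D_wit : (!(pcm 6 14 == 16777215) && !(pcm 6 21 == 16777215) &&
    !(pcm 14 21 == 16777215) &&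
    bclos (seedE (seedE (seedE 1 6) 14) 21) == 16777215) = true := by decide +kernel

theorem D_LLlen : LL.length = 30 := by rfl

end S4X

set_option maxRecDepth 10000

namespace S4X

open Subgroup

/-! ### Boolean bridges -/

theorem bAll_iff (f : ℕ → Bool) : ∀ n, bAll n f = true ↔ ∀ i, i < n → f i = true := by
  intro n
  induction n with
  | zero => simp [bAll]
  | succ n ih =>
    simp only [bAll, Bool.and_eq_true, ih]
    constructor
    · rintro ⟨h1, h2⟩ i hi
      rcases Nat.lt_succ_iff_lt_or_eq.mp hi with h | rfl
      · exact h1 i h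
      · exact h2
    · intro h
      exact ⟨fun i hi => h i (Nat.lt_succ_of_lt hi), h n (Nat.lt_succ_self n)⟩

theorem mul_apply_aux : ∀ i, i < 24 → ∀ j, j < 24 → ∀ x, x < 4 →
    app (tm i j) x = app i (app j x) := by
  have h := (bAll_iff _ _).1 D_mul
  intro i hi j hj x hx
  have h2 := (bAll_iff _ _).1 (h i hi) j hj
  have h3 := (bAll_iff _ _).1 h2 x hx
  exact eq_of_beq h3

theorem tm_lt : ∀ i, i < 24 → ∀ j, j < 24 → tm i j < 24 := by
  have h := (bAll_iff _ _).1 D_trange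
  intro i hi j hj
  exact of_decide_eq_true ((bAll_iff _ _).1 (h i hi) j hj)

theorem invm_lt : ∀ i, i < 24 → invm i < 24 := by
  have h := (bAll_iff _ _).1 D_invr
  intro i hi
  have h2 := h i hi
  rw [Bool.and_eq_true] at h2
  exact of_decide_eq_true h2.1

theorem inv_apply_aux : ∀ i, i < 24 → ∀ x, x < 4 → app (invm i) (app i x) = x := by
  have h := (bAll_iff _ _).1 D_invr
  intro i hi x hx
  have h2 := h i hi
  rw [Bool.and_eq_true] at h2
  exact eq_of_beq ((bAll_iff _ _).1 h2.2 x hx)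

theorem phi_inj_aux : ∀ i, i < 24 → ∀ j, j < 24 → phi i = phi j → i = j := by
  have h := (bAll_iff _ _).1 D_inj
  intro i hi j hj hphi
  have h2 := (bAll_iff _ _).1 (h i hi) j hj
  rw [Bool.or_eq_true] at h2
  rcases h2 with h3 | h3
  · exact eq_of_beq h3
  · exfalso
    rw [Bool.not_eq_true'] at h3
    have : bAll 4 (fun x => app i x == app j x) = true := by
      rw [bAll_iff]
      intro x hx
      simp [app, hphi]
    rw [this] at h3
    exact Bool.false_ne_true h3.symm

/-! ### `ofN` and `app` basics -/

theorem ofN_val (x : Fin 4) : ofN x.val = x := by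
  apply Fin.ext
  exact Nat.mod_eq_of_lt x.isLt

theorem app_eq (i : ℕ) (x : Fin 4) : app i x.val = (phi i x).val := by
  rw [app, ofN_val]

/-! ### the equivalence -/

theorem card_P4 : Fintype.card P4 = 24 := by
  rw [Fintype.card_perm, Fintype.card_fin]
  rfl

theorem phiF_bij : Function.Bijective (fun i : Fin 24 => phi i.val) := by
  rw [Fintype.bijective_iff_injective_and_card]
  constructor
  · intro i j h
    exact Fin.ext (phi_inj_aux _ i.isLt _ j.isLt h)
  · simp [card_P4]

noncomputable def eP : Fin 24 ≃ P4 := Equiv.ofBijective _ phiF_bij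

noncomputable def idx (x : P4) : ℕ := (eP.symm x).val

theorem idx_lt (x : P4) : idx x < 24 := (eP.symm x).isLt

theorem phi_idx (x : P4) : phi (idx x) = x := by
  have := eP.apply_symm_apply x
  simpa [eP, Equiv.ofBijective, idx] using this

theorem idx_phi {i : ℕ} (h : i < 24) : idx (phi i) = i := by
  exact phi_inj_aux _ (idx_lt _) _ h (phi_idx (phi i))

theorem idx_inj {x y : P4} (h : idx x = idx y) : x = y := by
  rw [← phi_idx x, ← phi_idx y, h]

theorem phi_mul {i j : ℕ} (hi : i < 24) (hj : j < 24) :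
    phi (tm i j) = phi i * phi j := by
  apply Equiv.ext
  intro x
  apply Fin.val_injective
  rw [Equiv.Perm.mul_apply, ← app_eq, ← app_eq, ← app_eq]
  exact mul_apply_aux i hi j hj x.val x.isLt

theorem idx_mul (x y : P4) : idx (x * y) = tm (idx x) (idx y) := by
  have h : phi (tm (idx x) (idx y)) = x * y := by
    rw [phi_mul (idx_lt x) (idx_lt y), phi_idx, phi_idx]
  rw [← h, idx_phi (tm_lt _ (idx_lt x) _ (idx_lt y))]

theorem phi_inv {i : ℕ} (hi : i < 24) : phi (invm i) = (phi i)⁻¹ := by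
  apply eq_inv_of_mul_eq_one_left
  apply Equiv.ext
  intro x
  apply Fin.val_injective
  rw [Equiv.Perm.mul_apply, Equiv.Perm.one_apply, ← app_eq, ← app_eq]
  exact inv_apply_aux i hi x.val x.isLt

theorem idx_inv (x : P4) : idx x⁻¹ = invm (idx x) := by
  have h : phi (invm (idx x)) = x⁻¹ := by rw [phi_inv (idx_lt x), phi_idx]
  rw [← h, idx_phi (invm_lt _ (idx_lt x))]

theorem phi_zero : phi 0 = 1 := by
  apply Equiv.ext
  intro x
  apply Fin.val_injective
  rw [Equiv.Perm.one_apply, ← app_eq]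
  exact eq_of_beq ((bAll_iff _ _).1 D_one x.val x.isLt)

theorem idx_one : idx (1 : P4) = 0 := by
  rw [← phi_zero, idx_phi (by norm_num)]

/-! ### set semantics of bit masks -/

def TS (m : ℕ) : Set P4 := {x | m.testBit (idx x) = true}

theorem mem_TS {m : ℕ} {x : P4} : x ∈ TS m ↔ m.testBit (idx x) = true := Iff.rfl

theorem testBit_orAll (f : ℕ → ℕ) (n k : ℕ) :
    (orAll f n).testBit k = true ↔ ∃ i, i < n ∧ (f i).testBit k = true := by
  induction n with
  | zero => simp [orAll, Nat.zero_testBit]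
  | succ n ih =>
    rw [orAll, Nat.testBit_or, Bool.or_eq_true, ih]
    constructor
    · rintro (⟨i, hi, h⟩ | h)
      · exact ⟨i, Nat.lt_succ_of_lt hi, h⟩
      · exact ⟨n, Nat.lt_succ_self n, h⟩
    · rintro ⟨i, hi, h⟩
      rcases Nat.lt_succ_iff_lt_or_eq.mp hi with h2 | rfl
      · exact Or.inl ⟨i, h2, h⟩
      · exact Or.inr h

theorem lk_eq : ∀ i, i < 24 → ∀ c, c < 4 → ∀ v, v < 64 →
    lk i c v = orAll (fun j => cond (v.testBit j) (2 ^ tm i (6*c+j)) 0) 6 := by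
  have h := (bAll_iff _ _).1 D_R
  intro i hi c hc v hv
  exact eq_of_beq ((bAll_iff _ _).1 ((bAll_iff _ _).1 (h i hi) c hc) v hv)

theorem testBit_cond_pow {b : Bool} {e k : ℕ} :
    (cond b (2 ^ e) 0).testBit k = true ↔ b = true ∧ e = k := by
  cases b <;> simp [Nat.zero_testBit, Nat.testBit_two_pow]

theorem testBit_lk {i c v k : ℕ} (hi : i < 24) (hc : c < 4) (hv : v < 64) :
    (lk i c v).testBit k = true ↔ ∃ j, j < 6 ∧ v.testBit j = true ∧ tm i (6*c+j) = k := by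
  rw [lk_eq i hi c hc v hv, testBit_orAll]
  constructor
  · rintro ⟨j, hj, h⟩
    rw [testBit_cond_pow] at h
    exact ⟨j, hj, h.1, h.2⟩
  · rintro ⟨j, hj, h1, h2⟩
    exact ⟨j, hj, testBit_cond_pow.2 ⟨h1, h2⟩⟩

theorem chunk_testBit (m c j : ℕ) :
    ((m >>> (6*c)) &&& 63).testBit j = (m.testBit (6*c+j) && decide (j < 6)) := by
  have h63 : (63 : ℕ) = 2^6 - 1 := rfl
  rw [Nat.testBit_land, Nat.testBit_shiftRight, h63, Nat.testBit_two_pow_sub_one]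

theorem chunk_lt (m c : ℕ) : (m >>> (6*c)) &&& 63 < 64 :=
  Nat.lt_succ_of_le (Nat.and_le_right)

theorem testBit_sigma {i m k : ℕ} (hi : i < 24) :
    (sigma i m).testBit k = true ↔ ∃ j, j < 24 ∧ m.testBit j = true ∧ tm i j = k := by
  have e0 : m &&& 63 = (m >>> (6*0)) &&& 63 := by norm_num
  constructor
  · intro h
    rw [sigma] at h
    simp only [Nat.testBit_or, Bool.or_eq_true] at h
    rcases h with ((h | h) | h) | h
    · rw [e0] at h
      obtain ⟨j, hj, h1, h2⟩ := (testBit_lk hi (by norm_num) (chunk_lt m 0)).1 h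
      rw [chunk_testBit, Bool.and_eq_true] at h1
      exact ⟨6*0+j, by omega, h1.1, h2⟩
    · obtain ⟨j, hj, h1, h2⟩ := (testBit_lk hi (by norm_num) (chunk_lt m 1)).1 h
      rw [chunk_testBit, Bool.and_eq_true] at h1
      exact ⟨6*1+j, by omega, h1.1, h2⟩
    · obtain ⟨j, hj, h1, h2⟩ := (testBit_lk hi (by norm_num) (chunk_lt m 2)).1 h
      rw [chunk_testBit, Bool.and_eq_true] at h1
      exact ⟨6*2+j, by omega, h1.1, h2⟩
    · obtain ⟨j, hj, h1, h2⟩ := (testBit_lk hi (by norm_num) (chunk_lt m 3)).1 h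
      rw [chunk_testBit, Bool.and_eq_true] at h1
      exact ⟨6*3+j, by omega, h1.1, h2⟩
  · rintro ⟨j, hj, h1, h2⟩
    rw [sigma]
    simp only [Nat.testBit_or, Bool.or_eq_true]
    have hcases : j < 6 ∨ (6 ≤ j ∧ j < 12) ∨ (12 ≤ j ∧ j < 18) ∨ (18 ≤ j ∧ j < 24) := by omega
    rcases hcases with h3 | h3 | h3 | h3
    · refine Or.inl (Or.inl (Or.inl ?_))
      rw [e0]
      refine (testBit_lk hi (by norm_num) (chunk_lt m 0)).2 ⟨j, h3, ?_, by simpa using h2⟩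
      rw [chunk_testBit]
      simp only [Nat.mul_zero, Nat.zero_add]
      simp [h1, h3]
    · refine Or.inl (Or.inl (Or.inr ?_))
      refine (testBit_lk hi (by norm_num) (chunk_lt m 1)).2 ⟨j - 6, by omega, ?_, ?_⟩
      · rw [show (6:ℕ) = 6*1 from rfl, chunk_testBit]
        rw [show 6*1 + (j-6) = j by omega]
        simp [h1]
        omega
      · rw [show 6*1 + (j-6) = j by omega]
        exact h2
    · refine Or.inl (Or.inr ?_)
      refine (testBit_lk hi (by norm_num) (chunk_lt m 2)).2 ⟨j - 12, by omega, ?_, ?_⟩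
      · rw [show (12:ℕ) = 6*2 from rfl, chunk_testBit]
        rw [show 6*2 + (j-12) = j by omega]
        simp [h1]
        omega
      · rw [show 6*2 + (j-12) = j by omega]
        exact h2
    · refine Or.inr ?_
      refine (testBit_lk hi (by norm_num) (chunk_lt m 3)).2 ⟨j - 18, by omega, ?_, ?_⟩
      · rw [show (18:ℕ) = 6*3 from rfl, chunk_testBit]
        rw [show 6*3 + (j-18) = j by omega]
        simp [h1]
        omega
      · rw [show 6*3 + (j-18) = j by omega]
        exact h2

theorem testBit_mstep {m k : ℕ} :
    (mstep m).testBit k = true ↔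
      ∃ i, i < 24 ∧ m.testBit i = true ∧ ∃ j, j < 24 ∧ m.testBit j = true ∧ tm i j = k := by
  rw [mstep, testBit_orAll]
  constructor
  · rintro ⟨i, hi, h⟩
    rcases hb : m.testBit i with _ | _
    · rw [hb] at h
      simp [Nat.zero_testBit] at h
    · rw [hb] at h
      simp only [cond_true] at h
      exact ⟨i, hi, hb, (testBit_sigma hi).1 h⟩
  · rintro ⟨i, hi, hb, hrest⟩
    exact ⟨i, hi, by rw [hb]; exact (testBit_sigma hi).2 hrest⟩

theorem mem_mstep {m : ℕ} {x : P4} :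
    x ∈ TS (mstep m) ↔ ∃ u v : P4, u ∈ TS m ∧ v ∈ TS m ∧ u * v = x := by
  rw [mem_TS, testBit_mstep]
  constructor
  · rintro ⟨i, hi, hbi, j, hj, hbj, htm⟩
    refine ⟨phi i, phi j, ?_, ?_, ?_⟩
    · rw [mem_TS, idx_phi hi]; exact hbi
    · rw [mem_TS, idx_phi hj]; exact hbj
    · rw [← phi_mul hi hj, htm, phi_idx]
  · rintro ⟨u, v, hu, hv, rfl⟩
    exact ⟨idx u, idx_lt u, hu, idx v, idx_lt v, hv, (idx_mul u v).symm⟩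

end S4X

set_option maxRecDepth 10000

namespace S4X

open Subgroup

/-! ### exit list facts -/

theorem exit_spec : ∀ M ∈ exitL, M.testBit 0 = true ∧ M < 2^24 ∧
    (∀ i, i < 24 → M.testBit i = true → ∀ j, j < 24 → M.testBit j = true →
      M.testBit (tm i j) = true) := by
  intro M hM
  have h := List.all_eq_true.1 D_exit M hM
  rw [Bool.and_eq_true, Bool.and_eq_true] at h
  obtain ⟨⟨h1, h2⟩, h3⟩ := h
  refine ⟨h1, of_decide_eq_true h2, ?_⟩
  intro i hi hbi j hj hbj
  have h4 := (bAll_iff _ _).1 h3 i hi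
  rw [Bool.or_eq_true, Bool.not_eq_true'] at h4
  rcases h4 with h4 | h4
  · rw [hbi] at h4; exact absurd h4 (by simp)
  have h5 := (bAll_iff _ _).1 h4 j hj
  rw [Bool.or_eq_true, Bool.not_eq_true'] at h5
  rcases h5 with h5 | h5
  · rw [hbj] at h5; exact absurd h5 (by simp)
  exact h5

theorem exit_one {M : ℕ} (h : M ∈ exitL) : (1 : P4) ∈ TS M := by
  rw [mem_TS, idx_one]
  exact (exit_spec M h).1

theorem exit_closed {M : ℕ} (h : M ∈ exitL) {u v : P4}
    (hu : u ∈ TS M) (hv : v ∈ TS M) : u * v ∈ TS M := by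
  rw [mem_TS, idx_mul]
  exact (exit_spec M h).2.2 _ (idx_lt u) hu _ (idx_lt v) hv

/-! ### mstepF -/

theorem mstepF_cases (m : ℕ) :
    (m ∈ exitL ∧ mstepF m = m) ∨ (mstepF m = mstep m) := by
  rw [mstepF]
  rcases h : exitL.contains m with _ | _
  · exact Or.inr rfl
  · exact Or.inl ⟨List.elem_iff.1 h, rfl⟩

theorem one_mem_mstep {m : ℕ} (h1 : (1 : P4) ∈ TS m) : (1 : P4) ∈ TS (mstep m) := by
  refine mem_mstep.2 ⟨1, 1, h1, h1, mul_one 1⟩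

theorem subset_mstep {m : ℕ} (h1 : (1 : P4) ∈ TS m) : TS m ⊆ TS (mstep m) := by
  intro x hx
  exact mem_mstep.2 ⟨1, x, h1, hx, one_mul x⟩

theorem iter_mono (k m : ℕ) (h1 : (1 : P4) ∈ TS m) :
    TS m ⊆ TS (mstepF^[k] m) ∧ (1 : P4) ∈ TS (mstepF^[k] m) := by
  induction k with
  | zero => exact ⟨subset_rfl, h1⟩
  | succ k ih =>
    rw [Function.iterate_succ_apply']
    rcases mstepF_cases (mstepF^[k] m) with ⟨_, he⟩ | he <;> rw [he]
    · exact ih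
    · exact ⟨ih.1.trans (subset_mstep ih.2), one_mem_mstep ih.2⟩

theorem prod_mem_closed {S : Set P4} (h1 : (1:P4) ∈ S)
    (hc : ∀ u v : P4, u ∈ S → v ∈ S → u * v ∈ S) :
    ∀ l : List P4, (∀ y ∈ l, y ∈ S) → l.prod ∈ S := by
  intro l
  induction l with
  | nil => intro _; simpa using h1
  | cons a t ih =>
    intro hmem
    rw [List.prod_cons]
    exact hc _ _ (hmem a (by simp)) (ih fun y hy => hmem y (by simp [hy]))

theorem prod_mem_iter (k m : ℕ) (h1 : (1 : P4) ∈ TS m) :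
    ∀ l : List P4, (∀ y ∈ l, y ∈ TS m) → l.length ≤ 2^k →
      l.prod ∈ TS (mstepF^[k] m) := by
  induction k with
  | zero =>
    intro l hmem hlen
    rcases l with _ | ⟨a, _ | ⟨b, t⟩⟩
    · simpa using h1
    · simpa using hmem a (by simp)
    · simp at hlen
  | succ k ih =>
    intro l hmem hlen
    rw [Function.iterate_succ_apply']
    have hhalf : 2^(k+1) = 2^k + 2^k := by rw [pow_succ]; omega
    have htake : (l.take (2^k)).length ≤ 2^k := by
      rw [List.length_take]; omega
    have hdrop : (l.drop (2^k)).length ≤ 2^k := by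
      rw [List.length_drop]; omega
    have hu := ih (l.take (2^k)) (fun y hy => hmem y (List.take_subset _ _ hy)) htake
    have hv := ih (l.drop (2^k)) (fun y hy => hmem y (List.drop_subset _ _ hy)) hdrop
    have hprod : (l.take (2^k)).prod * (l.drop (2^k)).prod = l.prod :=
      List.prod_take_mul_prod_drop l (2^k)
    rcases mstepF_cases (mstepF^[k] m) with ⟨hmem2, he⟩ | he <;> rw [he]
    · rw [← hprod]
      exact exit_closed hmem2 hu hv
    · exact mem_mstep.2 ⟨_, _, hu, hv, hprod⟩

theorem iter_subset_closure (k m : ℕ) (C : Subgroup P4) (h : TS m ⊆ C) :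
    TS (mstepF^[k] m) ⊆ C := by
  induction k with
  | zero => exact h
  | succ k ih =>
    rw [Function.iterate_succ_apply']
    rcases mstepF_cases (mstepF^[k] m) with ⟨_, he⟩ | he <;> rw [he]
    · exact ih
    · intro x hx
      obtain ⟨u, v, hu, hv, rfl⟩ := mem_mstep.1 hx
      exact mul_mem (ih hu) (ih hv)

/-! ### shortening products in a finite group -/

theorem shorten_aux {G : Type*} [Group G] [Fintype G] (s : Set G) :
    ∀ (n : ℕ) (l : List G), l.length ≤ n → (∀ y ∈ l, y ∈ s) →
      ∃ l' : List G, (∀ y ∈ l', y ∈ s) ∧ l'.prod = l.prod ∧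
        l'.length ≤ Fintype.card G := by
  intro n
  induction n with
  | zero =>
    intro l hlen hmem
    exact ⟨l, hmem, rfl, by omega⟩
  | succ n ih =>
    intro l hlen hmem
    by_cases hle : l.length ≤ Fintype.card G
    · exact ⟨l, hmem, rfl, hle⟩
    push_neg at hle
    have hcard : Fintype.card G < Fintype.card (Fin (Fintype.card G + 1)) := by simp
    obtain ⟨i, j, hne, heq⟩ :=
      Fintype.exists_ne_map_eq_of_card_lt (fun i : Fin (Fintype.card G + 1) =>
        (l.take i.val).prod) hcard
    -- wlog i < j
    rcases Nat.lt_or_ge i.val j.val with hij | hij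
    case _ =>
      obtain ⟨l', h1, h2, h3⟩ := ih (l.take i.val ++ l.drop j.val)
        (by
          rw [List.length_append, List.length_take, List.length_drop]
          have : i.val ≤ Fintype.card G := Nat.lt_succ_iff.1 i.isLt
          have : j.val ≤ Fintype.card G := Nat.lt_succ_iff.1 j.isLt
          omega)
        (by
          intro y hy
          rcases List.mem_append.1 hy with hy | hy
          · exact hmem y (List.take_subset _ _ hy)
          · exact hmem y (List.drop_subset _ _ hy))
      refine ⟨l', h1, ?_, h3⟩
      rw [h2, List.prod_append, heq, List.prod_take_mul_prod_drop]
    case _ =>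
      have hij' : j.val < i.val := by
        rcases Nat.lt_or_ge j.val i.val with h | h
        · exact h
        · exact absurd (Fin.ext (by omega)) hne
      obtain ⟨l', h1, h2, h3⟩ := ih (l.take j.val ++ l.drop i.val)
        (by
          rw [List.length_append, List.length_take, List.length_drop]
          have : i.val ≤ Fintype.card G := Nat.lt_succ_iff.1 i.isLt
          have : j.val ≤ Fintype.card G := Nat.lt_succ_iff.1 j.isLt
          omega)
        (by
          intro y hy
          rcases List.mem_append.1 hy with hy | hy
          · exact hmem y (List.take_subset _ _ hy)
          · exact hmem y (List.drop_subset _ _ hy))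
      refine ⟨l', h1, ?_, h3⟩
      rw [h2, List.prod_append, ← heq, List.prod_take_mul_prod_drop]

theorem shorten {G : Type*} [Group G] [Fintype G] {s : Set G} {x : G}
    (hx : x ∈ Submonoid.closure s) :
    ∃ l : List G, (∀ y ∈ l, y ∈ s) ∧ l.prod = x ∧ l.length ≤ Fintype.card G := by
  obtain ⟨l, hl, hprod⟩ := Submonoid.exists_list_of_mem_closure hx
  obtain ⟨l', h1, h2, h3⟩ := shorten_aux s l.length l le_rfl hl
  exact ⟨l', h1, by rw [h2, hprod], h3⟩

/-! ### the main closure computation theorem -/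

def GoodSeed (m : ℕ) : Prop :=
  (1 : P4) ∈ TS m ∧ ∀ x : P4, x ∈ TS m → x⁻¹ ∈ TS m

theorem mem_bclos_iff {m : ℕ} (hg : GoodSeed m) (x : P4) :
    x ∈ TS (bclos m) ↔ x ∈ Subgroup.closure (TS m) := by
  obtain ⟨h1, hinv⟩ := hg
  constructor
  · intro hx
    exact iter_subset_closure 5 m (Subgroup.closure (TS m)) Subgroup.subset_closure hx
  · intro hx
    have hx2 : x ∈ Submonoid.closure (TS m ∪ (TS m)⁻¹) := by
      rw [← Subgroup.closure_toSubmonoid]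
      exact (Subgroup.mem_toSubmonoid _ _).2 hx
    have hsub : (TS m)⁻¹ ⊆ TS m := by
      intro y hy
      rw [Set.mem_inv] at hy
      have := hinv _ hy
      simpa using this
    rw [Set.union_eq_self_of_subset_right hsub] at hx2
    obtain ⟨l, hl, hprod, hlen⟩ := shorten hx2
    rw [← hprod]
    apply prod_mem_iter 5 m h1 l hl
    rw [card_P4] at hlen
    omega

/-! ### size bounds -/

theorem lk_lt (i c v : ℕ) : lk i c v < 2^24 :=
  Nat.lt_succ_of_le Nat.and_le_right

theorem sigma_lt (i m : ℕ) : sigma i m < 2^24 := by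
  rw [sigma]
  exact Nat.or_lt_two_pow (Nat.or_lt_two_pow (Nat.or_lt_two_pow (lk_lt _ _ _)
    (lk_lt _ _ _)) (lk_lt _ _ _)) (lk_lt _ _ _)

theorem orAll_lt {f : ℕ → ℕ} (h : ∀ i, f i < 2^24) : ∀ n, orAll f n < 2^24 := by
  intro n
  induction n with
  | zero => rw [orAll]; positivity
  | succ n ih => rw [orAll]; exact Nat.or_lt_two_pow ih (h n)

theorem mstep_lt (m : ℕ) : mstep m < 2^24 := by
  rw [mstep]
  apply orAll_lt
  intro i
  rcases m.testBit i with _ | _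
  · simpa using Nat.pos_pow_of_pos 24 (by norm_num)
  · simpa using sigma_lt i m

theorem mstepF_lt (m : ℕ) : mstepF m < 2^24 := by
  rcases mstepF_cases m with ⟨hm, he⟩ | he <;> rw [he]
  · exact (exit_spec m hm).2.1
  · exact mstep_lt m

theorem bclos_lt (m : ℕ) : bclos m < 2^24 := by
  rw [bclos, show (5:ℕ) = 4 + 1 from rfl, Function.iterate_succ_apply']
  exact mstepF_lt _

theorem mem_TS_full (x : P4) : x ∈ TS 16777215 := by
  rw [mem_TS, show (16777215 : ℕ) = 2^24 - 1 from rfl, Nat.testBit_two_pow_sub_one]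
  exact decide_eq_true (idx_lt x)

theorem eq_full_of_univ {m : ℕ} (hlt : m < 2^24) (h : ∀ x : P4, x ∈ TS m) :
    m = 16777215 := by
  apply Nat.eq_of_testBit_eq
  intro i
  rcases Nat.lt_or_ge i 24 with hi | hi
  · have h1 : m.testBit i = true := by
      have := h (phi i)
      rwa [mem_TS, idx_phi hi] at this
    rw [h1, show (16777215 : ℕ) = 2^24 - 1 from rfl, Nat.testBit_two_pow_sub_one]
    simp [hi]
  · have h1 : m.testBit i = false :=
      Nat.testBit_lt_two_pow (lt_of_lt_of_le hlt (Nat.pow_le_pow_right (by norm_num) hi))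
    have h2 : (16777215 : ℕ).testBit i = false := by
      rw [show (16777215 : ℕ) = 2^24 - 1 from rfl, Nat.testBit_two_pow_sub_one]
      simp; omega
    rw [h1, h2]

/-! ### seeds -/

theorem TS_one : TS 1 = {(1 : P4)} := by
  ext x
  rw [mem_TS, show (1:ℕ) = 2^0 from rfl, Nat.testBit_two_pow]
  simp only [Set.mem_singleton_iff, decide_eq_true_eq]
  constructor
  · intro h
    apply idx_inj
    rw [idx_one, h]
  · rintro rfl
    rw [idx_one]

theorem good_one : GoodSeed 1 := by
  constructor
  · rw [TS_one]; simp
  · intro x hx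
    rw [TS_one] at *
    simp at hx
    simp [hx]

theorem TS_seedE {m c : ℕ} (hc : c < 24) :
    TS (seedE m c) = TS m ∪ {phi c, (phi c)⁻¹} := by
  ext x
  rw [Set.mem_union, mem_TS, seedE, Nat.testBit_or, Nat.testBit_or,
    Nat.testBit_two_pow, Nat.testBit_two_pow]
  simp only [Bool.or_eq_true, decide_eq_true_eq, Set.mem_insert_iff, Set.mem_singleton_iff]
  constructor
  · rintro ((h | h) | h)
    · exact Or.inl h
    · refine Or.inr (Or.inl ?_)
      have : phi c = x := by rw [h, phi_idx]
      exact this.symm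
    · refine Or.inr (Or.inr ?_)
      have h2 : phi (invm c) = (phi c)⁻¹ := phi_inv hc
      rw [h, phi_idx] at h2
      exact h2
  · rintro (h | rfl | rfl)
    · exact Or.inl (Or.inl h)
    · exact Or.inl (Or.inr (idx_phi hc).symm)
    · refine Or.inr ?_
      rw [idx_inv, idx_phi hc]
  
theorem good_seedE {m c : ℕ} (hg : GoodSeed m) (hc : c < 24) : GoodSeed (seedE m c) := by
  rw [GoodSeed, TS_seedE hc]
  constructor
  · exact Or.inl hg.1
  · rintro x (hx | hx | hx)
    · exact Or.inl (hg.2 x hx)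
    · subst hx
      exact Or.inr (Or.inr rfl)
    · rw [Set.mem_singleton_iff] at hx
      subst hx
      rw [inv_inv]
      exact Or.inr (Or.inl rfl)

theorem closure_seedE {m c : ℕ} (hc : c < 24) :
    closure (TS (seedE m c)) = closure (TS m) ⊔ closure {phi c} := by
  rw [TS_seedE hc]
  have h1 : ({phi c, (phi c)⁻¹} : Set P4) = {phi c} ∪ {(phi c)⁻¹} := by
    rw [Set.singleton_union]
  have h2 : closure ({(phi c)⁻¹} : Set P4) = closure {phi c} := by
    rw [← Set.inv_singleton, Subgroup.closure_inv]
  rw [h1, Subgroup.closure_union, Subgroup.closure_union, h2, sup_idem]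

/-! ### pcm and extm semantics -/

theorem pc_bclos {a b : ℕ} (ha : a < 24) (hb : b < 24) :
    bclos (seedE (seedE 1 a) b) = pcm a b := by
  have h := (bAll_iff _ _).1 ((bAll_iff _ _).1 D_pc a ha) b hb
  exact eq_of_beq h

theorem closure_seed2 {a b : ℕ} (ha : a < 24) (hb : b < 24) :
    closure (TS (seedE (seedE 1 a) b)) = closure {phi a, phi b} := by
  rw [closure_seedE hb, closure_seedE ha, TS_one, Subgroup.closure_singleton_one,
    bot_sup_eq, ← Subgroup.closure_union, Set.singleton_union]

theorem TS_pcm {a b : ℕ} (ha : a < 24) (hb : b < 24) :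
    TS (pcm a b) = (closure {phi a, phi b} : Subgroup P4) := by
  ext x
  rw [← pc_bclos ha hb, mem_TS, ← mem_TS,
    mem_bclos_iff (good_seedE (good_seedE good_one ha) hb) x, SetLike.mem_coe,
    closure_seed2 ha hb]

theorem pcm_lt {a b : ℕ} (ha : a < 24) (hb : b < 24) : pcm a b < 2^24 := by
  rw [← pc_bclos ha hb]
  exact bclos_lt _

theorem pcm_mem_LL {a b : ℕ} (ha : a < 24) (hb : b < 24) : pcm a b ∈ LL := by
  have h := (bAll_iff _ _).1 ((bAll_iff _ _).1 D_pcL a ha) b hb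
  exact List.elem_iff.1 h

theorem LL_is_pc {M : ℕ} (h : M ∈ LL) :
    ∃ a b, a < 24 ∧ b < 24 ∧ pcm a b = M := by
  have hall := List.all_eq_true.1 D_LLPC M h
  rw [Bool.not_eq_true'] at hall
  by_contra hno
  push_neg at hno
  have : bAll 24 (fun a => bAll 24 fun b => !(pcm a b == M)) = true := by
    rw [bAll_iff]
    intro a ha
    rw [bAll_iff]
    intro b hb
    rw [Bool.not_eq_true', beq_eq_false_iff_ne]
    exact hno a b ha hb
  rw [this] at hall
  exact absurd hall (by simp)

theorem LL_spec {M : ℕ} (h : M ∈ LL) :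
    ∃ K : Subgroup P4, TS M = K := by
  obtain ⟨a, b, ha, hb, hpc⟩ := LL_is_pc h
  exact ⟨closure {phi a, phi b}, by rw [← hpc, TS_pcm ha hb]⟩

theorem good_of_subgroup {M : ℕ} {K : Subgroup P4} (h : TS M = K) : GoodSeed M := by
  constructor
  · rw [h]; exact one_mem K
  · intro x hx
    rw [h] at *
    exact inv_mem hx

theorem ext_bclos {mI c : ℕ} (hm : mI < 30) (hc : c < 24) :
    bclos (seedE (LL.getD mI 0) c) = extm mI c := by
  exact eq_of_beq ((bAll_iff _ _).1 ((bAll_iff _ _).1 D_ext1 mI hm) c hc)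

theorem extm_lt {mI c : ℕ} (hm : mI < 30) (hc : c < 24) : extm mI c < 2^24 := by
  rw [← ext_bclos hm hc]
  exact bclos_lt _

theorem extm_LL_or_full {mI c : ℕ} (hm : mI < 30) (hc : c < 24) :
    extm mI c ∈ LL ∨ extm mI c = 16777215 := by
  have h := (bAll_iff _ _).1 ((bAll_iff _ _).1 D_ext2 mI hm) c hc
  rw [Bool.or_eq_true] at h
  rcases h with h | h
  · exact Or.inl (List.elem_iff.1 h)
  · exact Or.inr (eq_of_beq h)

theorem getD_mem_LL {mI : ℕ} (hm : mI < 30) : LL.getD mI 0 ∈ LL := by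
  have hlen : mI < LL.length := by rw [D_LLlen]; exact hm
  rw [List.getD_eq_getElem LL 0 hlen]
  exact List.getElem_mem hlen

theorem TS_extm {mI c : ℕ} (hm : mI < 30) (hc : c < 24) {K : Subgroup P4}
    (hK : TS (LL.getD mI 0) = K) :
    TS (extm mI c) = (K ⊔ closure {phi c} : Subgroup P4) := by
  ext x
  rw [← ext_bclos hm hc, mem_TS, ← mem_TS,
    mem_bclos_iff (good_seedE (good_of_subgroup hK) hc) x, SetLike.mem_coe,
    closure_seedE hc, hK, Subgroup.closure_eq]

/-! ### translation of D_main -/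

theorem main_prop : ∀ M ∈ LL, M ≠ 16777215 → ∀ i, i < 24 → M.testBit i = true →
    ∀ j, j < 24 → M.testBit j = true → ∀ k, k < 24 → M.testBit k = true →
    (pcm j k).testBit i = true ∨ (pcm i k).testBit j = true ∨
      (pcm i j).testBit k = true := by
  intro M hM hne i hi hbi j hj hbj k hk hbk
  have h := List.all_eq_true.1 D_main M hM
  rw [Bool.or_eq_true] at h
  rcases h with h | h
  · exact absurd (eq_of_beq h) hne
  have h2 := (bAll_iff _ _).1 h i hi
  rw [Bool.or_eq_true, Bool.not_eq_true'] at h2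
  rcases h2 with h2 | h2
  · rw [hbi] at h2; exact absurd h2 (by simp)
  have h3 := (bAll_iff _ _).1 h2 j hj
  rw [Bool.or_eq_true, Bool.not_eq_true'] at h3
  rcases h3 with h3 | h3
  · rw [hbj] at h3; exact absurd h3 (by simp)
  have h4 := (bAll_iff _ _).1 h3 k hk
  rw [Bool.or_eq_true, Bool.not_eq_true'] at h4
  rcases h4 with h4 | h4
  · rw [hbk] at h4; exact absurd h4 (by simp)
  rw [Bool.or_eq_true, Bool.or_eq_true] at h4
  tauto

end S4X

set_option maxRecDepth 10000

namespace S4X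

open Subgroup

theorem triple_union (u v w : P4) : ({u, v, w} : Set P4) = {u, v} ∪ {w} := by
  ext x
  simp only [Set.mem_insert_iff, Set.mem_union, Set.mem_singleton_iff]
  tauto

theorem closure_triple (u v w : P4) :
    closure ({u, v, w} : Set P4) = closure {u, v} ⊔ closure {w} := by
  rw [triple_union, Subgroup.closure_union]

/-- The core fact: an irredundant triple generates `S₄`. -/
theorem gen_of_irred (u v w : P4) (hu : u ∉ closure ({v, w} : Set P4))
    (hv : v ∉ closure ({u, w} : Set P4)) (hw : w ∉ closure ({u, v} : Set P4)) :
    closure ({u, v, w} : Set P4) = ⊤ := by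
  by_contra hK
  -- the subgroup generated by u and v
  have hTSM : TS (pcm (idx u) (idx v)) = (closure {u, v} : Subgroup P4) := by
    rw [TS_pcm (idx_lt u) (idx_lt v), phi_idx, phi_idx]
  have hMLL : pcm (idx u) (idx v) ∈ LL := pcm_mem_LL (idx_lt u) (idx_lt v)
  obtain ⟨mI, hmIlen, hgetM⟩ := List.mem_iff_getElem.1 hMLL
  have hmI : mI < 30 := by rwa [D_LLlen] at hmIlen
  have hgetD : LL.getD mI 0 = pcm (idx u) (idx v) := by
    rw [List.getD_eq_getElem LL 0 hmIlen, hgetM]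
  -- the subgroup generated by u, v, w
  have hTSE : TS (extm mI (idx w)) = (closure ({u, v, w} : Set P4) : Subgroup P4) := by
    rw [closure_triple]
    have := TS_extm hmI (idx_lt w) (K := closure {u, v}) (by rw [hgetD]; exact hTSM)
    rw [phi_idx] at this
    exact this
  have hEne : extm mI (idx w) ≠ 16777215 := by
    intro hE
    apply hK
    rw [eq_top_iff']
    intro x
    have hx : x ∈ TS (extm mI (idx w)) := by
      rw [hE]
      exact mem_TS_full x
    rw [hTSE] at hx
    exact hx
  have hELL : extm mI (idx w) ∈ LL := by
    rcases extm_LL_or_full hmI (idx_lt w) with h | h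
    · exact h
    · exact absurd h hEne
  -- u, v, w are in TS E
  have hmemu : (extm mI (idx w)).testBit (idx u) = true := by
    have : u ∈ TS (extm mI (idx w)) := by
      rw [hTSE]
      exact subset_closure (by simp)
    exact this
  have hmemv : (extm mI (idx w)).testBit (idx v) = true := by
    have : v ∈ TS (extm mI (idx w)) := by
      rw [hTSE]
      exact subset_closure (by simp)
    exact this
  have hmemw : (extm mI (idx w)).testBit (idx w) = true := by
    have : w ∈ TS (extm mI (idx w)) := by
      rw [hTSE]
      exact subset_closure (by simp)
    exact this
  have hmain := main_prop _ hELL hEne _ (idx_lt u) hmemu _ (idx_lt v) hmemv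
    _ (idx_lt w) hmemw
  rcases hmain with h | h | h
  · apply hu
    have : u ∈ TS (pcm (idx v) (idx w)) := h
    rw [TS_pcm (idx_lt v) (idx_lt w), phi_idx, phi_idx] at this
    exact this
  · apply hv
    have : v ∈ TS (pcm (idx u) (idx w)) := h
    rw [TS_pcm (idx_lt u) (idx_lt w), phi_idx, phi_idx] at this
    exact this
  · apply hw
    have : w ∈ TS (pcm (idx u) (idx v)) := h
    rw [TS_pcm (idx_lt u) (idx_lt v), phi_idx, phi_idx] at this
    exact this

/-! ### witness facts -/

theorem wit_facts : pcm 6 14 ≠ 16777215 ∧ pcm 6 21 ≠ 16777215 ∧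
    pcm 14 21 ≠ 16777215 ∧ bclos (seedE (seedE (seedE 1 6) 14) 21) = 16777215 := by
  have h := D_wit
  rw [Bool.and_eq_true, Bool.and_eq_true, Bool.and_eq_true] at h
  obtain ⟨⟨⟨h1, h2⟩, h3⟩, h4⟩ := h
  rw [Bool.not_eq_true', beq_eq_false_iff_ne] at h1 h2 h3
  exact ⟨h1, h2, h3, eq_of_beq h4⟩

theorem pair_ne_top {a b : ℕ} (ha : a < 24) (hb : b < 24) (h : pcm a b ≠ 16777215) :
    closure ({phi a, phi b} : Set P4) ≠ ⊤ := by
  intro htop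
  apply h
  apply eq_full_of_univ (pcm_lt ha hb)
  intro x
  have : x ∈ (closure ({phi a, phi b} : Set P4) : Subgroup P4) := by
    rw [htop]; trivial
  rw [TS_pcm ha hb]
  exact this

theorem closure_seed3 {a b c : ℕ} (ha : a < 24) (hb : b < 24) (hc : c < 24) :
    closure (TS (seedE (seedE (seedE 1 a) b) c)) = closure {phi a, phi b, phi c} := by
  rw [closure_seedE hc, closure_seed2 ha hb, triple_union, Subgroup.closure_union]

theorem wit_top : closure ({phi 6, phi 14, phi 21} : Set P4) = ⊤ := by
  rw [eq_top_iff']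
  intro x
  have hgood : GoodSeed (seedE (seedE (seedE 1 6) 14) 21) :=
    good_seedE (good_seedE (good_seedE good_one (by norm_num)) (by norm_num)) (by norm_num)
  have hx : x ∈ TS (bclos (seedE (seedE (seedE 1 6) 14) 21)) := by
    rw [wit_facts.2.2.2]
    exact mem_TS_full x
  have := (mem_bclos_iff hgood x).1 hx
  rwa [closure_seed3 (by norm_num) (by norm_num) (by norm_num)] at this

end S4X

/-- A sequence is irredundant if no entry lies in the subgroup generated by the others. -/
def IrredundantSeq {G : Type*} [Group G] {n : ℕ} (g : Fin n → G) : Prop :=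
  ∀ i : Fin n, g i ∉ Subgroup.closure (g '' {i}ᶜ)

namespace S4X

open Subgroup

/-- In an irredundant generating sequence, no entry is in the closure of the others. -/
theorem genseq_not_mem {G : Type*} [Group G] {n : ℕ} {g : Fin n → G}
    (h : IrredundantGenSeq g) (k : Fin n) : g k ∉ closure (g '' {k}ᶜ) := by
  intro hmem
  apply h.2 k
  rw [eq_top_iff, ← h.1]
  apply (closure_le _).2
  rintro _ ⟨j, rfl⟩
  by_cases hj : j = k
  · subst hj
    exact hmem
  · exact subset_closure ⟨j, by simp [hj], rfl⟩

/-- An irredundant generating sequence has pairwise distinct entries. -/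
theorem genseq_injective {G : Type*} [Group G] {n : ℕ} {g : Fin n → G}
    (h : IrredundantGenSeq g) : Function.Injective g := by
  intro i j hij
  by_contra hne
  apply genseq_not_mem h i
  apply Subgroup.subset_closure
  exact ⟨j, by simp only [Set.mem_compl_iff, Set.mem_singleton_iff]; exact fun h' => hne h'.symm, hij.symm⟩

theorem compl_zero : ({(0 : Fin 3)}ᶜ : Set (Fin 3)) = {1, 2} := by
  ext i
  fin_cases i <;> simp <;> decide

theorem compl_one : ({(1 : Fin 3)}ᶜ : Set (Fin 3)) = {0, 2} := by
  ext i
  fin_cases i <;> simp <;> decide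

theorem compl_two : ({(2 : Fin 3)}ᶜ : Set (Fin 3)) = {0, 1} := by
  ext i
  fin_cases i <;> simp <;> decide

theorem range_fin3 {G : Type*} (g : Fin 3 → G) :
    Set.range g = {g 0, g 1, g 2} := by
  ext x
  constructor
  · rintro ⟨i, rfl⟩
    fin_cases i
    · exact Or.inl rfl
    · exact Or.inr (Or.inl rfl)
    · exact Or.inr (Or.inr rfl)
  · rintro (rfl | rfl | rfl)
    exacts [⟨0, rfl⟩, ⟨1, rfl⟩, ⟨2, rfl⟩]

/-- Part 2: every irredundant triple in S₄ generates. -/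
theorem part2 (g : Fin 3 → P4) (h : IrredundantSeq g) :
    closure (Set.range g) = ⊤ := by
  have h0 := h 0
  have h1 := h 1
  have h2 := h 2
  rw [compl_zero, Set.image_pair] at h0
  rw [compl_one, Set.image_pair] at h1
  rw [compl_two, Set.image_pair] at h2
  rw [range_fin3]
  exact gen_of_irred (g 0) (g 1) (g 2) h0 h1 h2

/-- Part 1: in a proper subgroup, irredundant generating sequences have length ≤ 2. -/
theorem part1 (H : Subgroup P4) (hH : H ≠ ⊤) {n : ℕ} (g : Fin n → H)
    (hg : IrredundantGenSeq g) : n ≤ 2 := by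
  by_contra hn
  push_neg at hn
  have h3 : 3 ≤ n := hn
  set c : Fin 3 → Fin n := Fin.castLE h3 with hc
  set g' : Fin 3 → P4 := fun i => (g (c i) : P4) with hg'
  have hirr : IrredundantSeq g' := by
    intro i hmem
    apply genseq_not_mem hg (c i)
    have himg : g' '' {i}ᶜ = H.subtype '' ((fun j => g (c j)) '' {i}ᶜ) := by
      rw [← Set.image_comp]
      rfl
    rw [himg, ← MonoidHom.map_closure] at hmem
    obtain ⟨x, hx, hxeq⟩ := Subgroup.mem_map.1 hmem
    have hxg : x = g (c i) := Subgroup.subtype_injective H hxeq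
    subst hxg
    have hsub : ((fun j => g (c j)) '' {i}ᶜ) ⊆ g '' {c i}ᶜ := by
      rintro _ ⟨j, hj, rfl⟩
      refine ⟨c j, ?_, rfl⟩
      simp only [Set.mem_compl_iff, Set.mem_singleton_iff] at hj ⊢
      intro hcj
      exact hj (Fin.castLE_injective h3 hcj)
    exact closure_mono hsub hx
  have htop := part2 g' hirr
  apply hH
  rw [eq_top_iff, ← htop]
  apply (closure_le _).2
  rintro _ ⟨i, rfl⟩
  exact (g (c i)).2

/-- The witness: three transpositions form an irredundant generating sequence of S₄. -/
noncomputable def gwit : Fin 3 → P4 := ![phi 6, phi 14, phi 21]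

theorem gwit_genseq : IrredundantGenSeq gwit := by
  constructor
  · rw [range_fin3]
    have e0 : gwit 0 = phi 6 := rfl
    have e1 : gwit 1 = phi 14 := rfl
    have e2 : gwit 2 = phi 21 := rfl
    rw [e0, e1, e2]
    exact wit_top
  · intro i
    fin_cases i
    · rw [show (⟨0, by norm_num⟩ : Fin 3) = 0 from rfl, compl_zero, Set.image_pair]
      rw [show gwit 1 = phi 14 from rfl, show gwit 2 = phi 21 from rfl]
      exact pair_ne_top (by norm_num) (by norm_num) wit_facts.2.2.1
    · rw [show (⟨1, by norm_num⟩ : Fin 3) = 1 from rfl, compl_one, Set.image_pair]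
      rw [show gwit 0 = phi 6 from rfl, show gwit 2 = phi 21 from rfl]
      exact pair_ne_top (by norm_num) (by norm_num) wit_facts.2.1
    · rw [show (⟨2, by norm_num⟩ : Fin 3) = 2 from rfl, compl_two, Set.image_pair]
      rw [show gwit 0 = phi 6 from rfl, show gwit 1 = phi 14 from rfl]
      exact pair_ne_top (by norm_num) (by norm_num) wit_facts.1

theorem maxIrr_bddAbove :
    BddAbove {n | ∃ g : Fin n → P4, IrredundantGenSeq g} := by
  refine ⟨24, ?_⟩
  rintro n ⟨g, hg⟩
  have hinj := genseq_injective hg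
  have := Fintype.card_le_of_injective g hinj
  rwa [Fintype.card_fin, card_P4] at this

theorem maxIrr_ge_three : 3 ≤ maxIrr P4 := by
  apply le_csSup maxIrr_bddAbove
  exact ⟨gwit, gwit_genseq⟩

theorem maxIrr_le_two (H : Subgroup P4) (hH : H ≠ ⊤) : maxIrr H ≤ 2 := by
  apply csSup_le'
  rintro n ⟨g, hg⟩
  exact part1 H hH g hg

end S4X

theorem s4_proper_subgroups_m_le_two :
    (∀ H : Subgroup (Equiv.Perm (Fin 4)), H ≠ ⊤ →
      ∀ (n : ℕ) (g : Fin n → H), IrredundantGenSeq g → n ≤ 2) ∧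
    (∀ g : Fin 3 → Equiv.Perm (Fin 4), IrredundantSeq g →
      Subgroup.closure (Set.range g) = ⊤) ∧
    (∀ H : Subgroup (Equiv.Perm (Fin 4)), H ≠ ⊤ →
      maxIrr H < maxIrr (Equiv.Perm (Fin 4))) := by
  refine ⟨?_, ?_, ?_⟩
  · intro H hH n g hg
    exact S4X.part1 H hH g hg
  · intro g hg
    exact S4X.part2 g hg
  · intro H hH
    calc maxIrr H ≤ 2 := S4X.maxIrr_le_two H hH
    _ < 3 := by norm_num
    _ ≤ maxIrr (Equiv.Perm (Fin 4)) := S4X.maxIrr_ge_three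
end

section
/- Every proper subgroup H of A_5 satisfies m(H) ≤ 2; consequently every irredundant sequence of length 3 in A_5 generates A_5, and A_5 is strongly flat. -/
open Equiv Equiv.Perm Subgroup

set_option maxRecDepth 40000

instance : DecidablePred (· ∈ alternatingGroup (Fin 5)) := fun x =>
  decidable_of_iff (Perm.sign x = 1) (by simp [alternatingGroup, MonoidHom.mem_ker])

abbrev G5 : Type := alternatingGroup (Fin 5)

lemma cardG5 : Nat.card G5 = 60 := by rw [Nat.card_eq_fintype_card]; decide
lemma D1 : ∀ x : G5, x^4 = 1 → x^2 = 1 := by decide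
lemma D3 : ∀ t : G5, t^2 = 1 → t ≠ 1 →
    Fintype.card {x : G5 // x * t = t * x} = 4 := by decide
lemma D4 : ∀ c : G5, c^3 = 1 → c ≠ 1 →
    Fintype.card {x : G5 // x * c * x⁻¹ = c ∨ x * c * x⁻¹ = c * c} = 6 := by decide
set_option synthInstance.maxSize 2000 in
lemma D5 : ∀ c x : G5, c^3 = 1 → c ≠ 1 → x^3 = 1 →
    (x * c * x⁻¹ = c ∨ x * c * x⁻¹ = c * c) → (x = 1 ∨ x = c ∨ x = c * c) := by decide

/-! ### generic lemmas -/

lemma normal_of_index_two {G : Type*} [Group G] {H : Subgroup G} (h : H.index = 2) :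
    H.Normal := by
  constructor
  intro n hn g
  have h1 : g * n ∈ H ↔ (g ∈ H ↔ n ∈ H) := Subgroup.mul_mem_iff_of_index_two h
  have h2 : g * n * g⁻¹ ∈ H ↔ (g * n ∈ H ↔ g⁻¹ ∈ H) := Subgroup.mul_mem_iff_of_index_two h
  rw [h2, h1, inv_mem_iff]
  tauto

lemma card_lt_of_lt {G : Type*} [Group G] [Finite G] {H K : Subgroup G} (h : H < K) :
    Nat.card H < Nat.card K :=
  lt_of_le_of_ne (Subgroup.card_le_of_le h.le)
    (fun he => h.ne (Subgroup.eq_of_le_of_card_ge h.le he.ge))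

/-- A proper subgroup of `A₅` has order at most 12 and order dividing 60. -/
lemma card_le_twelve {K : Subgroup G5} (hK : K ≠ ⊤) : Nat.card K ≤ 12 := by
  have hcard : K.index * Nat.card K = 60 := by rw [Subgroup.index_mul_card, cardG5]
  have hind : 5 ≤ K.index := by
    by_contra hlt
    push_neg at hlt
    -- the action on cosets is faithful by simplicity
    have hker : (MulAction.toPermHom G5 (G5 ⧸ K)).ker = K.normalCore :=
      (Subgroup.normalCore_eq_ker K).symm
    have hnc : K.normalCore = ⊥ ∨ K.normalCore = ⊤ :=
      IsSimpleGroup.eq_bot_or_eq_top_of_normal _ (Subgroup.normalCore_normal K)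
    have hncbot : K.normalCore = ⊥ := by
      rcases hnc with h | h
      · exact h
      · exact absurd (top_le_iff.mp (h ▸ Subgroup.normalCore_le K)) hK
    have hinj : Function.Injective (MulAction.toPermHom G5 (G5 ⧸ K)) := by
      rw [← MonoidHom.ker_eq_bot_iff, hker, hncbot]
    have hle : Nat.card G5 ≤ Nat.card (Perm (G5 ⧸ K)) :=
      Nat.card_le_card_of_injective _ hinj
    haveI : DecidableEq (G5 ⧸ K) := Classical.decEq _
    haveI : Fintype (G5 ⧸ K) := Fintype.ofFinite _
    have hq : Nat.card (G5 ⧸ K) = K.index := rfl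
    have hperm : Nat.card (Perm (G5 ⧸ K)) = Nat.factorial K.index := by
      rw [Nat.card_eq_fintype_card, Fintype.card_perm, ← Nat.card_eq_fintype_card, hq]
    rw [cardG5, hperm] at hle
    have hpos : 1 ≤ K.index := Nat.one_le_iff_ne_zero.mpr (by
      intro h0; rw [h0] at hcard; omega)
    interval_cases K.index <;> simp [Nat.factorial] at hle
  have h2 : Nat.card K * 5 ≤ 60 := by
    calc Nat.card K * 5 ≤ Nat.card K * K.index := Nat.mul_le_mul_left _ hind
    _ = 60 := by rw [mul_comm]; exact hcard
  omega

/-! ### order-3 normalizer machinery -/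

section Order3
variable {c : G5} (hc : orderOf c = 3)
include hc

lemma hc3 : c ^ 3 = 1 := hc ▸ pow_orderOf_eq_one c

lemma hc1 : c ≠ 1 := by
  intro h; rw [h, orderOf_one] at hc; omega

lemma sq_sq : c * c * (c * c) = c := by
  have h3 : c ^ 3 = 1 := hc3 hc
  have : c * c * (c * c) = c ^ 3 * c := by
    simp [pow_succ, pow_zero, mul_assoc]
  rw [this, h3, one_mul]

lemma mem_zpowers_three {z : G5} : z ∈ zpowers c ↔ (z = 1 ∨ z = c ∨ z = c * c) := by
  constructor
  · intro hz
    obtain ⟨k, hk⟩ := Subgroup.mem_zpowers_iff.mp hz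
    rw [← hk]
    have h1 : c ^ (k % (3:ℤ)) = c ^ k := by
      have := zpow_mod_orderOf c k; rwa [hc] at this
    have h2 : k % (3:ℤ) = 0 ∨ k % (3:ℤ) = 1 ∨ k % (3:ℤ) = 2 := by omega
    rcases h2 with h | h | h <;> rw [← h1, h]
    · left; exact zpow_zero c
    · right; left; exact zpow_one c
    · right; right
      rw [show (2:ℤ) = ((2:ℕ):ℤ) by norm_num, zpow_natCast, pow_two]
  · intro h
    rcases h with h | h | h <;> rw [h]
    · exact one_mem _
    · exact Subgroup.mem_zpowers c
    · exact mul_mem (Subgroup.mem_zpowers c) (Subgroup.mem_zpowers c)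

/-- conjugation preserving `{1, c, c²}` -/
lemma conj_maps (y : G5) (hy : y * c * y⁻¹ = c ∨ y * c * y⁻¹ = c * c) :
    ∀ z ∈ zpowers c, y * z * y⁻¹ ∈ zpowers c := by
  intro z hz
  rw [mem_zpowers_three hc] at hz ⊢
  rcases hz with h | h | h <;> rw [h]
  · left; simp
  · rcases hy with h | h
    · right; left; exact h
    · right; right; exact h
  · have hsplit : y * (c * c) * y⁻¹ = (y * c * y⁻¹) * (y * c * y⁻¹) := by
      simp [mul_assoc]
    rw [hsplit]
    rcases hy with h | h
    · right; right; rw [h]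
    · right; left; rw [h]; exact sq_sq hc

lemma inv_conj (x : G5) (hx : x * c * x⁻¹ = c ∨ x * c * x⁻¹ = c * c) :
    x⁻¹ * c * x⁻¹⁻¹ = c ∨ x⁻¹ * c * x⁻¹⁻¹ = c * c := by
  rw [inv_inv]
  rcases hx with h | h
  · left
    have hcomm : x * c = c * x := by
      have := mul_inv_eq_iff_eq_mul.mp h; exact this
    calc x⁻¹ * c * x = x⁻¹ * (c * x) := by rw [mul_assoc]
    _ = x⁻¹ * (x * c) := by rw [hcomm]
    _ = c := inv_mul_cancel_left x c
  · right
    set d := x⁻¹ * c * x with hdef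
    have hd2 : d * d = c := by
      have : d * d = x⁻¹ * (c * c) * x := by rw [hdef]; simp [mul_assoc]
      rw [this, ← h]; simp [mul_assoc]
    have hd3 : d ^ 3 = 1 := by
      have h3 : c ^ 3 = 1 := hc3 hc
      have : d ^ 3 = x⁻¹ * c ^ 3 * x := by
        rw [hdef]; simp [pow_succ, pow_zero, mul_assoc]
      rw [this, h3]; simp
    calc d = d * d ^ 3 := by rw [hd3, mul_one]
    _ = (d * d) * (d * d) := by simp [pow_succ, pow_zero, mul_assoc]
    _ = c * c := by rw [hd2]

lemma mem_normalizer_three {x : G5} :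
    x ∈ Subgroup.normalizer (zpowers c : Set G5) ↔ (x * c * x⁻¹ = c ∨ x * c * x⁻¹ = c * c) := by
  constructor
  · intro hx
    have hmem := (Subgroup.mem_normalizer_iff.mp hx c).mp (Subgroup.mem_zpowers c)
    rw [mem_zpowers_three hc] at hmem
    rcases hmem with h | h | h
    · exfalso
      apply hc1 hc
      have : c = x⁻¹ * (x * c * x⁻¹) * x := by simp [mul_assoc]
      rw [this, h]; simp
    · exact Or.inl h
    · exact Or.inr h
  · intro hx
    rw [Subgroup.mem_normalizer_iff]
    intro z
    constructor
    · exact conj_maps hc x hx z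
    · intro hz
      have h2 := conj_maps hc x⁻¹ (inv_conj hc x hx) _ hz
      rw [inv_inv] at h2
      have : x⁻¹ * (x * z * x⁻¹) * x = z := by simp [mul_assoc]
      rwa [this] at h2

end Order3



lemma conj_ne_one' {x c : G5} (h : x * c * x⁻¹ = 1) : c = 1 := by
  have h2 : c = x⁻¹ * (x * c * x⁻¹) * x := by simp [mul_assoc]
  rw [h2, h]; simp

lemma card_normalizer_three {c : G5} (hc : orderOf c = 3) :
    Nat.card (Subgroup.normalizer (zpowers c : Set G5)) = 6 := by
  have he : ↥(Subgroup.normalizer (zpowers c : Set G5)) ≃ {x : G5 // x * c * x⁻¹ = c ∨ x * c * x⁻¹ = c * c} :=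
    Equiv.subtypeEquivRight (fun x => mem_normalizer_three hc)
  rw [Nat.card_congr he, Nat.card_eq_fintype_card]
  exact D4 c (hc3 hc) (hc1 hc)

lemma card_centralizer_two {t : G5} (h2 : orderOf t = 2) :
    Nat.card (Subgroup.centralizer {t}) = 4 := by
  have ht2 : t ^ 2 = 1 := h2 ▸ pow_orderOf_eq_one t
  have ht1 : t ≠ 1 := by intro h; rw [h, orderOf_one] at h2; omega
  have he : ↥(Subgroup.centralizer {t}) ≃ {x : G5 // x * t = t * x} :=
    Equiv.subtypeEquivRight (fun x => by
      rw [Subgroup.mem_centralizer_iff]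
      constructor
      · intro h; exact (h t rfl).symm
      · intro h gg hgg
        rw [Set.mem_singleton_iff] at hgg; subst hgg; exact h.symm)
  rw [Nat.card_congr he, Nat.card_eq_fintype_card]
  exact D3 t ht2 ht1

/-- `A₅` has no chain `L ≤ K` with `|L| = 6`, `|K| = 12`. -/
lemma no_sub6 {L K : Subgroup G5} (hLK : L ≤ K) (hL : Nat.card L = 6)
    (hK : Nat.card K = 12) : False := by
  haveI : Fintype L := Fintype.ofFinite _
  have h3 : 3 ∣ Fintype.card L := by rw [← Nat.card_eq_fintype_card, hL]; norm_num
  obtain ⟨y, hy⟩ := exists_prime_orderOf_dvd_card 3 h3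
  set c : G5 := (y : G5) with hcdef
  have hc : orderOf c = 3 := by
    have := orderOf_injective L.subtype L.subtype_injective y
    rw [hcdef]
    exact this.trans hy
  have hcL : c ∈ L := y.2
  have hPle : zpowers c ≤ L := Subgroup.zpowers_le.mpr hcL
  have hPcard : Nat.card (zpowers c) = 3 := by rw [Nat.card_zpowers, hc]
  have hQ : Nat.card ((zpowers c).subgroupOf L) = 3 := by
    rw [Nat.card_congr (Subgroup.subgroupOfEquivOfLe hPle).toEquiv, hPcard]
  have hQi : ((zpowers c).subgroupOf L).index = 2 := by
    have h := Subgroup.card_mul_index ((zpowers c).subgroupOf L)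
    rw [hQ, hL] at h; omega
  haveI hQn : ((zpowers c).subgroupOf L).Normal := normal_of_index_two hQi
  have hLN : L ≤ Subgroup.normalizer (zpowers c : Set G5) := by
    intro x hx
    rw [mem_normalizer_three hc]
    have hmem : (⟨c, hcL⟩ : L) ∈ (zpowers c).subgroupOf L := by
      rw [Subgroup.mem_subgroupOf]; exact Subgroup.mem_zpowers c
    have hconj := hQn.conj_mem _ hmem ⟨x, hx⟩
    rw [Subgroup.mem_subgroupOf] at hconj
    have hco : ((⟨x, hx⟩ * ⟨c, hcL⟩ * (⟨x, hx⟩)⁻¹ : L) : G5) = x * c * x⁻¹ := rfl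
    rw [hco, mem_zpowers_three hc] at hconj
    rcases hconj with h | h | h
    · exact absurd (conj_ne_one' h) (hc1 hc)
    · exact Or.inl h
    · exact Or.inr h
  have hLeq : L = Subgroup.normalizer (zpowers c : Set G5) :=
    Subgroup.eq_of_le_of_card_ge hLN (by rw [card_normalizer_three hc, hL])
  -- now use K
  have hcK : c ∈ K := hLK hcL
  have hLQ : Nat.card (L.subgroupOf K) = 6 := by
    rw [Nat.card_congr (Subgroup.subgroupOfEquivOfLe hLK).toEquiv, hL]
  have hLi : (L.subgroupOf K).index = 2 := by
    have h := Subgroup.card_mul_index (L.subgroupOf K)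
    rw [hLQ, hK] at h; omega
  haveI hLn : (L.subgroupOf K).Normal := normal_of_index_two hLi
  have hKL : K ≤ L := by
    intro k hk
    have hmem : (⟨c, hcK⟩ : K) ∈ L.subgroupOf K := by
      rw [Subgroup.mem_subgroupOf]; exact hcL
    have hconj := hLn.conj_mem _ hmem ⟨k, hk⟩
    rw [Subgroup.mem_subgroupOf] at hconj
    have hco : ((⟨k, hk⟩ * ⟨c, hcK⟩ * (⟨k, hk⟩)⁻¹ : K) : G5) = k * c * k⁻¹ := rfl
    rw [hco] at hconj
    -- hconj : k * c * k⁻¹ ∈ L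
    have hw3 : (k * c * k⁻¹) ^ 3 = 1 := by
      have hrw : k * c * k⁻¹ = (MulAut.conj k) c := rfl
      rw [hrw, ← map_pow, hc3 hc, map_one]
    have hwnorm := (mem_normalizer_three hc).mp (hLeq ▸ hconj)
    have hD5 := D5 c (k * c * k⁻¹) (hc3 hc) (hc1 hc) hw3 hwnorm
    rcases hD5 with h | h | h
    · exact absurd (conj_ne_one' h) (hc1 hc)
    · exact hLeq ▸ ((mem_normalizer_three hc).mpr (Or.inl h))
    · exact hLeq ▸ ((mem_normalizer_three hc).mpr (Or.inr h))
  have hfin := Subgroup.card_le_of_le hKL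
  rw [hL, hK] at hfin; omega



set_option synthInstance.maxSize 50000 in
set_option synthInstance.maxHeartbeats 1000000 in
lemma natfact : ∀ kk < 13, ∀ b < 13, ∀ a < 13, 2 ≤ a → a ∣ b → a < b → b ∣ kk →
    b < kk → kk ∣ 60 → ((b = 4 ∨ b = 6) ∧ kk = 12) := by decide

set_option maxHeartbeats 1000000 in
/-- every irredundant triple in `A₅` generates. -/
lemma triple_gen (g : Fin 3 → G5) (hg : IrredundantSeq g) :
    Subgroup.closure (Set.range g) = ⊤ := by
  by_contra hKtop
  set K := Subgroup.closure (Set.range g) with hKdef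
  have himg : ∀ i j : Fin 3, j ≠ i → g j ∈ g '' ({i}ᶜ) := fun i j hji => ⟨j, hji, rfl⟩
  have hpair : ∀ i j k : Fin 3, i ≠ k → j ≠ k → g k ∉ Subgroup.closure {g i, g j} := by
    intro i j k hik hjk hmem
    apply hg k
    refine Subgroup.closure_mono ?_ hmem
    intro x hx
    rcases hx with h | h
    · rw [h]; exact himg k i hik
    · rw [h]; exact himg k j hjk
  have hsingle : ∀ i j : Fin 3, i ≠ j → g j ∉ Subgroup.closure {g i} := by
    intro i j hij hmem
    apply hg j
    refine Subgroup.closure_mono ?_ hmem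
    intro x hx
    rw [Set.mem_singleton_iff] at hx
    rw [hx]; exact himg j i hij
  have hne1 : ∀ i, g i ≠ 1 := fun i h => hg i (h ▸ one_mem _)
  have hKmem : ∀ i, g i ∈ K := fun i => Subgroup.subset_closure ⟨i, rfl⟩
  have hpairle : ∀ i j, Subgroup.closure {g i, g j} ≤ K := by
    intro i j
    rw [Subgroup.closure_le]
    intro x hx
    rcases hx with h | h
    · rw [h]; exact hKmem i
    · rw [h]; exact hKmem j
  have hpairlt : ∀ i j k : Fin 3, i ≠ k → j ≠ k → Subgroup.closure {g i, g j} < K := by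
    intro i j k hik hjk
    refine (hpairle i j).lt_of_ne fun h => ?_
    exact hpair i j k hik hjk (h.symm ▸ hKmem k)
  have hsinglt : ∀ i j : Fin 3, i ≠ j → Subgroup.closure {g i} < Subgroup.closure {g i, g j} := by
    intro i j hij
    refine lt_of_le_of_ne (Subgroup.closure_mono (by simp)) fun h => ?_
    exact hsingle i j hij (h ▸ Subgroup.subset_closure (by simp))
  have hKcard_dvd : Nat.card K ∣ 60 := cardG5 ▸ Subgroup.card_subgroup_dvd_card K
  have hKle : Nat.card K ≤ 12 := card_le_twelve hKtop
  have horder : ∀ i, Nat.card (Subgroup.closure {g i}) = orderOf (g i) := fun i => by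
    rw [← Subgroup.zpowers_eq_closure, Nat.card_zpowers]
  have h2le : ∀ i, 2 ≤ Nat.card (Subgroup.closure {g i}) := by
    intro i
    rw [horder]
    have h1 : orderOf (g i) ≠ 1 := fun h => hne1 i (orderOf_eq_one_iff.mp h)
    have hpos : 0 < orderOf (g i) := orderOf_pos (g i)
    omega
  have key : ∀ i j k : Fin 3, i ≠ j → i ≠ k → j ≠ k →
      (Nat.card (Subgroup.closure {g i, g j}) = 4 ∨
        Nat.card (Subgroup.closure {g i, g j}) = 6) ∧ Nat.card K = 12 := by
    intro i j k hij hik hjk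
    have h1 := hsinglt i j hij
    have h2 := hpairlt i j k hik hjk
    exact natfact _ (by omega) _
      (by have := le_trans (Subgroup.card_le_of_le h2.le) hKle; omega) _
      (by have := le_trans (Subgroup.card_le_of_le (h1.le.trans h2.le)) hKle; omega) (h2le i)
      (Subgroup.card_dvd_of_le h1.le) (card_lt_of_lt h1)
      (Subgroup.card_dvd_of_le h2.le) (card_lt_of_lt h2) hKcard_dvd
  have hK12 : Nat.card K = 12 := (key 0 1 2 (by decide) (by decide) (by decide)).2
  have hno6 : ∀ i j k : Fin 3, i ≠ j → i ≠ k → j ≠ k →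
      Nat.card (Subgroup.closure {g i, g j}) = 4 := by
    intro i j k hij hik hjk
    rcases (key i j k hij hik hjk).1 with h | h
    · exact h
    · exact (no_sub6 (hpairle i j) h hK12).elim
  have ho2 : orderOf (g 0) = 2 := by
    have h4 := hno6 0 1 2 (by decide) (by decide) (by decide)
    have d1 : Nat.card (Subgroup.closure {g 0}) ∣ 4 :=
      h4 ▸ Subgroup.card_dvd_of_le (hsinglt 0 1 (by decide)).le
    have l1 : Nat.card (Subgroup.closure {g 0}) < 4 :=
      h4 ▸ card_lt_of_lt (hsinglt 0 1 (by decide))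
    have hge := h2le 0
    have hval : Nat.card (Subgroup.closure {g 0}) = 2 := by
      interval_cases (Nat.card (Subgroup.closure {g (0 : Fin 3)}))
      · rfl
      · norm_num at d1
    rw [← horder, hval]
  have hV1card : Nat.card (Subgroup.closure {g 0, g 1}) = 4 :=
    hno6 0 1 2 (by decide) (by decide) (by decide)
  have hV2card : Nat.card (Subgroup.closure {g 0, g 2}) = 4 :=
    hno6 0 2 1 (by decide) (by decide) (by decide)
  have hVne : Subgroup.closure {g 0, g 1} ≠ Subgroup.closure {g 0, g 2} := by
    intro h
    apply hpair 0 1 2 (by decide) (by decide)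
    rw [h]
    exact Subgroup.subset_closure (by simp)
  have hexp : ∀ (V : Subgroup G5), Nat.card V = 4 → ∀ x ∈ V, x * x = 1 := by
    intro V hV x hx
    have h4 : x ^ 4 = 1 := by
      have h := pow_card_eq_one' (G := V) (x := ⟨x, hx⟩)
      rw [hV] at h
      have := congrArg (Subgroup.subtype V) h
      simpa using this
    have h2 := D1 x h4
    rwa [pow_two] at h2
  have hcomm : ∀ (V : Subgroup G5), Nat.card V = 4 →
      ∀ x ∈ V, ∀ y ∈ V, x * y = y * x := by
    intro V hV x hx y hy
    have hxy := hexp V hV _ (mul_mem hx hy)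
    have hx2 := hexp V hV x hx
    have hy2 := hexp V hV y hy
    calc x * y = (x * y)⁻¹ := (inv_eq_of_mul_eq_one_left hxy).symm
    _ = y⁻¹ * x⁻¹ := mul_inv_rev x y
    _ = y * x := by
        rw [inv_eq_of_mul_eq_one_left hx2, inv_eq_of_mul_eq_one_left hy2]
  have hcent : ∀ (j : Fin 3), Nat.card (Subgroup.closure {g 0, g j}) = 4 →
      Subgroup.closure {g 0, g j} = Subgroup.centralizer {g 0} := by
    intro j hV
    have hg0V : g 0 ∈ Subgroup.closure {g 0, g j} := Subgroup.subset_closure (by simp)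
    have hle : Subgroup.closure {g 0, g j} ≤ Subgroup.centralizer {g 0} := by
      intro x hx
      rw [Subgroup.mem_centralizer_iff]
      intro gg hgg
      rw [Set.mem_singleton_iff] at hgg
      rw [hgg]
      exact hcomm _ hV _ hg0V _ hx
    exact Subgroup.eq_of_le_of_card_ge hle (by rw [card_centralizer_two ho2, hV])
  exact hVne ((hcent 1 hV1card).trans (hcent 2 hV2card).symm)



lemma irred_of_genseq {G : Type*} [Group G] {n : ℕ} {g : Fin n → G}
    (hg : IrredundantGenSeq g) : IrredundantSeq g := by
  intro i hi
  apply hg.2 i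
  rw [eq_top_iff, ← hg.1]
  rw [Subgroup.closure_le]
  rintro x ⟨j, rfl⟩
  by_cases hj : j = i
  · subst hj; exact hi
  · exact Subgroup.subset_closure ⟨j, hj, rfl⟩

lemma partA (H : Subgroup G5) (hH : H ≠ ⊤) :
    ∀ (n : ℕ) (g : Fin n → H), IrredundantGenSeq g → n ≤ 2 := by
  intro n g hg
  by_contra hn
  push_neg at hn
  have h3n : 3 ≤ n := hn
  set h : Fin 3 → ↥H := fun i => g (Fin.castLE h3n i) with hdef
  have hirr : IrredundantSeq g := irred_of_genseq hg
  have hirr3 : IrredundantSeq h := by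
    intro i hi
    apply hirr (Fin.castLE h3n i)
    refine Subgroup.closure_mono ?_ hi
    rintro x ⟨j, hj, rfl⟩
    exact ⟨Fin.castLE h3n j, fun he => hj (Fin.castLE_injective h3n he), rfl⟩
  set f : Fin 3 → G5 := fun i => ((h i : ↥H) : G5) with hfdef
  have hf : IrredundantSeq f := by
    intro i hi
    apply hirr3 i
    have himg : f '' ({i}ᶜ) = H.subtype '' (h '' ({i}ᶜ)) := by
      rw [Set.image_image]; rfl
    rw [himg, ← MonoidHom.map_closure] at hi
    exact (Subgroup.mem_map_iff_mem H.subtype_injective).mp hi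
  have htop := triple_gen f hf
  have hle : Subgroup.closure (Set.range f) ≤ H := by
    rw [Subgroup.closure_le]
    rintro x ⟨i, rfl⟩
    exact (h i).2
  rw [htop] at hle
  exact hH (top_le_iff.mp hle)

lemma irred_bound {n : ℕ} (g : Fin n → G5) (hg : IrredundantSeq g) : n ≤ 60 := by
  set c : ℕ → Subgroup G5 := fun m => Subgroup.closure (g '' {j | (j : ℕ) < m}) with hcdef
  have hstep : ∀ m, m < n → c m < c (m + 1) := by
    intro m hm
    have hle : c m ≤ c (m + 1) :=
      Subgroup.closure_mono (Set.image_mono (fun j hj => by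
        simp only [Set.mem_setOf_eq] at hj ⊢; omega))
    refine hle.lt_of_ne fun he => ?_
    have hmem : g ⟨m, hm⟩ ∈ c (m + 1) :=
      Subgroup.subset_closure ⟨⟨m, hm⟩, by simp, rfl⟩
    rw [← he] at hmem
    apply hg ⟨m, hm⟩
    refine Subgroup.closure_mono ?_ hmem
    apply Set.image_mono
    intro j hj
    simp only [Set.mem_setOf_eq] at hj
    simp only [Set.mem_compl_iff, Set.mem_singleton_iff]
    intro heq
    rw [heq] at hj
    simp at hj
  have hcard : ∀ m, m ≤ n → m < Nat.card (c m) := by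
    intro m
    induction m with
    | zero => intro _; exact Nat.card_pos
    | succ k ih =>
        intro hk
        have h1 := ih (by omega)
        have h2 := card_lt_of_lt (hstep k (by omega))
        omega
  have hfin := hcard n le_rfl
  have hle60 : Nat.card (c n) ≤ 60 := cardG5 ▸ Subgroup.card_le_card_group (c n)
  omega

/-! ### the witness triple -/

def wa : G5 := ⟨Equiv.swap 0 1 * Equiv.swap 1 2, by decide⟩
def wb : G5 := ⟨Equiv.swap 0 1 * Equiv.swap 1 3, by decide⟩
def wd : G5 := ⟨Equiv.swap 0 1 * Equiv.swap 1 4, by decide⟩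

def stab (p : Fin 5) : Subgroup G5 where
  carrier := {x | (x : Perm (Fin 5)) p = p}
  one_mem' := rfl
  mul_mem' := by
    intro x y hx hy
    show ((x : Perm (Fin 5)) * (y : Perm (Fin 5))) p = p
    have hy' : (y : Perm (Fin 5)) p = p := hy
    have hx' : (x : Perm (Fin 5)) p = p := hx
    show (x : Perm (Fin 5)) ((y : Perm (Fin 5)) p) = p
    rw [hy', hx']
  inv_mem' := by
    intro x hx
    have hx' : (x : Perm (Fin 5)) p = p := hx
    show (x : Perm (Fin 5))⁻¹ p = p
    conv_lhs => rw [← hx']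
    exact Equiv.symm_apply_apply _ _

lemma mem_stab {x : G5} {p : Fin 5} : x ∈ stab p ↔ (x : Perm (Fin 5)) p = p := Iff.rfl

lemma stab_ne_top {p : Fin 5} (x : G5) (hx : (x : Perm (Fin 5)) p ≠ p) : stab p ≠ ⊤ := by
  intro h
  exact hx (mem_stab.mp (h ▸ Subgroup.mem_top x))

def wg : Fin 3 → G5 := ![wa, wb, wd]

lemma wle : ∀ i : Fin 3, ∃ p : Fin 5,
    Subgroup.closure (wg '' ({i}ᶜ)) ≤ stab p ∧ (wg i : Perm (Fin 5)) p ≠ p := by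
  intro i
  fin_cases i
  · refine ⟨2, ?_, by decide⟩
    rw [Subgroup.closure_le]
    rintro x ⟨j, hj, rfl⟩
    fin_cases j
    · exact absurd rfl hj
    · exact (by decide : (wb : Perm (Fin 5)) 2 = 2)
    · exact (by decide : (wd : Perm (Fin 5)) 2 = 2)
  · refine ⟨3, ?_, by decide⟩
    rw [Subgroup.closure_le]
    rintro x ⟨j, hj, rfl⟩
    fin_cases j
    · exact (by decide : (wa : Perm (Fin 5)) 3 = 3)
    · exact absurd rfl hj
    · exact (by decide : (wd : Perm (Fin 5)) 3 = 3)
  · refine ⟨4, ?_, by decide⟩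
    rw [Subgroup.closure_le]
    rintro x ⟨j, hj, rfl⟩
    fin_cases j
    · exact (by decide : (wa : Perm (Fin 5)) 4 = 4)
    · exact (by decide : (wb : Perm (Fin 5)) 4 = 4)
    · exact absurd rfl hj

lemma wit_irred : IrredundantSeq wg := by
  intro i hi
  obtain ⟨p, hle, hmove⟩ := wle i
  exact hmove (mem_stab.mp (hle hi))

lemma wit_genseq : IrredundantGenSeq wg := by
  refine ⟨triple_gen wg wit_irred, fun i h => ?_⟩
  obtain ⟨p, hle, hmove⟩ := wle i
  rw [h] at hle
  exact stab_ne_top (wg i) hmove (top_le_iff.mp hle)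

theorem a5_proper_subgroups_m_le_two :
    (∀ H : Subgroup ((alternatingGroup (Fin 5))), H ≠ ⊤ →
      ∀ (n : ℕ) (g : Fin n → H), IrredundantGenSeq g → n ≤ 2) ∧
    (∀ g : Fin 3 → (alternatingGroup (Fin 5)), IrredundantSeq g →
      Subgroup.closure (Set.range g) = ⊤) ∧
    (∀ H : Subgroup ((alternatingGroup (Fin 5))), H ≠ ⊤ →
      maxIrr H < maxIrr ((alternatingGroup (Fin 5)))) := by
  refine ⟨partA, triple_gen, ?_⟩
  intro H hH
  have hub : ∀ m ∈ {n | ∃ g : Fin n → G5, IrredundantGenSeq g}, m ≤ 60 := by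
    rintro m ⟨g, hg⟩
    exact irred_bound g (irred_of_genseq hg)
  have h3 : (3 : ℕ) ∈ {n | ∃ g : Fin n → G5, IrredundantGenSeq g} := ⟨wg, wit_genseq⟩
  have hA5 : 3 ≤ maxIrr (↥(alternatingGroup (Fin 5))) :=
    le_csSup ⟨60, fun m hm => hub m hm⟩ h3
  have hHle : maxIrr ↥H ≤ 2 := by
    apply csSup_le'
    rintro m ⟨g, hg⟩
    exact partA H hH m g hg
  exact lt_of_lt_of_le (by omega) hA5
end

section
/- In every irredundant generating sequence of length 3 of S_4, each element has order 2 or 3. -/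
abbrev G4 := Equiv.Perm (Fin 4)

set_option maxRecDepth 100000 in
lemma fact_pow : ∀ x : G4, x ^ 4 = 1 ∨ x ^ 3 = 1 := by decide

set_option maxRecDepth 100000 in
lemma fact_sign : ∀ x : G4, x ^ 4 = 1 → ¬ x ^ 2 = 1 → Equiv.Perm.sign x = -1 := by decide

set_option synthInstance.maxHeartbeats 1000000 in
set_option synthInstance.maxSize 2000 in
set_option maxRecDepth 100000 in
lemma fact_sq : ∀ x : G4, Equiv.Perm.sign x = 1 → ∃ y : G4, y * y = x := by decide

set_option synthInstance.maxHeartbeats 1000000 in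
set_option synthInstance.maxSize 2000 in
set_option maxRecDepth 100000 in
lemma fact_conj : ∀ x : G4, x ^ 4 = 1 → ¬ x ^ 2 = 1 →
    ∃ y : G4, ¬(y * x * y⁻¹ = 1 ∨ y * x * y⁻¹ = x ∨ y * x * y⁻¹ = x ^ 2 ∨
      y * x * y⁻¹ = x ^ 3) := by decide

lemma fact_fin3 : ∀ i j : Fin 3, j ≠ i → ∃ k : Fin 3, k ≠ i ∧ k ≠ j := by decide

lemma card_G4 : Nat.card G4 = 24 := by
  rw [Nat.card_eq_fintype_card, Fintype.card_perm, Fintype.card_fin]; rfl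

lemma conj_mem_of_index_two {Γ : Type*} [Group Γ] {J : Subgroup Γ} (h : J.index = 2)
    (g x : Γ) (hx : x ∈ J) : g * x * g⁻¹ ∈ J := by
  rw [Subgroup.mul_mem_iff_of_index_two h, Subgroup.mul_mem_iff_of_index_two h,
    Subgroup.inv_mem_iff]
  tauto

lemma dvd4 {n : ℕ} (h : n ∣ 4) : n = 1 ∨ n = 2 ∨ n = 4 := by
  have h1 : 0 < n := Nat.pos_of_dvd_of_pos h (by norm_num)
  have h2 : n ≤ 4 := Nat.le_of_dvd (by norm_num) h
  interval_cases n <;> omega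

/-- Key lemma: a proper subgroup of `S₄` containing an element of order 4 is contained
in the normalizer of the cyclic group generated by that element. -/
lemma key (H : Subgroup G4) (σ : G4) (hσ : orderOf σ = 4) (hσH : σ ∈ H) (hH : H ≠ ⊤) :
    H ≤ Subgroup.normalizer (Subgroup.zpowers σ : Set G4) := by
  have hKH : Subgroup.zpowers σ ≤ H := Subgroup.zpowers_le.2 hσH
  have hcK : Nat.card (Subgroup.zpowers σ) = 4 := by rw [Nat.card_zpowers, hσ]
  have hd1 : (4 : ℕ) ∣ Nat.card H := by have := Subgroup.card_dvd_of_le hKH; rwa [hcK] at this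
  have hd2 : Nat.card H ∣ 24 := card_G4 ▸ Subgroup.card_subgroup_dvd_card H
  have hne : Nat.card H ≠ 24 := fun h => hH (Subgroup.eq_top_of_card_eq H (h.trans card_G4.symm))
  have hle : Nat.card H ≤ 24 := Nat.le_of_dvd (by norm_num) hd2
  have hcases : Nat.card H = 4 ∨ Nat.card H = 8 ∨ Nat.card H = 12 := by
    rcases Nat.lt_or_ge (Nat.card H) 25 with h | h
    · interval_cases h : Nat.card H <;> omega
    · omega
  rcases hcases with h4 | h8 | h12
  · -- H = ⟨σ⟩
    have : Subgroup.zpowers σ = H :=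
      Subgroup.eq_of_le_of_card_ge hKH (by rw [hcK, h4])
    rw [← this]
    exact Subgroup.le_normalizer
  · -- |H| = 8 : ⟨σ⟩ has index 2 in H, hence is normal in H
    have hcK' : Nat.card ((Subgroup.zpowers σ).subgroupOf H) = 4 := by
      rw [Nat.card_congr (Subgroup.subgroupOfEquivOfLe hKH).toEquiv, hcK]
    have hidx : ((Subgroup.zpowers σ).subgroupOf H).index = 2 := by
      have := Subgroup.card_mul_index ((Subgroup.zpowers σ).subgroupOf H)
      rw [hcK', h8] at this
      omega
    have conjK : ∀ h ∈ H, ∀ x ∈ Subgroup.zpowers σ, h * x * h⁻¹ ∈ Subgroup.zpowers σ := by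
      intro h hh x hx
      have : (⟨h, hh⟩ * ⟨x, hKH hx⟩ * (⟨h, hh⟩ : H)⁻¹ : H) ∈
          (Subgroup.zpowers σ).subgroupOf H :=
        conj_mem_of_index_two hidx _ _ (by simpa [Subgroup.mem_subgroupOf] using hx)
      simpa [Subgroup.mem_subgroupOf] using this
    intro τ hτ
    rw [Subgroup.mem_normalizer_iff]
    intro x
    constructor
    · exact fun hx => conjK τ hτ x hx
    · intro hx
      have h1 := conjK τ⁻¹ (inv_mem hτ) _ hx
      have h2 : τ⁻¹ * (τ * x * τ⁻¹) * τ⁻¹⁻¹ = x := by group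
      rwa [h2] at h1
  · -- |H| = 12 : H has index 2, so contains all squares, hence H = ⊤, contradiction
    exfalso
    apply hH
    have hidx : H.index = 2 := by
      have := Subgroup.card_mul_index H
      rw [h12, card_G4] at this
      omega
    have hs4 : σ ^ 4 = 1 := by have := pow_orderOf_eq_one σ; rwa [hσ] at this
    have hs2 : ¬ σ ^ 2 = 1 := fun h => by
      have := orderOf_dvd_of_pow_eq_one h
      rw [hσ] at this
      omega
    rw [Subgroup.eq_top_iff']
    intro x
    rcases Int.units_eq_one_or (Equiv.Perm.sign x) with hsx | hsx
    · obtain ⟨y, hy⟩ := fact_sq x hsx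
      rw [← hy]
      exact Subgroup.mul_self_mem_of_index_two hidx y
    · have hxσ : Equiv.Perm.sign (x * σ) = 1 := by
        rw [map_mul, hsx, fact_sign σ hs4 hs2]
        norm_num
      obtain ⟨y, hy⟩ := fact_sq _ hxσ
      have hmem : x * σ ∈ H := by
        rw [← hy]
        exact Subgroup.mul_self_mem_of_index_two hidx y
      have h1 : x * σ * σ⁻¹ ∈ H := H.mul_mem hmem (H.inv_mem hσH)
      simpa [mul_assoc] using h1

theorem s4_length_three_orders (g : Fin 3 → Equiv.Perm (Fin 4))
    (hg : IrredundantGenSeq g) :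
    ∀ i, orderOf (g i) = 2 ∨ orderOf (g i) = 3 := by
  obtain ⟨htop, hprop⟩ := hg
  -- no entry is the identity
  have hne1 : ∀ i, g i ≠ 1 := by
    intro i hgi
    apply hprop i
    rw [eq_top_iff, ← htop]
    apply (Subgroup.closure_le _).2
    rintro _ ⟨j, rfl⟩
    by_cases hj : j = i
    · rw [hj, hgi]
      exact (Subgroup.closure _).one_mem
    · exact Subgroup.subset_closure ⟨j, by simpa using hj, rfl⟩
  -- no entry has order 4
  have hmain : ∀ i, orderOf (g i) ≠ 4 := by
    intro i hσ
    have hNtop : Subgroup.normalizer (Subgroup.zpowers (g i) : Set G4) = ⊤ := by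
      rw [eq_top_iff, ← htop]
      apply (Subgroup.closure_le _).2
      rintro _ ⟨j, rfl⟩
      by_cases hj : j = i
      · rw [hj]
        exact Subgroup.le_normalizer (Subgroup.mem_zpowers (g i))
      · obtain ⟨k, hki, hkj⟩ := fact_fin3 i j hj
        have hle := key (Subgroup.closure (g '' {k}ᶜ)) (g i) hσ
          (Subgroup.subset_closure ⟨i, by simpa using hki.symm, rfl⟩) (hprop k)
        exact hle (Subgroup.subset_closure ⟨j, by simpa using hkj.symm, rfl⟩)
    have hs4 : (g i) ^ 4 = 1 := by have := pow_orderOf_eq_one (g i); rwa [hσ] at this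
    have hs2 : ¬ (g i) ^ 2 = 1 := fun h => by
      have := orderOf_dvd_of_pow_eq_one h
      rw [hσ] at this
      omega
    obtain ⟨y, hy⟩ := fact_conj (g i) hs4 hs2
    have hyN : y ∈ Subgroup.normalizer (Subgroup.zpowers (g i) : Set G4) := by rw [hNtop]; trivial
    rw [Subgroup.mem_normalizer_iff] at hyN
    obtain ⟨n, hn⟩ := (hyN (g i)).1 (Subgroup.mem_zpowers (g i))
    have h4 : (g i) ^ (n % 4) = y * g i * y⁻¹ := by
      rw [show ((4 : ℤ) = ((orderOf (g i) : ℕ) : ℤ)) by rw [hσ]; rfl, zpow_mod_orderOf]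
      exact hn
    have hnn : (0 : ℤ) ≤ n % 4 := Int.emod_nonneg n (by norm_num)
    have hlt : n % 4 < 4 := Int.emod_lt_of_pos n (by norm_num)
    have hm : (g i) ^ ((n % 4).toNat) = y * g i * y⁻¹ := by
      rw [← h4, ← zpow_natCast, Int.toNat_of_nonneg hnn]
    have hmlt : (n % 4).toNat < 4 := by omega
    apply hy
    set m := (n % 4).toNat with hmdef
    interval_cases m
    · left; rw [← hm, pow_zero]
    · right; left; rw [← hm, pow_one]
    · right; right; left; rw [← hm]
    · right; right; right; rw [← hm]
  intro i
  rcases fact_pow (g i) with h4 | h3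
  · left
    have hdvd : orderOf (g i) ∣ 4 := orderOf_dvd_of_pow_eq_one h4
    rcases dvd4 hdvd with h | h | h
    · exact absurd (orderOf_eq_one_iff.1 h) (hne1 i)
    · exact h
    · exact absurd h (hmain i)
  · right
    have hdvd : orderOf (g i) ∣ 3 := orderOf_dvd_of_pow_eq_one h3
    rcases (Nat.prime_three.eq_one_or_self_of_dvd _ hdvd) with h | h
    · exact absurd (orderOf_eq_one_iff.1 h) (hne1 i)
    · exact h
end

section
/- In every irredundant generating sequence of length 3 of A_5 consisting of elements of order 2, there exist two elements of the sequence whose product has order 5. -/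
open Equiv

abbrev P5 := Equiv.Perm (Fin 5)

def d0 (t : Nat) : Nat := t % 5
def d1 (t : Nat) : Nat := t / 5 % 5
def d2 (t : Nat) : Nat := t / 25 % 5
def d3 (t : Nat) : Nat := t / 125 % 5
def d4 (t : Nat) : Nat := t / 625 % 5

def app (s i : Nat) : Nat :=
  if i = 0 then d0 s else if i = 1 then d1 s else if i = 2 then d2 s else if i = 3 then d3 s else d4 s

def comp (s t : Nat) : Nat :=
  app s (d0 t) + 5 * app s (d1 t) + 25 * app s (d2 t) + 125 * app s (d3 t) + 625 * app s (d4 t)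

def idT : Nat := 2930

def numFix (t : Nat) : Nat :=
  (if d0 t = 0 then 1 else 0) + (if d1 t = 1 then 1 else 0) + (if d2 t = 2 then 1 else 0) +
  (if d3 t = 3 then 1 else 0) + (if d4 t = 4 then 1 else 0)

def lowOrd (t : Nat) : Prop := comp (comp t t) t = idT ∨ comp t t = idT

instance : DecidablePred lowOrd := fun t => by unfold lowOrd; infer_instance

def isInv (t : Nat) : Prop := comp t t = idT ∧ t ≠ idT ∧ numFix t = 1

instance : DecidablePred isInv := fun t => by unfold isInv; infer_instance

def invs : List Nat := (List.range 3125).filter (fun t => decide (isInv t))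

def grow (g1 g2 g3 : Nat) (cur : List Nat) : List Nat :=
  (cur.flatMap fun x => [comp x g1, comp x g2, comp x g3]).foldl
    (fun l y => if y ∈ l then l else y :: l) cur

def closAux (g1 g2 g3 : Nat) : Nat → List Nat → List Nat
  | 0, cur => cur
  | n+1, cur =>
    let next := grow g1 g2 g3 cur
    if next.length = cur.length then cur else closAux g1 g2 g3 n next

def clos (g1 g2 g3 : Nat) : List Nat := closAux g1 g2 g3 64 [idT]

def ok (a b c : Nat) : Prop :=
  idT ∈ clos a b c ∧
  (∀ x ∈ clos a b c, comp x a ∈ clos a b c ∧ comp x b ∈ clos a b c ∧ comp x c ∈ clos a b c) ∧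
  (clos a b c).length ≤ 59

instance (a b c : Nat) : Decidable (ok a b c) := by unfold ok; infer_instance

def P : Prop := ∀ a ∈ invs, ∀ b ∈ invs, lowOrd (comp a b) →
  ∀ c ∈ invs, lowOrd (comp a c) → lowOrd (comp b c) → ok a b c

instance : Decidable P := by unfold P; infer_instance

set_option maxRecDepth 1000000 in
theorem Pholds : P := by decide

/-- the encoding of a permutation as a base-5 numeral -/
def tab (x : P5) : Nat :=
  (x 0).val + 5 * (x 1).val + 25 * (x 2).val + 125 * (x 3).val + 625 * (x 4).val

set_option maxRecDepth 1000000 in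
theorem L1 : ∀ x : P5, Perm.sign x = 1 → x * x = 1 → x ≠ 1 → numFix (tab x) = 1 := by decide

set_option maxRecDepth 1000000 in
theorem L2 : ∀ x : P5, Perm.sign x = 1 → ¬(x ^ 5 = 1 ∧ x ≠ 1) → (x ^ 3 = 1 ∨ x ^ 2 = 1) := by
  decide

set_option maxRecDepth 1000000 in
theorem cardA5 : (Finset.univ.filter (fun x : P5 => Perm.sign x = 1)).card = 60 := by decide

theorem tab_lt (x : P5) : tab x < 3125 := by
  have h0 := (x 0).isLt; have h1 := (x 1).isLt; have h2 := (x 2).isLt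
  have h3 := (x 3).isLt; have h4 := (x 4).isLt
  unfold tab; omega

theorem digs_tab (x : P5) :
    d0 (tab x) = (x 0).val ∧ d1 (tab x) = (x 1).val ∧ d2 (tab x) = (x 2).val ∧
    d3 (tab x) = (x 3).val ∧ d4 (tab x) = (x 4).val := by
  have h0 := (x 0).isLt; have h1 := (x 1).isLt; have h2 := (x 2).isLt
  have h3 := (x 3).isLt; have h4 := (x 4).isLt
  unfold tab d0 d1 d2 d3 d4; omega

theorem app_tab (x : P5) (i : Fin 5) : app (tab x) i.val = (x i).val := by
  obtain ⟨h0, h1, h2, h3, h4⟩ := digs_tab x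
  fin_cases i <;> simp [app] <;> assumption

theorem tab_mul (x y : P5) : tab (x * y) = comp (tab x) (tab y) := by
  obtain ⟨h0, h1, h2, h3, h4⟩ := digs_tab y
  unfold comp
  rw [h0, h1, h2, h3, h4, app_tab x (y 0), app_tab x (y 1), app_tab x (y 2),
    app_tab x (y 3), app_tab x (y 4)]
  rfl

theorem tab_one : tab 1 = idT := rfl

theorem tab_inj : Function.Injective tab := by
  intro x y h
  obtain ⟨h0, h1, h2, h3, h4⟩ := digs_tab x
  obtain ⟨k0, k1, k2, k3, k4⟩ := digs_tab y
  rw [h] at h0 h1 h2 h3 h4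
  apply Equiv.ext
  intro i
  fin_cases i <;> [exact Fin.ext (h0.symm.trans k0); exact Fin.ext (h1.symm.trans k1);
    exact Fin.ext (h2.symm.trans k2); exact Fin.ext (h3.symm.trans k3);
    exact Fin.ext (h4.symm.trans k4)]

theorem bridge (a b c : P5) (L : List Nat) (h1 : idT ∈ L)
    (hcl : ∀ x ∈ L, comp x (tab a) ∈ L ∧ comp x (tab b) ∈ L ∧ comp x (tab c) ∈ L) :
    ∀ x : P5, x ∈ Submonoid.closure ({a, b, c} : Set P5) → tab x ∈ L := by
  have key : ∀ l : List P5, (∀ y ∈ l, y ∈ ({a, b, c} : Set P5)) → tab l.prod ∈ L := by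
    intro l
    induction l using List.reverseRecOn with
    | nil => intro _; simpa [tab_one] using h1
    | append_singleton l y ih =>
      intro hl
      have hmem : tab l.prod ∈ L := ih fun z hz => hl z (List.mem_append_left _ hz)
      have hy : y ∈ ({a, b, c} : Set P5) :=
        hl y (List.mem_append_right _ (List.mem_singleton_self y))
      rw [List.prod_append, List.prod_singleton, tab_mul]
      rcases hy with rfl | rfl | rfl
      · exact (hcl _ hmem).1
      · exact (hcl _ hmem).2.1
      · exact (hcl _ hmem).2.2
  intro x hx
  obtain ⟨l, hl, rfl⟩ := Submonoid.exists_list_of_mem_closure hx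
  exact key l hl

theorem a5_involution_triple_has_product_of_order_five
    (g : Fin 3 → alternatingGroup (Fin 5))
    (hg : IrredundantGenSeq g) (horder : ∀ i, orderOf (g i) = 2) :
    ∃ i j : Fin 3, i ≠ j ∧ orderOf (g i * g j) = 5 := by
  haveI : Fact (Nat.Prime 5) := ⟨by norm_num⟩
  by_contra hcon
  push_neg at hcon
  have hmem : ∀ i, (g i : P5) ∈ alternatingGroup (Fin 5) := fun i => (g i).2
  have hsign : ∀ i, Perm.sign (g i : P5) = 1 := fun i =>
    Equiv.Perm.mem_alternatingGroup.mp (hmem i)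
  have hsq : ∀ i, (g i : P5) * (g i : P5) = 1 := by
    intro i
    have h : (g i) * (g i) = 1 := by
      have := pow_orderOf_eq_one (g i)
      rwa [horder i, pow_two] at this
    exact_mod_cast congrArg Subtype.val h
  have hne1 : ∀ i, (g i : P5) ≠ 1 := by
    intro i h
    have h2 := horder i
    rw [show g i = 1 from Subtype.ext (by simpa using h)] at h2
    simp at h2
  have hlow : ∀ i j, i ≠ j → lowOrd (comp (tab (g i : P5)) (tab (g j : P5))) := by
    intro i j hij
    set x : P5 := (g i : P5) * (g j : P5) with hxdef
    have hsgn : Perm.sign x = 1 := by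
      rw [hxdef, map_mul, hsign i, hsign j, one_mul]
    have hno5 : ¬(x ^ 5 = 1 ∧ x ≠ 1) := by
      rintro ⟨h5, hne⟩
      have h5' : (g i * g j) ^ 5 = 1 := by
        apply Subtype.ext
        push_cast
        exact h5
      have hne' : g i * g j ≠ 1 := by
        intro h
        apply hne
        have := congrArg Subtype.val h
        simpa [hxdef] using this
      exact hcon i j hij (orderOf_eq_prime h5' hne')
    have htm : comp (tab (g i : P5)) (tab (g j : P5)) = tab x := (tab_mul _ _).symm
    rw [htm]
    rcases L2 x hsgn hno5 with h3 | h2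
    · left
      rw [← tab_mul, ← tab_mul, ← tab_one]
      apply congrArg tab
      have h' : x * x * x = x ^ 3 := by rw [pow_succ, pow_two]
      rw [h', h3]
    · right
      rw [← tab_mul, ← tab_one]
      apply congrArg tab
      have h' : x * x = x ^ 2 := by rw [pow_two]
      rw [h', h2]
  have hinv : ∀ i, tab (g i : P5) ∈ invs := by
    intro i
    rw [invs, List.mem_filter]
    refine ⟨List.mem_range.mpr (tab_lt _), ?_⟩
    rw [decide_eq_true_iff]
    refine ⟨?_, ?_, L1 _ (hsign i) (hsq i) (hne1 i)⟩
    · rw [← tab_mul, hsq i, tab_one]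
    · intro h
      exact hne1 i (tab_inj (h.trans tab_one.symm))
  obtain ⟨hid, hcl, hlen⟩ :=
    Pholds _ (hinv 0) _ (hinv 1) (hlow 0 1 (by decide)) _ (hinv 2)
      (hlow 0 2 (by decide)) (hlow 1 2 (by decide))
  have hclosure :
      Subgroup.closure ({(g 0 : P5), (g 1 : P5), (g 2 : P5)} : Set P5)
        = alternatingGroup (Fin 5) := by
    have hmap := congrArg (Subgroup.map (alternatingGroup (Fin 5)).subtype) hg.1
    rw [MonoidHom.map_closure, ← MonoidHom.range_eq_map, Subgroup.range_subtype] at hmap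
    have hset : (⇑(alternatingGroup (Fin 5)).subtype '' Set.range g)
        = ({(g 0 : P5), (g 1 : P5), (g 2 : P5)} : Set P5) := by
      ext x
      constructor
      · rintro ⟨y, ⟨i, rfl⟩, rfl⟩
        fin_cases i
        · exact Or.inl rfl
        · exact Or.inr (Or.inl rfl)
        · exact Or.inr (Or.inr rfl)
      · rintro (rfl | rfl | rfl)
        exacts [⟨g 0, ⟨0, rfl⟩, rfl⟩, ⟨g 1, ⟨1, rfl⟩, rfl⟩, ⟨g 2, ⟨2, rfl⟩, rfl⟩]
    rw [hset] at hmap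
    exact hmap
  have hinv_eq : ∀ i : Fin 3, ((g i : P5))⁻¹ = (g i : P5) := fun i =>
    inv_eq_of_mul_eq_one_right (hsq i)
  have hsymm :
      ({(g 0 : P5), (g 1 : P5), (g 2 : P5)} : Set P5) ∪
        ({(g 0 : P5), (g 1 : P5), (g 2 : P5)} : Set P5)⁻¹
        = ({(g 0 : P5), (g 1 : P5), (g 2 : P5)} : Set P5) := by
    rw [show ({(g 0 : P5), (g 1 : P5), (g 2 : P5)} : Set P5)⁻¹
        = ({(g 0 : P5), (g 1 : P5), (g 2 : P5)} : Set P5) by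
      rw [Set.inv_insert, Set.inv_insert, Set.inv_singleton,
        hinv_eq 0, hinv_eq 1, hinv_eq 2]]
    exact Set.union_self _
  have hmonoid :
      (Subgroup.closure ({(g 0 : P5), (g 1 : P5), (g 2 : P5)} : Set P5)).toSubmonoid
        = Submonoid.closure ({(g 0 : P5), (g 1 : P5), (g 2 : P5)} : Set P5) := by
    rw [Subgroup.closure_toSubmonoid, hsymm]
  have hsub : ∀ x : P5, Perm.sign x = 1 →
      tab x ∈ clos (tab (g 0 : P5)) (tab (g 1 : P5)) (tab (g 2 : P5)) := by
    intro x hx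
    have hx1 : x ∈ Subgroup.closure ({(g 0 : P5), (g 1 : P5), (g 2 : P5)} : Set P5) := by
      rw [hclosure]
      exact Equiv.Perm.mem_alternatingGroup.mpr hx
    have hx2 : x ∈ Submonoid.closure ({(g 0 : P5), (g 1 : P5), (g 2 : P5)} : Set P5) := by
      rw [← hmonoid]
      exact hx1
    exact bridge _ _ _ _ hid hcl x hx2
  have himg : (Finset.univ.filter (fun x : P5 => Perm.sign x = 1)).image tab ⊆
      (clos (tab (g 0 : P5)) (tab (g 1 : P5)) (tab (g 2 : P5))).toFinset := by
    intro t ht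
    obtain ⟨x, hx, rfl⟩ := Finset.mem_image.mp ht
    exact List.mem_toFinset.mpr (hsub x (Finset.mem_filter.mp hx).2)
  have hcard : ((Finset.univ.filter (fun x : P5 => Perm.sign x = 1)).image tab).card = 60 := by
    rw [Finset.card_image_of_injective _ tab_inj, cardA5]
  have hfin : (60 : ℕ) ≤ (clos (tab (g 0 : P5)) (tab (g 1 : P5)) (tab (g 2 : P5))).length := by
    calc (60 : ℕ) = _ := hcard.symm
    _ ≤ _ := Finset.card_le_card himg
    _ ≤ _ := List.toFinset_card_le _
  omega
end

section
/- In every irredundant generating sequence of length 3 of S_4 consisting of elements of order 2, there exist two elements of the sequence whose product has order 3 or order 4. -/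
set_option maxRecDepth 4000 in
lemma s4_pow : ∀ x : Equiv.Perm (Fin 4), x ^ 3 = 1 ∨ x ^ 4 = 1 := by decide

theorem s4_involution_triple_has_product_of_order_three_or_four
    (g : Fin 3 → Equiv.Perm (Fin 4))
    (hg : IrredundantGenSeq g) (horder : ∀ i, orderOf (g i) = 2) :
    ∃ i j : Fin 3, i ≠ j ∧ (orderOf (g i * g j) = 3 ∨ orderOf (g i * g j) = 4) := by
  by_contra hcon
  push_neg at hcon
  have hsq : ∀ i, g i * g i = 1 := by
    intro i
    have := pow_orderOf_eq_one (g i)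
    rw [horder i, pow_two] at this
    exact this
  have hcomm : ∀ i j, Commute (g i) (g j) := by
    intro i j
    rcases eq_or_ne i j with rfl | hij
    · exact Commute.refl _
    · obtain ⟨h3, h4⟩ := hcon i j hij
      set h := g i * g j with hh
      have h2 : h * h = 1 := by
        rcases s4_pow h with hp | hp
        · have hd := orderOf_dvd_of_pow_eq_one hp
          rcases (Nat.dvd_prime Nat.prime_three).mp hd with h1 | h1
          · have : h = 1 := orderOf_eq_one_iff.mp h1
            rw [this, mul_one]
          · exact absurd h1 h3
        · have hd := orderOf_dvd_of_pow_eq_one hp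
          have h2d : orderOf h ∣ 2 := by
            have hle : orderOf h ≤ 4 := Nat.le_of_dvd (by norm_num) hd
            interval_cases hn : orderOf h <;> simp_all
          have h2 := orderOf_dvd_iff_pow_eq_one.mp h2d
          rwa [pow_two] at h2
      -- from (g i * g j)^2 = 1 and involutions, commute
      have hinvi : (g i)⁻¹ = g i := inv_eq_of_mul_eq_one_left (hsq i)
      have hinvj : (g j)⁻¹ = g j := inv_eq_of_mul_eq_one_left (hsq j)
      have : g i * g j = (g i * g j)⁻¹ := (inv_eq_of_mul_eq_one_left h2).symm
      rw [mul_inv_rev, hinvi, hinvj] at this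
      exact this
  have hall : ∀ x y : Equiv.Perm (Fin 4), Commute x y := by
    intro x y
    have hx : x ∈ Subgroup.closure (Set.range g) := by rw [hg.1]; trivial
    have hy : y ∈ Subgroup.closure (Set.range g) := by rw [hg.1]; trivial
    induction hx, hy using Subgroup.closure_induction₂ with
    | mem a b ha hb =>
      obtain ⟨i, rfl⟩ := ha
      obtain ⟨j, rfl⟩ := hb
      exact hcomm i j
    | one_left b hb => exact Commute.one_left b
    | one_right a ha => exact Commute.one_right a
    | mul_left a b c _ _ _ h1 h2 => exact h1.mul_left h2
    | mul_right a b c _ _ _ h1 h2 => exact h1.mul_right h2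
    | inv_left a b _ _ h1 => exact h1.inv_left
    | inv_right a b _ _ h1 => exact h1.inv_right
  have : Equiv.swap (0 : Fin 4) 1 * Equiv.swap (1 : Fin 4) 2
      = Equiv.swap (1 : Fin 4) 2 * Equiv.swap (0 : Fin 4) 1 := hall _ _
  exact absurd this (by decide)
end
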